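/- arXiv:2309.09503 — 7 statements merged into one kernel-verified Lean document; each statement's English description precedes it below -/
import Mathlib

section
/- In any algebra of the variety V (i.e., any K-algebra satisfying (a,b,c)+(a,c,b)=0, (a,b,c)+(b,a,c)=0, and (ab)c+(cb)a=(ac)b+(ca)b), the identity (ab)(cd) = -((ca)d)b + (a(cd))b + ((cd)a)b holds for all a,b,c,d. -/
set_option maxHeartbeats 1000000

/-- Context: A is a (not necessarily associative, not necessarily unital) algebra over a
field K of characteristic 0, satisfying the defining identities of the variety V. -/

theorem v1_identity {K A : Type*} [Field K] [CharZero K]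
    [NonUnitalNonAssocRing A] [Module K A] [SMulCommClass K A A] [IsScalarTower K A A]
    (h1 : ∀ a b c : A, ((a*b)*c - a*(b*c)) + ((a*c)*b - a*(c*b)) = 0)
    (h2 : ∀ a b c : A, ((a*b)*c - a*(b*c)) + ((b*a)*c - b*(a*c)) = 0)
    (h3 : ∀ a b c : A, (a*b)*c + (c*b)*a = (a*c)*b + (c*a)*b) :
    ∀ a b c d : A, (a*b)*(c*d) = -(((c*a)*d)*b) + (a*(c*d))*b + ((c*d)*a)*b := by
  intro a b c d
  have H0 : ((((a*b)*c)*d) - ((a*b)*(c*d))) + ((((a*b)*d)*c) - ((a*b)*(d*c))) = 0 := h1 (a*b) c d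
  have H1 : (((c*(a*b))*d) - (c*((a*b)*d))) + (((c*d)*(a*b)) - (c*(d*(a*b)))) = 0 := h1 c (a*b) d
  have H2 : ((((a*c)*b)*d) - ((a*c)*(b*d))) + ((((a*c)*d)*b) - ((a*c)*(d*b))) = 0 := h1 (a*c) b d
  have H3 : (((b*(a*c))*d) - (b*((a*c)*d))) + (((b*d)*(a*c)) - (b*(d*(a*c)))) = 0 := h1 b (a*c) d
  have H4 : ((((a*d)*b)*c) - ((a*d)*(b*c))) + ((((a*d)*c)*b) - ((a*d)*(c*b))) = 0 := h1 (a*d) b c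
  have H5 : (((b*(a*d))*c) - (b*((a*d)*c))) + (((b*c)*(a*d)) - (b*(c*(a*d)))) = 0 := h1 b (a*d) c
  have H6 : (((c*(a*d))*b) - (c*((a*d)*b))) + (((c*b)*(a*d)) - (c*(b*(a*d)))) = 0 := h1 c (a*d) b
  have H7 : ((((b*a)*c)*d) - ((b*a)*(c*d))) + ((((b*a)*d)*c) - ((b*a)*(d*c))) = 0 := h1 (b*a) c d
  have H8 : (((c*(b*a))*d) - (c*((b*a)*d))) + (((c*d)*(b*a)) - (c*(d*(b*a)))) = 0 := h1 c (b*a) d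
  have H9 : (((d*(b*a))*c) - (d*((b*a)*c))) + (((d*c)*(b*a)) - (d*(c*(b*a)))) = 0 := h1 d (b*a) c
  have H10 : ((((b*c)*a)*d) - ((b*c)*(a*d))) + ((((b*c)*d)*a) - ((b*c)*(d*a))) = 0 := h1 (b*c) a d
  have H11 : (((a*(b*c))*d) - (a*((b*c)*d))) + (((a*d)*(b*c)) - (a*(d*(b*c)))) = 0 := h1 a (b*c) d
  have H12 : (((d*(b*c))*a) - (d*((b*c)*a))) + (((d*a)*(b*c)) - (d*(a*(b*c)))) = 0 := h1 d (b*c) a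
  have H13 : ((((b*d)*a)*c) - ((b*d)*(a*c))) + ((((b*d)*c)*a) - ((b*d)*(c*a))) = 0 := h1 (b*d) a c
  have H14 : (((a*(b*d))*c) - (a*((b*d)*c))) + (((a*c)*(b*d)) - (a*(c*(b*d)))) = 0 := h1 a (b*d) c
  have H15 : (((c*(b*d))*a) - (c*((b*d)*a))) + (((c*a)*(b*d)) - (c*(a*(b*d)))) = 0 := h1 c (b*d) a
  have H16 : ((((c*a)*b)*d) - ((c*a)*(b*d))) + ((((c*a)*d)*b) - ((c*a)*(d*b))) = 0 := h1 (c*a) b d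
  have H17 : (((b*(c*a))*d) - (b*((c*a)*d))) + (((b*d)*(c*a)) - (b*(d*(c*a)))) = 0 := h1 b (c*a) d
  have H18 : (((d*(c*a))*b) - (d*((c*a)*b))) + (((d*b)*(c*a)) - (d*(b*(c*a)))) = 0 := h1 d (c*a) b
  have H19 : ((((c*b)*a)*d) - ((c*b)*(a*d))) + ((((c*b)*d)*a) - ((c*b)*(d*a))) = 0 := h1 (c*b) a d
  have H20 : (((a*(c*b))*d) - (a*((c*b)*d))) + (((a*d)*(c*b)) - (a*(d*(c*b)))) = 0 := h1 a (c*b) d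
  have H21 : (((d*(c*b))*a) - (d*((c*b)*a))) + (((d*a)*(c*b)) - (d*(a*(c*b)))) = 0 := h1 d (c*b) a
  have H22 : ((((c*d)*a)*b) - ((c*d)*(a*b))) + ((((c*d)*b)*a) - ((c*d)*(b*a))) = 0 := h1 (c*d) a b
  have H23 : (((a*(c*d))*b) - (a*((c*d)*b))) + (((a*b)*(c*d)) - (a*(b*(c*d)))) = 0 := h1 a (c*d) b
  have H24 : (((b*(c*d))*a) - (b*((c*d)*a))) + (((b*a)*(c*d)) - (b*(a*(c*d)))) = 0 := h1 b (c*d) a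
  have H25 : ((((d*a)*b)*c) - ((d*a)*(b*c))) + ((((d*a)*c)*b) - ((d*a)*(c*b))) = 0 := h1 (d*a) b c
  have H26 : (((b*(d*a))*c) - (b*((d*a)*c))) + (((b*c)*(d*a)) - (b*(c*(d*a)))) = 0 := h1 b (d*a) c
  have H27 : (((c*(d*a))*b) - (c*((d*a)*b))) + (((c*b)*(d*a)) - (c*(b*(d*a)))) = 0 := h1 c (d*a) b
  have H28 : ((((d*b)*a)*c) - ((d*b)*(a*c))) + ((((d*b)*c)*a) - ((d*b)*(c*a))) = 0 := h1 (d*b) a c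
  have H29 : (((a*(d*b))*c) - (a*((d*b)*c))) + (((a*c)*(d*b)) - (a*(c*(d*b)))) = 0 := h1 a (d*b) c
  have H30 : (((c*(d*b))*a) - (c*((d*b)*a))) + (((c*a)*(d*b)) - (c*(a*(d*b)))) = 0 := h1 c (d*b) a
  have H31 : ((((d*c)*a)*b) - ((d*c)*(a*b))) + ((((d*c)*b)*a) - ((d*c)*(b*a))) = 0 := h1 (d*c) a b
  have H32 : (((a*(d*c))*b) - (a*((d*c)*b))) + (((a*b)*(d*c)) - (a*(b*(d*c)))) = 0 := h1 a (d*c) b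
  have H33 : (((b*(d*c))*a) - (b*((d*c)*a))) + (((b*a)*(d*c)) - (b*(a*(d*c)))) = 0 := h1 b (d*c) a
  have H34 : (a*((b*c)*d) - a*(b*(c*d))) + (a*((b*d)*c) - a*(b*(d*c))) = 0 := by rw [← mul_sub, ← mul_sub, ← mul_add, h1 b c d, mul_zero]
  have H35 : (((b*c)*d)*a - (b*(c*d))*a) + (((b*d)*c)*a - (b*(d*c))*a) = 0 := by rw [← sub_mul, ← sub_mul, ← add_mul, h1 b c d, zero_mul]
  have H36 : (a*((c*b)*d) - a*(c*(b*d))) + (a*((c*d)*b) - a*(c*(d*b))) = 0 := by rw [← mul_sub, ← mul_sub, ← mul_add, h1 c b d, mul_zero]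
  have H37 : (((c*b)*d)*a - (c*(b*d))*a) + (((c*d)*b)*a - (c*(d*b))*a) = 0 := by rw [← sub_mul, ← sub_mul, ← add_mul, h1 c b d, zero_mul]
  have H38 : (a*((d*b)*c) - a*(d*(b*c))) + (a*((d*c)*b) - a*(d*(c*b))) = 0 := by rw [← mul_sub, ← mul_sub, ← mul_add, h1 d b c, mul_zero]
  have H39 : (((d*b)*c)*a - (d*(b*c))*a) + (((d*c)*b)*a - (d*(c*b))*a) = 0 := by rw [← sub_mul, ← sub_mul, ← add_mul, h1 d b c, zero_mul]
  have H40 : (b*((a*c)*d) - b*(a*(c*d))) + (b*((a*d)*c) - b*(a*(d*c))) = 0 := by rw [← mul_sub, ← mul_sub, ← mul_add, h1 a c d, mul_zero]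
  have H41 : (b*((c*a)*d) - b*(c*(a*d))) + (b*((c*d)*a) - b*(c*(d*a))) = 0 := by rw [← mul_sub, ← mul_sub, ← mul_add, h1 c a d, mul_zero]
  have H42 : (((c*a)*d)*b - (c*(a*d))*b) + (((c*d)*a)*b - (c*(d*a))*b) = 0 := by rw [← sub_mul, ← sub_mul, ← add_mul, h1 c a d, zero_mul]
  have H43 : (b*((d*a)*c) - b*(d*(a*c))) + (b*((d*c)*a) - b*(d*(c*a))) = 0 := by rw [← mul_sub, ← mul_sub, ← mul_add, h1 d a c, mul_zero]
  have H44 : (((d*a)*c)*b - (d*(a*c))*b) + (((d*c)*a)*b - (d*(c*a))*b) = 0 := by rw [← sub_mul, ← sub_mul, ← add_mul, h1 d a c, zero_mul]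
  have H45 : (c*((a*b)*d) - c*(a*(b*d))) + (c*((a*d)*b) - c*(a*(d*b))) = 0 := by rw [← mul_sub, ← mul_sub, ← mul_add, h1 a b d, mul_zero]
  have H46 : (c*((b*a)*d) - c*(b*(a*d))) + (c*((b*d)*a) - c*(b*(d*a))) = 0 := by rw [← mul_sub, ← mul_sub, ← mul_add, h1 b a d, mul_zero]
  have H47 : (((b*a)*d)*c - (b*(a*d))*c) + (((b*d)*a)*c - (b*(d*a))*c) = 0 := by rw [← sub_mul, ← sub_mul, ← add_mul, h1 b a d, zero_mul]
  have H48 : (c*((d*a)*b) - c*(d*(a*b))) + (c*((d*b)*a) - c*(d*(b*a))) = 0 := by rw [← mul_sub, ← mul_sub, ← mul_add, h1 d a b, mul_zero]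
  have H49 : (((a*b)*c)*d - (a*(b*c))*d) + (((a*c)*b)*d - (a*(c*b))*d) = 0 := by rw [← sub_mul, ← sub_mul, ← add_mul, h1 a b c, zero_mul]
  have H50 : (d*((b*a)*c) - d*(b*(a*c))) + (d*((b*c)*a) - d*(b*(c*a))) = 0 := by rw [← mul_sub, ← mul_sub, ← mul_add, h1 b a c, mul_zero]
  have H51 : (((b*a)*c)*d - (b*(a*c))*d) + (((b*c)*a)*d - (b*(c*a))*d) = 0 := by rw [← sub_mul, ← sub_mul, ← add_mul, h1 b a c, zero_mul]
  have H52 : (d*((c*a)*b) - d*(c*(a*b))) + (d*((c*b)*a) - d*(c*(b*a))) = 0 := by rw [← mul_sub, ← mul_sub, ← mul_add, h1 c a b, mul_zero]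
  have H53 : (((c*a)*b)*d - (c*(a*b))*d) + (((c*b)*a)*d - (c*(b*a))*d) = 0 := by rw [← sub_mul, ← sub_mul, ← add_mul, h1 c a b, zero_mul]
  have H54 : ((((a*b)*c)*d) - ((a*b)*(c*d))) + (((c*(a*b))*d) - (c*((a*b)*d))) = 0 := h2 (a*b) c d
  have H55 : (((c*d)*(a*b)) - (c*(d*(a*b)))) + (((d*c)*(a*b)) - (d*(c*(a*b)))) = 0 := h2 c d (a*b)
  have H56 : ((((a*c)*b)*d) - ((a*c)*(b*d))) + (((b*(a*c))*d) - (b*((a*c)*d))) = 0 := h2 (a*c) b d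
  have H57 : (((b*d)*(a*c)) - (b*(d*(a*c)))) + (((d*b)*(a*c)) - (d*(b*(a*c)))) = 0 := h2 b d (a*c)
  have H58 : ((((a*d)*b)*c) - ((a*d)*(b*c))) + (((b*(a*d))*c) - (b*((a*d)*c))) = 0 := h2 (a*d) b c
  have H59 : (((b*c)*(a*d)) - (b*(c*(a*d)))) + (((c*b)*(a*d)) - (c*(b*(a*d)))) = 0 := h2 b c (a*d)
  have H60 : ((((b*a)*c)*d) - ((b*a)*(c*d))) + (((c*(b*a))*d) - (c*((b*a)*d))) = 0 := h2 (b*a) c d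
  have H61 : (((c*d)*(b*a)) - (c*(d*(b*a)))) + (((d*c)*(b*a)) - (d*(c*(b*a)))) = 0 := h2 c d (b*a)
  have H62 : ((((b*c)*a)*d) - ((b*c)*(a*d))) + (((a*(b*c))*d) - (a*((b*c)*d))) = 0 := h2 (b*c) a d
  have H63 : (((a*d)*(b*c)) - (a*(d*(b*c)))) + (((d*a)*(b*c)) - (d*(a*(b*c)))) = 0 := h2 a d (b*c)
  have H64 : ((((b*d)*a)*c) - ((b*d)*(a*c))) + (((a*(b*d))*c) - (a*((b*d)*c))) = 0 := h2 (b*d) a c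
  have H65 : (((a*c)*(b*d)) - (a*(c*(b*d)))) + (((c*a)*(b*d)) - (c*(a*(b*d)))) = 0 := h2 a c (b*d)
  have H66 : ((((c*a)*b)*d) - ((c*a)*(b*d))) + (((b*(c*a))*d) - (b*((c*a)*d))) = 0 := h2 (c*a) b d
  have H67 : (((b*d)*(c*a)) - (b*(d*(c*a)))) + (((d*b)*(c*a)) - (d*(b*(c*a)))) = 0 := h2 b d (c*a)
  have H68 : (((a*d)*(c*b)) - (a*(d*(c*b)))) + (((d*a)*(c*b)) - (d*(a*(c*b)))) = 0 := h2 a d (c*b)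
  have H69 : ((((c*d)*a)*b) - ((c*d)*(a*b))) + (((a*(c*d))*b) - (a*((c*d)*b))) = 0 := h2 (c*d) a b
  have H70 : (((a*b)*(c*d)) - (a*(b*(c*d)))) + (((b*a)*(c*d)) - (b*(a*(c*d)))) = 0 := h2 a b (c*d)
  have H71 : ((((d*a)*b)*c) - ((d*a)*(b*c))) + (((b*(d*a))*c) - (b*((d*a)*c))) = 0 := h2 (d*a) b c
  have H72 : (((b*c)*(d*a)) - (b*(c*(d*a)))) + (((c*b)*(d*a)) - (c*(b*(d*a)))) = 0 := h2 b c (d*a)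
  have H73 : ((((d*b)*a)*c) - ((d*b)*(a*c))) + (((a*(d*b))*c) - (a*((d*b)*c))) = 0 := h2 (d*b) a c
  have H74 : (((a*c)*(d*b)) - (a*(c*(d*b)))) + (((c*a)*(d*b)) - (c*(a*(d*b)))) = 0 := h2 a c (d*b)
  have H75 : ((((d*c)*a)*b) - ((d*c)*(a*b))) + (((a*(d*c))*b) - (a*((d*c)*b))) = 0 := h2 (d*c) a b
  have H76 : (a*((b*c)*d) - a*(b*(c*d))) + (a*((c*b)*d) - a*(c*(b*d))) = 0 := by rw [← mul_sub, ← mul_sub, ← mul_add, h2 b c d, mul_zero]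
  have H77 : (((b*c)*d)*a - (b*(c*d))*a) + (((c*b)*d)*a - (c*(b*d))*a) = 0 := by rw [← sub_mul, ← sub_mul, ← add_mul, h2 b c d, zero_mul]
  have H78 : (a*((b*d)*c) - a*(b*(d*c))) + (a*((d*b)*c) - a*(d*(b*c))) = 0 := by rw [← mul_sub, ← mul_sub, ← mul_add, h2 b d c, mul_zero]
  have H79 : (((b*d)*c)*a - (b*(d*c))*a) + (((d*b)*c)*a - (d*(b*c))*a) = 0 := by rw [← sub_mul, ← sub_mul, ← add_mul, h2 b d c, zero_mul]
  have H80 : (((a*c)*d)*b - (a*(c*d))*b) + (((c*a)*d)*b - (c*(a*d))*b) = 0 := by rw [← sub_mul, ← sub_mul, ← add_mul, h2 a c d, zero_mul]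
  have H81 : ((((a*b)*c)*d) + ((d*c)*(a*b))) - ((((a*b)*d)*c) + ((d*(a*b))*c)) = 0 := sub_eq_zero_of_eq (h3 (a*b) c d)
  have H82 : (((c*(a*b))*d) + ((d*(a*b))*c)) - (((c*d)*(a*b)) + ((d*c)*(a*b))) = 0 := sub_eq_zero_of_eq (h3 c (a*b) d)
  have H83 : ((((a*c)*b)*d) + ((d*b)*(a*c))) - ((((a*c)*d)*b) + ((d*(a*c))*b)) = 0 := sub_eq_zero_of_eq (h3 (a*c) b d)
  have H84 : (((b*(a*c))*d) + ((d*(a*c))*b)) - (((b*d)*(a*c)) + ((d*b)*(a*c))) = 0 := sub_eq_zero_of_eq (h3 b (a*c) d)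
  have H85 : ((((a*d)*b)*c) + ((c*b)*(a*d))) - ((((a*d)*c)*b) + ((c*(a*d))*b)) = 0 := sub_eq_zero_of_eq (h3 (a*d) b c)
  have H86 : (((b*(a*d))*c) + ((c*(a*d))*b)) - (((b*c)*(a*d)) + ((c*b)*(a*d))) = 0 := sub_eq_zero_of_eq (h3 b (a*d) c)
  have H87 : ((((b*a)*c)*d) + ((d*c)*(b*a))) - ((((b*a)*d)*c) + ((d*(b*a))*c)) = 0 := sub_eq_zero_of_eq (h3 (b*a) c d)
  have H88 : (((c*(b*a))*d) + ((d*(b*a))*c)) - (((c*d)*(b*a)) + ((d*c)*(b*a))) = 0 := sub_eq_zero_of_eq (h3 c (b*a) d)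
  have H89 : ((((b*c)*a)*d) + ((d*a)*(b*c))) - ((((b*c)*d)*a) + ((d*(b*c))*a)) = 0 := sub_eq_zero_of_eq (h3 (b*c) a d)
  have H90 : (((a*(b*c))*d) + ((d*(b*c))*a)) - (((a*d)*(b*c)) + ((d*a)*(b*c))) = 0 := sub_eq_zero_of_eq (h3 a (b*c) d)
  have H91 : ((((b*d)*a)*c) + ((c*a)*(b*d))) - ((((b*d)*c)*a) + ((c*(b*d))*a)) = 0 := sub_eq_zero_of_eq (h3 (b*d) a c)
  have H92 : (((a*(b*d))*c) + ((c*(b*d))*a)) - (((a*c)*(b*d)) + ((c*a)*(b*d))) = 0 := sub_eq_zero_of_eq (h3 a (b*d) c)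
  have H93 : ((((c*a)*b)*d) + ((d*b)*(c*a))) - ((((c*a)*d)*b) + ((d*(c*a))*b)) = 0 := sub_eq_zero_of_eq (h3 (c*a) b d)
  have H94 : (((b*(c*a))*d) + ((d*(c*a))*b)) - (((b*d)*(c*a)) + ((d*b)*(c*a))) = 0 := sub_eq_zero_of_eq (h3 b (c*a) d)
  have H95 : ((((c*b)*a)*d) + ((d*a)*(c*b))) - ((((c*b)*d)*a) + ((d*(c*b))*a)) = 0 := sub_eq_zero_of_eq (h3 (c*b) a d)
  have H96 : ((((c*d)*a)*b) + ((b*a)*(c*d))) - ((((c*d)*b)*a) + ((b*(c*d))*a)) = 0 := sub_eq_zero_of_eq (h3 (c*d) a b)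
  have H97 : ((((d*a)*b)*c) + ((c*b)*(d*a))) - ((((d*a)*c)*b) + ((c*(d*a))*b)) = 0 := sub_eq_zero_of_eq (h3 (d*a) b c)
  have H98 : (a*((b*c)*d) + a*((d*c)*b)) - (a*((b*d)*c) + a*((d*b)*c)) = 0 := by rw [← mul_add, ← mul_add, ← mul_sub, sub_eq_zero_of_eq (h3 b c d), mul_zero]
  have H99 : (((b*c)*d)*a + ((d*c)*b)*a) - (((b*d)*c)*a + ((d*b)*c)*a) = 0 := by rw [← add_mul, ← add_mul, ← sub_mul, sub_eq_zero_of_eq (h3 b c d), zero_mul]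
  have H100 : (a*((b*d)*c) + a*((c*d)*b)) - (a*((b*c)*d) + a*((c*b)*d)) = 0 := by rw [← mul_add, ← mul_add, ← mul_sub, sub_eq_zero_of_eq (h3 b d c), mul_zero]
  have H101 : (((a*c)*d)*b + ((d*c)*a)*b) - (((a*d)*c)*b + ((d*a)*c)*b) = 0 := by rw [← add_mul, ← add_mul, ← sub_mul, sub_eq_zero_of_eq (h3 a c d), zero_mul]
  have H102 : (b*((a*d)*c) + b*((c*d)*a)) - (b*((a*c)*d) + b*((c*a)*d)) = 0 := by rw [← mul_add, ← mul_add, ← mul_sub, sub_eq_zero_of_eq (h3 a d c), mul_zero]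
  have H103 : (c*((a*b)*d) + c*((d*b)*a)) - (c*((a*d)*b) + c*((d*a)*b)) = 0 := by rw [← mul_add, ← mul_add, ← mul_sub, sub_eq_zero_of_eq (h3 a b d), mul_zero]
  have key : (6 : ℤ) • ((a*b)*(c*d) - (-(((c*a)*d)*b) + (a*(c*d))*b + ((c*d)*a)*b)) = (4 : ℤ) • (((((a*b)*c)*d) - ((a*b)*(c*d))) + ((((a*b)*d)*c) - ((a*b)*(d*c)))) + (-1 : ℤ) • ((((c*(a*b))*d) - (c*((a*b)*d))) + (((c*d)*(a*b)) - (c*(d*(a*b))))) + (4 : ℤ) • (((((a*c)*b)*d) - ((a*c)*(b*d))) + ((((a*c)*d)*b) - ((a*c)*(d*b)))) + (-1 : ℤ) • ((((b*(a*c))*d) - (b*((a*c)*d))) + (((b*d)*(a*c)) - (b*(d*(a*c))))) + (2 : ℤ) • (((((a*d)*b)*c) - ((a*d)*(b*c))) + ((((a*d)*c)*b) - ((a*d)*(c*b)))) + (3 : ℤ) • ((((b*(a*d))*c) - (b*((a*d)*c))) + (((b*c)*(a*d)) - (b*(c*(a*d))))) + (3 : ℤ) • ((((c*(a*d))*b)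 - (c*((a*d)*b))) + (((c*b)*(a*d)) - (c*(b*(a*d))))) + (5 : ℤ) • (((((b*a)*c)*d) - ((b*a)*(c*d))) + ((((b*a)*d)*c) - ((b*a)*(d*c)))) + (3 : ℤ) • ((((c*(b*a))*d) - (c*((b*a)*d))) + (((c*d)*(b*a)) - (c*(d*(b*a))))) + (4 : ℤ) • ((((d*(b*a))*c) - (d*((b*a)*c))) + (((d*c)*(b*a)) - (d*(c*(b*a))))) + (7 : ℤ) • (((((b*c)*a)*d) - ((b*c)*(a*d))) + ((((b*c)*d)*a) - ((b*c)*(d*a)))) + (2 : ℤ) • ((((a*(b*c))*d) - (a*((b*c)*d))) + (((a*d)*(b*c)) - (a*(d*(b*c))))) + (4 : ℤ) • ((((d*(b*c))*a) - (d*((b*c)*a))) + (((d*a)*(b*c)) - (d*(a*(b*c))))) + (-9 : ℤ) • (((((b*d)*a)*c) - ((b*d)*(a*c))) + ((((b*d)*c)*a) - ((b*d)*(c*a)))) + (-6 : ℤ) • ((((a*(b*d))*c) - (a*((b*d)*c))) + (((a*c)*(b*d)) - (a*(c*(b*d))))) + (-7 : ℤ) • ((((c*(b*d))*a) - (c*((b*d)*a)))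 + (((c*a)*(b*d)) - (c*(a*(b*d))))) + (1 : ℤ) • (((((c*a)*b)*d) - ((c*a)*(b*d))) + ((((c*a)*d)*b) - ((c*a)*(d*b)))) + (-7 : ℤ) • ((((b*(c*a))*d) - (b*((c*a)*d))) + (((b*d)*(c*a)) - (b*(d*(c*a))))) + (-6 : ℤ) • ((((d*(c*a))*b) - (d*((c*a)*b))) + (((d*b)*(c*a)) - (d*(b*(c*a))))) + (3 : ℤ) • (((((c*b)*a)*d) - ((c*b)*(a*d))) + ((((c*b)*d)*a) - ((c*b)*(d*a)))) + (-4 : ℤ) • ((((a*(c*b))*d) - (a*((c*b)*d))) + (((a*d)*(c*b)) - (a*(d*(c*b))))) + (-6 : ℤ) • ((((d*(c*b))*a) - (d*((c*b)*a))) + (((d*a)*(c*b)) - (d*(a*(c*b))))) + (-1 : ℤ) • (((((c*d)*a)*b) - ((c*d)*(a*b))) + ((((c*d)*b)*a) - ((c*d)*(b*a)))) + (-4 : ℤ) • ((((a*(c*d))*b) - (a*((c*d)*b))) + (((a*b)*(c*d)) - (a*(b*(c*d))))) + (-5 : ℤ) • ((((b*(c*d))*a) - (b*((c*d)*a))) +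 (((b*a)*(c*d)) - (b*(a*(c*d))))) + (-2 : ℤ) • (((((d*a)*b)*c) - ((d*a)*(b*c))) + ((((d*a)*c)*b) - ((d*a)*(c*b)))) + (-1 : ℤ) • ((((b*(d*a))*c) - (b*((d*a)*c))) + (((b*c)*(d*a)) - (b*(c*(d*a))))) + (-1 : ℤ) • ((((c*(d*a))*b) - (c*((d*a)*b))) + (((c*b)*(d*a)) - (c*(b*(d*a))))) + (-6 : ℤ) • (((((d*b)*a)*c) - ((d*b)*(a*c))) + ((((d*b)*c)*a) - ((d*b)*(c*a)))) + (-6 : ℤ) • ((((a*(d*b))*c) - (a*((d*b)*c))) + (((a*c)*(d*b)) - (a*(c*(d*b))))) + (-9 : ℤ) • ((((c*(d*b))*a) - (c*((d*b)*a))) + (((c*a)*(d*b)) - (c*(a*(d*b))))) + (10 : ℤ) • (((((d*c)*a)*b) - ((d*c)*(a*b))) + ((((d*c)*b)*a) - ((d*c)*(b*a)))) + (4 : ℤ) • ((((a*(d*c))*b) - (a*((d*c)*b))) + (((a*b)*(d*c)) - (a*(b*(d*c))))) + (5 : ℤ) • ((((b*(d*c))*a) - (b*((d*c)*a))) + (((b*a)*(d*c))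 - (b*(a*(d*c))))) + (-8 : ℤ) • ((a*((b*c)*d) - a*(b*(c*d))) + (a*((b*d)*c) - a*(b*(d*c)))) + (1 : ℤ) • ((((b*c)*d)*a - (b*(c*d))*a) + (((b*d)*c)*a - (b*(d*c))*a)) + (-4 : ℤ) • ((a*((c*b)*d) - a*(c*(b*d))) + (a*((c*d)*b) - a*(c*(d*b)))) + (-9 : ℤ) • ((((c*b)*d)*a - (c*(b*d))*a) + (((c*d)*b)*a - (c*(d*b))*a)) + (-2 : ℤ) • ((a*((d*b)*c) - a*(d*(b*c))) + (a*((d*c)*b) - a*(d*(c*b)))) + (-4 : ℤ) • ((((d*b)*c)*a - (d*(b*c))*a) + (((d*c)*b)*a - (d*(c*b))*a)) + (-5 : ℤ) • ((b*((a*c)*d) - b*(a*(c*d))) + (b*((a*d)*c) - b*(a*(d*c)))) + (-7 : ℤ) • ((b*((c*a)*d) - b*(c*(a*d))) + (b*((c*d)*a) - b*(c*(d*a)))) + (3 : ℤ) • ((((c*a)*d)*b - (c*(a*d))*b) + (((c*d)*a)*b - (c*(d*a))*b)) + (5 : ℤ) • ((b*((d*a)*c) - b*(d*(a*c))) + (b*((d*c)*a)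 - b*(d*(c*a)))) + (-4 : ℤ) • ((((d*a)*c)*b - (d*(a*c))*b) + (((d*c)*a)*b - (d*(c*a))*b)) + (-1 : ℤ) • ((c*((a*b)*d) - c*(a*(b*d))) + (c*((a*d)*b) - c*(a*(d*b)))) + (-7 : ℤ) • ((c*((b*a)*d) - c*(b*(a*d))) + (c*((b*d)*a) - c*(b*(d*a)))) + (5 : ℤ) • ((((b*a)*d)*c - (b*(a*d))*c) + (((b*d)*a)*c - (b*(d*a))*c)) + (-5 : ℤ) • ((c*((d*a)*b) - c*(d*(a*b))) + (c*((d*b)*a) - c*(d*(b*a)))) + (-4 : ℤ) • ((((a*b)*c)*d - (a*(b*c))*d) + (((a*c)*b)*d - (a*(c*b))*d)) + (4 : ℤ) • ((d*((b*a)*c) - d*(b*(a*c))) + (d*((b*c)*a) - d*(b*(c*a)))) + (-5 : ℤ) • ((((b*a)*c)*d - (b*(a*c))*d) + (((b*c)*a)*d - (b*(c*a))*d)) + (-6 : ℤ) • ((d*((c*a)*b) - d*(c*(a*b))) + (d*((c*b)*a) - d*(c*(b*a)))) + (-1 : ℤ) • ((((c*a)*b)*d - (c*(a*b))*d) + (((c*b)*a)*d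 - (c*(b*a))*d)) + (-4 : ℤ) • (((((a*b)*c)*d) - ((a*b)*(c*d))) + (((c*(a*b))*d) - (c*((a*b)*d)))) + (6 : ℤ) • ((((c*d)*(a*b)) - (c*(d*(a*b)))) + (((d*c)*(a*b)) - (d*(c*(a*b))))) + (-6 : ℤ) • (((((a*c)*b)*d) - ((a*c)*(b*d))) + (((b*(a*c))*d) - (b*((a*c)*d)))) + (-4 : ℤ) • ((((b*d)*(a*c)) - (b*(d*(a*c)))) + (((d*b)*(a*c)) - (d*(b*(a*c))))) + (-6 : ℤ) • (((((a*d)*b)*c) - ((a*d)*(b*c))) + (((b*(a*d))*c) - (b*((a*d)*c)))) + (4 : ℤ) • ((((b*c)*(a*d)) - (b*(c*(a*d)))) + (((c*b)*(a*d)) - (c*(b*(a*d))))) + (-10 : ℤ) • (((((b*a)*c)*d) - ((b*a)*(c*d))) + (((c*(b*a))*d) - (c*((b*a)*d)))) + (2 : ℤ) • ((((c*d)*(b*a)) - (c*(d*(b*a)))) + (((d*c)*(b*a)) - (d*(c*(b*a))))) + (-8 : ℤ) • (((((b*c)*a)*d) - ((b*c)*(a*d))) + (((a*(b*c))*d) -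 (a*((b*c)*d)))) + (-4 : ℤ) • ((((a*d)*(b*c)) - (a*(d*(b*c)))) + (((d*a)*(b*c)) - (d*(a*(b*c))))) + (2 : ℤ) • (((((b*d)*a)*c) - ((b*d)*(a*c))) + (((a*(b*d))*c) - (a*((b*d)*c)))) + (8 : ℤ) • ((((a*c)*(b*d)) - (a*(c*(b*d)))) + (((c*a)*(b*d)) - (c*(a*(b*d))))) + (-2 : ℤ) • (((((c*a)*b)*d) - ((c*a)*(b*d))) + (((b*(c*a))*d) - (b*((c*a)*d)))) + (2 : ℤ) • ((((b*d)*(c*a)) - (b*(d*(c*a)))) + (((d*b)*(c*a)) - (d*(b*(c*a))))) + (6 : ℤ) • ((((a*d)*(c*b)) - (a*(d*(c*b)))) + (((d*a)*(c*b)) - (d*(a*(c*b))))) + (2 : ℤ) • (((((c*d)*a)*b) - ((c*d)*(a*b))) + (((a*(c*d))*b) - (a*((c*d)*b)))) + (10 : ℤ) • ((((a*b)*(c*d)) - (a*(b*(c*d)))) + (((b*a)*(c*d)) - (b*(a*(c*d))))) + (6 : ℤ) • (((((d*a)*b)*c) - ((d*a)*(b*c))) + (((b*(d*a))*c) - (b*((d*a)*c))))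 + (8 : ℤ) • ((((b*c)*(d*a)) - (b*(c*(d*a)))) + (((c*b)*(d*a)) - (c*(b*(d*a))))) + (6 : ℤ) • (((((d*b)*a)*c) - ((d*b)*(a*c))) + (((a*(d*b))*c) - (a*((d*b)*c)))) + (10 : ℤ) • ((((a*c)*(d*b)) - (a*(c*(d*b)))) + (((c*a)*(d*b)) - (c*(a*(d*b))))) + (-4 : ℤ) • (((((d*c)*a)*b) - ((d*c)*(a*b))) + (((a*(d*c))*b) - (a*((d*c)*b)))) + (2 : ℤ) • ((a*((b*c)*d) - a*(b*(c*d))) + (a*((c*b)*d) - a*(c*(b*d)))) + (4 : ℤ) • ((((b*c)*d)*a - (b*(c*d))*a) + (((c*b)*d)*a - (c*(b*d))*a)) + (4 : ℤ) • ((a*((b*d)*c) - a*(b*(d*c))) + (a*((d*b)*c) - a*(d*(b*c)))) + (4 : ℤ) • ((((b*d)*c)*a - (b*(d*c))*a) + (((d*b)*c)*a - (d*(b*c))*a)) + (4 : ℤ) • ((((a*c)*d)*b - (a*(c*d))*b) + (((c*a)*d)*b - (c*(a*d))*b)) + (4 : ℤ) • (((((a*b)*c)*d) + ((d*c)*(a*b)))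 - ((((a*b)*d)*c) + ((d*(a*b))*c))) + (4 : ℤ) • ((((c*(a*b))*d) + ((d*(a*b))*c)) - (((c*d)*(a*b)) + ((d*c)*(a*b)))) + (6 : ℤ) • (((((a*c)*b)*d) + ((d*b)*(a*c))) - ((((a*c)*d)*b) + ((d*(a*c))*b))) + (2 : ℤ) • ((((b*(a*c))*d) + ((d*(a*c))*b)) - (((b*d)*(a*c)) + ((d*b)*(a*c)))) + (4 : ℤ) • (((((a*d)*b)*c) + ((c*b)*(a*d))) - ((((a*d)*c)*b) + ((c*(a*d))*b))) + (8 : ℤ) • ((((b*(a*d))*c) + ((c*(a*d))*b)) - (((b*c)*(a*d)) + ((c*b)*(a*d)))) + (10 : ℤ) • (((((b*a)*c)*d) + ((d*c)*(b*a))) - ((((b*a)*d)*c) + ((d*(b*a))*c))) + (6 : ℤ) • ((((c*(b*a))*d) + ((d*(b*a))*c)) - (((c*d)*(b*a)) + ((d*c)*(b*a)))) + (6 : ℤ) • (((((b*c)*a)*d) + ((d*a)*(b*c))) - ((((b*c)*d)*a) + ((d*(b*c))*a))) + (2 : ℤ) • ((((a*(b*c))*d) + ((d*(b*c))*a)) -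 (((a*d)*(b*c)) + ((d*a)*(b*c)))) + (2 : ℤ) • (((((b*d)*a)*c) + ((c*a)*(b*d))) - ((((b*d)*c)*a) + ((c*(b*d))*a))) + (4 : ℤ) • ((((a*(b*d))*c) + ((c*(b*d))*a)) - (((a*c)*(b*d)) + ((c*a)*(b*d)))) + (2 : ℤ) • (((((c*a)*b)*d) + ((d*b)*(c*a))) - ((((c*a)*d)*b) + ((d*(c*a))*b))) + (4 : ℤ) • ((((b*(c*a))*d) + ((d*(c*a))*b)) - (((b*d)*(c*a)) + ((d*b)*(c*a)))) + (-2 : ℤ) • (((((c*b)*a)*d) + ((d*a)*(c*b))) - ((((c*b)*d)*a) + ((d*(c*b))*a))) + (-10 : ℤ) • (((((c*d)*a)*b) + ((b*a)*(c*d))) - ((((c*d)*b)*a) + ((b*(c*d))*a))) + (-4 : ℤ) • (((((d*a)*b)*c) + ((c*b)*(d*a))) - ((((d*a)*c)*b) + ((c*(d*a))*b))) + (2 : ℤ) • ((a*((b*c)*d) + a*((d*c)*b)) - (a*((b*d)*c) + a*((d*b)*c))) + (-6 : ℤ) • ((((b*c)*d)*a + ((d*c)*b)*a) - (((b*d)*c)*a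 + ((d*b)*c)*a)) + (2 : ℤ) • ((a*((b*d)*c) + a*((c*d)*b)) - (a*((b*c)*d) + a*((c*b)*d))) + (-2 : ℤ) • ((((a*c)*d)*b + ((d*c)*a)*b) - (((a*d)*c)*b + ((d*a)*c)*b)) + (2 : ℤ) • ((b*((a*d)*c) + b*((c*d)*a)) - (b*((a*c)*d) + b*((c*a)*d))) + (-4 : ℤ) • ((c*((a*b)*d) + c*((d*b)*a)) - (c*((a*d)*b) + c*((d*a)*b))) := by abel
  rw [H0, H1, H2, H3, H4, H5, H6, H7, H8, H9, H10, H11, H12, H13, H14, H15, H16, H17, H18, H19, H20, H21, H22, H23, H24, H25, H26, H27, H28, H29, H30, H31, H32, H33, H34, H35, H36, H37, H38, H39, H40, H41, H42, H43, H44, H45, H46, H47, H48, H49, H50, H51, H52, H53, H54, H55, H56, H57, H58, H59, H60, H61, H62, H63, H64, H65, H66, H67, H68, H69, H70, H71, H72, H73, H74, H75, H76, H77, H78, H79, H80, H81, H82, H83, H84, H85, H86, H87, H88, H89, H90, H91, H92, H93, H94, H95, H96, H97, H98, H99, H100, H101, H102, H103] at key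
  simp only [smul_zero, add_zero, zero_add] at key
  have key2 : ((6 : ℤ) : K) • ((a*b)*(c*d) - (-(((c*a)*d)*b) + (a*(c*d))*b + ((c*d)*a)*b)) = 0 := by
    rw [Int.cast_smul_eq_zsmul]; exact key
  have h0 : (a*b)*(c*d) - (-(((c*a)*d)*b) + (a*(c*d))*b + ((c*d)*a)*b) = 0 := by
    have h6 : ((6 : ℤ) : K) ≠ 0 := by norm_num
    exact (smul_eq_zero.mp key2).resolve_left h6
  exact sub_eq_zero.mp h0
end

section
/- In any algebra of the variety V, the identities ((ab)c)d = ((ac)d)b and ((ab)c)d = ((ad)b)c hold for all a,b,c,d. -/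
set_option maxHeartbeats 2000000 in
/-- Context: A is a (not necessarily associative, not necessarily unital) algebra over a
field K of characteristic 0, satisfying the defining identities of the variety V. -/

theorem v2_identity {K A : Type*} [Field K] [CharZero K]
    [NonUnitalNonAssocRing A] [Module K A] [SMulCommClass K A A] [IsScalarTower K A A]
    (h1 : ∀ a b c : A, ((a*b)*c - a*(b*c)) + ((a*c)*b - a*(c*b)) = 0)
    (h2 : ∀ a b c : A, ((a*b)*c - a*(b*c)) + ((b*a)*c - b*(a*c)) = 0)
    (h3 : ∀ a b c : A, (a*b)*c + (c*b)*a = (a*c)*b + (c*a)*b) :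
    ∀ a b c d : A, ((a*b)*c)*d = ((a*c)*d)*b ∧ ((a*b)*c)*d = ((a*d)*b)*c := by
  intro a b c d
  have e1 : a*((b*c)*d) - a*(b*(c*d)) + (a*((b*d)*c) - a*(b*(d*c))) = 0 := by rw [← mul_sub, ← mul_sub, ← mul_add, h1 b c d, mul_zero]
  have e2 : ((b*c)*d)*a - (b*(c*d))*a + (((b*d)*c)*a - (b*(d*c))*a) = 0 := by rw [← sub_mul, ← sub_mul, ← add_mul, h1 b c d, zero_mul]
  have e3 : a*((b*c)*d) - a*(b*(c*d)) + (a*((c*b)*d) - a*(c*(b*d))) = 0 := by rw [← mul_sub, ← mul_sub, ← mul_add, h2 b c d, mul_zero]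
  have e4 : ((b*c)*d)*a - (b*(c*d))*a + (((c*b)*d)*a - (c*(b*d))*a) = 0 := by rw [← sub_mul, ← sub_mul, ← add_mul, h2 b c d, zero_mul]
  have e5 : ((b*c)*d)*a + ((d*c)*b)*a = ((b*d)*c)*a + ((d*b)*c)*a := by rw [← add_mul, ← add_mul, h3 b c d]
  have e6 : a*((b*d)*c) - a*(b*(d*c)) + (a*((d*b)*c) - a*(d*(b*c))) = 0 := by rw [← mul_sub, ← mul_sub, ← mul_add, h2 b d c, mul_zero]
  have e7 : ((b*d)*c)*a - (b*(d*c))*a + (((d*b)*c)*a - (d*(b*c))*a) = 0 := by rw [← sub_mul, ← sub_mul, ← add_mul, h2 b d c, zero_mul]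
  have e8 : a*((b*d)*c) + a*((c*d)*b) = a*((b*c)*d) + a*((c*b)*d) := by rw [← mul_add, ← mul_add, h3 b d c]
  have e9 : a*((c*b)*d) - a*(c*(b*d)) + (a*((c*d)*b) - a*(c*(d*b))) = 0 := by rw [← mul_sub, ← mul_sub, ← mul_add, h1 c b d, mul_zero]
  have e10 : ((c*b)*d)*a - (c*(b*d))*a + (((c*d)*b)*a - (c*(d*b))*a) = 0 := by rw [← sub_mul, ← sub_mul, ← add_mul, h1 c b d, zero_mul]
  have e11 : b*((a*c)*d) - b*(a*(c*d)) + (b*((a*d)*c) - b*(a*(d*c))) = 0 := by rw [← mul_sub, ← mul_sub, ← mul_add, h1 a c d, mul_zero]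
  have e12 : ((a*c)*d)*b + ((d*c)*a)*b = ((a*d)*c)*b + ((d*a)*c)*b := by rw [← add_mul, ← add_mul, h3 a c d]
  have e13 : b*((a*d)*c) - b*(a*(d*c)) + (b*((d*a)*c) - b*(d*(a*c))) = 0 := by rw [← mul_sub, ← mul_sub, ← mul_add, h2 a d c, mul_zero]
  have e14 : ((a*d)*c)*b - (a*(d*c))*b + (((d*a)*c)*b - (d*(a*c))*b) = 0 := by rw [← sub_mul, ← sub_mul, ← add_mul, h2 a d c, zero_mul]
  have e15 : ((a*d)*c)*b + ((c*d)*a)*b = ((a*c)*d)*b + ((c*a)*d)*b := by rw [← add_mul, ← add_mul, h3 a d c]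
  have e16 : b*((c*a)*d) - b*(c*(a*d)) + (b*((c*d)*a) - b*(c*(d*a))) = 0 := by rw [← mul_sub, ← mul_sub, ← mul_add, h1 c a d, mul_zero]
  have e17 : ((c*a)*d)*b - (c*(a*d))*b + (((c*d)*a)*b - (c*(d*a))*b) = 0 := by rw [← sub_mul, ← sub_mul, ← add_mul, h1 c a d, zero_mul]
  have e18 : b*((c*d)*a) - b*(c*(d*a)) + (b*((d*c)*a) - b*(d*(c*a))) = 0 := by rw [← mul_sub, ← mul_sub, ← mul_add, h2 c d a, mul_zero]
  have e19 : c*((a*b)*d) - c*(a*(b*d)) + (c*((a*d)*b) - c*(a*(d*b))) = 0 := by rw [← mul_sub, ← mul_sub, ← mul_add, h1 a b d, mul_zero]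
  have e20 : ((a*b)*d)*c - (a*(b*d))*c + (((b*a)*d)*c - (b*(a*d))*c) = 0 := by rw [← sub_mul, ← sub_mul, ← add_mul, h2 a b d, zero_mul]
  have e21 : ((a*b)*d)*c + ((d*b)*a)*c = ((a*d)*b)*c + ((d*a)*b)*c := by rw [← add_mul, ← add_mul, h3 a b d]
  have e22 : c*((b*a)*d) - c*(b*(a*d)) + (c*((b*d)*a) - c*(b*(d*a))) = 0 := by rw [← mul_sub, ← mul_sub, ← mul_add, h1 b a d, mul_zero]
  have e23 : a*((b*c)*d) + a*((d*c)*b) = a*((b*d)*c) + a*((d*b)*c) := by rw [← mul_add, ← mul_add, h3 b c d]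
  have e24 : ((b*d)*c)*a + ((c*d)*b)*a = ((b*c)*d)*a + ((c*b)*d)*a := by rw [← add_mul, ← add_mul, h3 b d c]
  have e25 : b*((a*c)*d) - b*(a*(c*d)) + (b*((c*a)*d) - b*(c*(a*d))) = 0 := by rw [← mul_sub, ← mul_sub, ← mul_add, h2 a c d, mul_zero]
  have e26 : ((a*c)*d)*b - (a*(c*d))*b + (((c*a)*d)*b - (c*(a*d))*b) = 0 := by rw [← sub_mul, ← sub_mul, ← add_mul, h2 a c d, zero_mul]
  have e27 : b*((a*c)*d) + b*((d*c)*a) = b*((a*d)*c) + b*((d*a)*c) := by rw [← mul_add, ← mul_add, h3 a c d]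
  have e28 : b*((a*d)*c) + b*((c*d)*a) = b*((a*c)*d) + b*((c*a)*d) := by rw [← mul_add, ← mul_add, h3 a d c]
  have e29 : c*((a*b)*d) - c*(a*(b*d)) + (c*((b*a)*d) - c*(b*(a*d))) = 0 := by rw [← mul_sub, ← mul_sub, ← mul_add, h2 a b d, mul_zero]
  constructor
  · linear_combination (norm := module) (1 : K) • (h1 (a*b) c d) + (1/3 : K) • (h1 a (b*c) d) + (-1/3 : K) • (h1 a b (c*d)) + (-1 : K) • (e1) + (-1/3 : K) • (e2) + (-1/3 : K) • (h2 (a*b) c d) + (-4/3 : K) • (h2 a (b*c) d) + (5/3 : K) • (h2 a b (c*d)) + (-1/3 : K) • (e3) + (2/3 : K) • (e4) + (1/3 : K) • (h3 a (b*c) d) + (-1/3 : K) • (e5) + (1/3 : K) • (h1 a (b*d) c) + (-2 : K) • (h2 a (b*d) c) + (4/3 : K) • (h2 a b (d*c)) + (-1/3 : K) • (e6) + (1/3 : K) • (e7) + (-1/3 : K) • (h3 (a*b) d c) + (1/3 : K) • (h3 a b (d*c)) + (-1/3 : K) • (e8) + (-1/3 : K) • (e9) + (-1/3 : K) • (e10)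 + (-2/3 : K) • (h2 (a*c) b d) + (-1/3 : K) • (h2 a (c*b) d) + (1/3 : K) • (h2 a c (b*d)) + (-1/3 : K) • (h3 (a*c) b d) + (-4/3 : K) • (h3 a c (b*d)) + (-1/3 : K) • (h2 a (c*d) b) + (1/3 : K) • (h2 a c (d*b)) + (-1 : K) • (h3 (a*c) d b) + (2/3 : K) • (h3 a (c*d) b) + (-2/3 : K) • (h3 a c (d*b)) + (-2/3 : K) • (h2 (a*d) b c) + (-1/3 : K) • (h2 a (d*b) c) + (-1/3 : K) • (h3 a (d*b) c) + (-2/3 : K) • (h3 a d (b*c)) + (-1/3 : K) • (h2 (a*d) c b) + (-1/3 : K) • (h3 (a*d) c b) + (2/3 : K) • (h3 a (d*c) b) + (-1/3 : K) • (h3 a d (c*b)) + (-1/3 : K) • (h1 b (a*c) d) + (-2/3 : K) • (h1 b a (c*d)) + (-1 : K) • (e11) + (1/3 : K) • (h2 (b*a) c d) + (1/3 : K) • (e12) + (-2/3 : K) • (h1 b a (d*c)) + (1/3 : K) • (e13) + (1/3 : K) • (e14) + (1/3 : K) • (h3 (b*a) d c) + (2/3 : K) • (e15) + (2/3 : K)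 • (h1 (b*c) a d) + (2/3 : K) • (h1 b (c*a) d) + (1/3 : K) • (e16) + (-1/3 : K) • (e17) + (-1/3 : K) • (h2 b (c*a) d) + (-1/3 : K) • (h2 b c (a*d)) + (2/3 : K) • (h1 b c (d*a)) + (1/3 : K) • (h2 b (c*d) a) + (-1/3 : K) • (h2 b c (d*a)) + (-2/3 : K) • (e18) + (2/3 : K) • (h1 (b*d) a c) + (-1/3 : K) • (h2 b (d*a) c) + (-1/3 : K) • (h3 b (d*a) c) + (1/3 : K) • (h2 (b*d) c a) + (1/3 : K) • (h3 b d (c*a)) + (2/3 : K) • (h1 (c*a) b d) + (-1/3 : K) • (e19) + (-1/3 : K) • (e20) + (-1/3 : K) • (e21) + (1/3 : K) • (e22)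
  · linear_combination (norm := module) (1 : K) • (h1 (a*b) c d) + (-1/3 : K) • (h1 a b (c*d)) + (-1 : K) • (e1) + (1/3 : K) • (e2) + (-1/3 : K) • (h2 a (b*c) d) + (1 : K) • (h2 a b (c*d)) + (1/3 : K) • (e3) + (-2/3 : K) • (e4) + (-2/3 : K) • (h3 a b (c*d)) + (2/3 : K) • (e23) + (-1/3 : K) • (e5) + (1/3 : K) • (h1 a (b*d) c) + (2/3 : K) • (h1 a b (d*c)) + (-5/3 : K) • (h2 a (b*d) c) + (1/3 : K) • (h2 a b (d*c)) + (-1 : K) • (h3 a (b*d) c) + (1/3 : K) • (h3 a b (d*c)) + (1/3 : K) • (e8) + (-1 : K) • (e24) + (-2/3 : K) • (e9) + (1/3 : K) • (e10) + (1/3 : K) • (h2 (a*c) b d) + (-2/3 : K) • (h2 a (c*b) d) + (-2/3 : K) • (h3 (a*c) b d) + (-1 : K) • (h3 a c (b*d)) + (2/3 : K) • (h2 a c (d*b)) + (-1/3 : K) • (h3 (a*c) d b) + (-1 : K) • (h3 a (c*d) b) + (-1/3 : K) • (h3 a c (d*b)) + (-1/3 : K) • (h2 (a*d) b c) + (-2/3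 : K) • (h2 a (d*b) c) + (2/3 : K) • (h3 (a*d) b c) + (1/3 : K) • (h3 a (d*b) c) + (-1/3 : K) • (h3 a d (b*c)) + (-2/3 : K) • (h2 (a*d) c b) + (1 : K) • (h3 (a*d) c b) + (1/3 : K) • (h3 a (d*c) b) + (-2/3 : K) • (h3 a d (c*b)) + (-2/3 : K) • (h1 b (a*c) d) + (-2/3 : K) • (h1 b a (c*d)) + (-1 : K) • (e11) + (4/3 : K) • (h2 (b*a) c d) + (2/3 : K) • (e25) + (-2/3 : K) • (e26) + (1/3 : K) • (e27) + (1/3 : K) • (e12) + (2/3 : K) • (e13) + (2/3 : K) • (e14) + (4/3 : K) • (h3 (b*a) d c) + (1/3 : K) • (e28) + (1/3 : K) • (h1 b (c*a) d) + (2/3 : K) • (e16) + (-2/3 : K) • (e17) + (2/3 : K) • (h2 b (c*a) d) + (-4/3 : K) • (h2 b c (a*d)) + (1/3 : K) • (h1 b c (d*a)) + (4/3 : K) • (h2 b (c*d) a) + (-2/3 : K) • (h2 b c (d*a)) + (-1/3 : K) • (e18) + (-1/3 : K) • (h3 b c (d*a)) + (2/3 : K) • (h1 (b*d) a c) + (-2/3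 : K) • (h3 b (d*a) c) + (2/3 : K) • (h2 (b*d) c a) + (1 : K) • (h3 b d (c*a)) + (1/3 : K) • (h1 (c*a) b d) + (-2/3 : K) • (e19) + (2/3 : K) • (e29) + (-4/3 : K) • (e20) + (1/3 : K) • (e21) + (2/3 : K) • (e22)
end

section
/- In any algebra of the variety V, the identity a((bc)d) = ((ac)b)d holds for all a,b,c,d. -/
/-- Context: A is a (not necessarily associative, not necessarily unital) algebra over a
field K of characteristic 0, satisfying the defining identities of the variety V. -/

theorem v3_identity {K A : Type*} [Field K] [CharZero K]
    [NonUnitalNonAssocRing A] [Module K A] [SMulCommClass K A A] [IsScalarTower K A A]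
    (h1 : ∀ a b c : A, ((a*b)*c - a*(b*c)) + ((a*c)*b - a*(c*b)) = 0)
    (h2 : ∀ a b c : A, ((a*b)*c - a*(b*c)) + ((b*a)*c - b*(a*c)) = 0)
    (h3 : ∀ a b c : A, (a*b)*c + (c*b)*a = (a*c)*b + (c*a)*b) :
    ∀ a b c d : A, a*((b*c)*d) = ((a*c)*b)*d := by
  have h1L : ∀ w x y z : A, w*((x*y)*z) - w*(x*(y*z)) + (w*((x*z)*y) - w*(x*(z*y))) = 0 := by
    intro w x y z
    have := congrArg (w * ·) (h1 x y z)
    simpa [mul_add, mul_sub] using this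
  have h1R : ∀ w x y z : A, ((x*y)*z)*w - (x*(y*z))*w + (((x*z)*y)*w - (x*(z*y))*w) = 0 := by
    intro w x y z
    have := congrArg (· * w) (h1 x y z)
    simpa [add_mul, sub_mul] using this
  have h2L : ∀ w x y z : A, w*((x*y)*z) - w*(x*(y*z)) + (w*((y*x)*z) - w*(y*(x*z))) = 0 := by
    intro w x y z
    have := congrArg (w * ·) (h2 x y z)
    simpa [mul_add, mul_sub] using this
  have h2R : ∀ w x y z : A, ((x*y)*z)*w - (x*(y*z))*w + (((y*x)*z)*w - (y*(x*z))*w) = 0 := by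
    intro w x y z
    have := congrArg (· * w) (h2 x y z)
    simpa [add_mul, sub_mul] using this
  have h3L : ∀ w x y z : A, w*((x*y)*z) + w*((z*y)*x) = w*((x*z)*y) + w*((z*x)*y) := by
    intro w x y z
    have := congrArg (w * ·) (h3 x y z)
    simpa [mul_add] using this
  have h3R : ∀ w x y z : A, ((x*y)*z)*w + ((z*y)*x)*w = ((x*z)*y)*w + ((z*x)*y)*w := by
    intro w x y z
    have := congrArg (· * w) (h3 x y z)
    simpa [add_mul] using this
  intro a b c d
  have key : (3:ℤ) • (a*((b*c)*d)) = (3:ℤ) • (((a*c)*b)*d) := by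
    linear_combination (norm := abel1)
      (1:ℤ) • (h1 b c (a*d)) +
      (-1:ℤ) • (h3R c a d b) +
      (5:ℤ) • (h1L b d a c) +
      (7:ℤ) • (h3L b c a d) +
      (-8:ℤ) • (h3R d b c a) +
      (7:ℤ) • (h2 (d*b) a c) +
      (2:ℤ) • (h1L b a d c) +
      (-6:ℤ) • (h2R a b d c) +
      (-1:ℤ) • (h3 a (b*d) c) +
      (-10:ℤ) • (h2R d a b c) +
      (5:ℤ) • (h3 a d (c*b)) +
      (-12:ℤ) • (h1 (d*a) b c) +
      (4:ℤ) • (h2L c d b a) +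
      (1:ℤ) • (h2L a c d b) +
      (6:ℤ) • (h3 a (c*b) d) +
      (10:ℤ) • (h1R b d a c) +
      (2:ℤ) • (h1 (a*b) c d) +
      (5:ℤ) • (h1 b a (c*d)) +
      (-2:ℤ) • (h3R c a b d) +
      (3:ℤ) • (h3 (a*d) c b) +
      (-2:ℤ) • (h3 a b (d*c)) +
      (5:ℤ) • (h3 d (b*a) c) +
      (5:ℤ) • (h1 c a (b*d)) +
      (5:ℤ) • (h2L d a c b) +
      (-2:ℤ) • (h1R c b a d) +
      (2:ℤ) • (h1 c (a*d) b) +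
      (5:ℤ) • (h3 a (c*d) b) +
      (6:ℤ) • (h1R a d c b) +
      (1:ℤ) • (h3 d c (b*a)) +
      (-6:ℤ) • (h2 a (d*c) b) +
      (-3:ℤ) • (h2R b c d a) +
      (-2:ℤ) • (h1 b (d*c) a) +
      (1:ℤ) • (h2 b a (c*d)) +
      (-5:ℤ) • (h2 (c*d) a b) +
      (4:ℤ) • (h1 c d (a*b)) +
      (11:ℤ) • (h3 (d*a) c b) +
      (3:ℤ) • (h2R c b d a) +
      (-1:ℤ) • (h1L a c d b) +
      (2:ℤ) • (h1 (b*a) d c) +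
      (1:ℤ) • (h1 (c*b) a d) +
      (1:ℤ) • (h1L c d b a) +
      (-7:ℤ) • (h1 (d*b) c a) +
      (-3:ℤ) • (h3 b (c*a) d) +
      (4:ℤ) • (h2R c d a b) +
      (-5:ℤ) • (h3 (a*b) c d) +
      (5:ℤ) • (h2 (d*b) c a) +
      (-5:ℤ) • (h2 d b (c*a)) +
      (-1:ℤ) • (h1L c b a d) +
      (1:ℤ) • (h3L a d c b) +
      (-2:ℤ) • (h2 c (b*d) a) +
      (-5:ℤ) • (h1 c d (b*a)) +
      (4:ℤ) • (h3 (d*a) b c) +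
      (-5:ℤ) • (h1 b d (a*c)) +
      (8:ℤ) • (h3L a d b c) +
      (-5:ℤ) • (h3 (c*a) b d) +
      (12:ℤ) • (h2 b (d*a) c) +
      (-4:ℤ) • (h3 (a*b) d c) +
      (-3:ℤ) • (h1 a (c*d) b) +
      (5:ℤ) • (h2 (a*c) d b) +
      (-4:ℤ) • (h3 a (d*c) b) +
      (-8:ℤ) • (h2L b a c d) +
      (8:ℤ) • (h3R a c d b) +
      (-3:ℤ) • (h2 c b (d*a)) +
      (-10:ℤ) • (h2 (c*d) b a) +
      (-8:ℤ) • (h3R b d a c) +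
      (-5:ℤ) • (h2 c d (a*b)) +
      (-1:ℤ) • (h1 a (b*d) c) +
      (5:ℤ) • (h2 a (c*b) d) +
      (2:ℤ) • (h1R a c d b) +
      (3:ℤ) • (h2 b (c*a) d) +
      (-9:ℤ) • (h2 (a*b) c d) +
      (-1:ℤ) • (h3L b a d c) +
      (10:ℤ) • (h1R d a b c) +
      (-5:ℤ) • (h2R b d a c) +
      (-4:ℤ) • (h1 (d*c) a b) +
      (8:ℤ) • (h1 (b*c) a d) +
      (-1:ℤ) • (h1R d c b a) +
      (5:ℤ) • (h1 d (c*a) b) +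
      (4:ℤ) • (h1 a (c*b) d) +
      (-2:ℤ) • (h2 (a*d) c b) +
      (-7:ℤ) • (h3R b a c d) +
      (4:ℤ) • (h2 b c (a*d)) +
      (-5:ℤ) • (h2 d a (c*b)) +
      (-3:ℤ) • (h1R b a c d) +
      (5:ℤ) • (h3 b d (a*c)) +
      (1:ℤ) • (h2 (d*a) c b) +
      (-2:ℤ) • (h3 (d*b) a c) +
      (3:ℤ) • (h1L b c d a) +
      (1:ℤ) • (h1R c d a b) +
      (-2:ℤ) • (h1R c a d b) +
      (-5:ℤ) • (h3 a (d*b) c) +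
      (-5:ℤ) • (h2L c b a d) +
      (-1:ℤ) • (h2 c (b*a) d) +
      (3:ℤ) • (h1 (c*a) b d) +
      (2:ℤ) • (h2L a b c d)
  have h' : ((3:ℤ):K) • (a*((b*c)*d)) = ((3:ℤ):K) • (((a*c)*b)*d) := by
    rw [Int.cast_smul_eq_zsmul, Int.cast_smul_eq_zsmul]; exact key
  have := congrArg (fun z => (((3:ℤ):K))⁻¹ • z) h'
  simpa [smul_smul, inv_mul_cancel₀ (show (((3:ℤ):K)) ≠ 0 by norm_num)] using this
end

section
/- Any algebra of the variety V is alternative: it satisfies (a,a,b)=0 and (a,b,b)=0 for all a,b. -/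
/-- Context: A is a (not necessarily associative, not necessarily unital) algebra over a
field K of characteristic 0, satisfying the defining identities of the variety V. -/

theorem v_alternative {K A : Type*} [Field K] [CharZero K]
    [NonUnitalNonAssocRing A] [Module K A] [SMulCommClass K A A] [IsScalarTower K A A]
    (h1 : ∀ a b c : A, ((a*b)*c - a*(b*c)) + ((a*c)*b - a*(c*b)) = 0)
    (h2 : ∀ a b c : A, ((a*b)*c - a*(b*c)) + ((b*a)*c - b*(a*c)) = 0)
    (h3 : ∀ a b c : A, (a*b)*c + (c*b)*a = (a*c)*b + (c*a)*b) :
    ∀ a b : A, ((a*a)*b - a*(a*b)) = 0 ∧ ((a*b)*b - a*(b*b)) = 0 := by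
  intro a b
  constructor
  · have h := h2 a a b
    have h' : (2:K) • ((a*a)*b - a*(a*b)) = 0 := by rw [two_smul]; exact h
    exact (smul_eq_zero.mp h').resolve_left (by norm_num)
  · have h := h1 a b b
    have h' : (2:K) • ((a*b)*b - a*(b*b)) = 0 := by rw [two_smul]; exact h
    exact (smul_eq_zero.mp h').resolve_left (by norm_num)
end

section
/- Let A be an algebra of the variety V and define the commutator [a,b] = ab - ba. Then the commutator algebra A^(-) satisfies the identity [[a,b],[c,d]] = [a,[[d,b],c]] + [d,[[b,c],a]] + [b,[[c,a],d]] + [c,[[a,d],b]] for all a,b,c,d in A. -/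
set_option maxHeartbeats 4000000 in
/-- Context: A is a (not necessarily associative, not necessarily unital) algebra over a
field K of characteristic 0, satisfying the defining identities of the variety V. -/

theorem commutator_c1 {K A : Type*} [Field K] [CharZero K]
    [NonUnitalNonAssocRing A] [Module K A] [SMulCommClass K A A] [IsScalarTower K A A]
    (h1 : ∀ a b c : A, ((a*b)*c - a*(b*c)) + ((a*c)*b - a*(c*b)) = 0)
    (h2 : ∀ a b c : A, ((a*b)*c - a*(b*c)) + ((b*a)*c - b*(a*c)) = 0)
    (h3 : ∀ a b c : A, (a*b)*c + (c*b)*a = (a*c)*b + (c*a)*b) :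
    ∀ a b c d : A,
      (let lb := fun a b : A => a*b - b*a;
      lb (lb a b) (lb c d) =
        lb a (lb (lb d b) c) + lb d (lb (lb b c) a) + lb b (lb (lb c a) d) + lb c (lb (lb a d) b)) := by
  intro a b c d
  simp only []
  rw [← sub_eq_zero]
  have e1 : (((a*b)*c)*d - (a*b)*(c*d)) + (((a*b)*d)*c - (a*b)*(d*c)) = 0 := h1 (a*b) c d
  have e2 : ((c*(a*b))*d - c*((a*b)*d)) + ((c*d)*(a*b) - c*(d*(a*b))) = 0 := h1 c (a*b) d
  have e3 : ((d*(a*b))*c - d*((a*b)*c)) + ((d*c)*(a*b) - d*(c*(a*b))) = 0 := h1 d (a*b) c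
  have e4 : (((a*c)*b)*d - (a*c)*(b*d)) + (((a*c)*d)*b - (a*c)*(d*b)) = 0 := h1 (a*c) b d
  have e5 : ((b*(a*c))*d - b*((a*c)*d)) + ((b*d)*(a*c) - b*(d*(a*c))) = 0 := h1 b (a*c) d
  have e6 : ((d*(a*c))*b - d*((a*c)*b)) + ((d*b)*(a*c) - d*(b*(a*c))) = 0 := h1 d (a*c) b
  have e7 : (((a*d)*b)*c - (a*d)*(b*c)) + (((a*d)*c)*b - (a*d)*(c*b)) = 0 := h1 (a*d) b c
  have e8 : ((b*(a*d))*c - b*((a*d)*c)) + ((b*c)*(a*d) - b*(c*(a*d))) = 0 := h1 b (a*d) c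
  have e9 : ((c*(a*d))*b - c*((a*d)*b)) + ((c*b)*(a*d) - c*(b*(a*d))) = 0 := h1 c (a*d) b
  have e10 : (((b*a)*c)*d - (b*a)*(c*d)) + (((b*a)*d)*c - (b*a)*(d*c)) = 0 := h1 (b*a) c d
  have e11 : ((c*(b*a))*d - c*((b*a)*d)) + ((c*d)*(b*a) - c*(d*(b*a))) = 0 := h1 c (b*a) d
  have e12 : ((d*(b*a))*c - d*((b*a)*c)) + ((d*c)*(b*a) - d*(c*(b*a))) = 0 := h1 d (b*a) c
  have e13 : (((b*c)*a)*d - (b*c)*(a*d)) + (((b*c)*d)*a - (b*c)*(d*a)) = 0 := h1 (b*c) a d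
  have e14 : ((a*(b*c))*d - a*((b*c)*d)) + ((a*d)*(b*c) - a*(d*(b*c))) = 0 := h1 a (b*c) d
  have e15 : (((b*d)*a)*c - (b*d)*(a*c)) + (((b*d)*c)*a - (b*d)*(c*a)) = 0 := h1 (b*d) a c
  have e16 : ((a*(b*d))*c - a*((b*d)*c)) + ((a*c)*(b*d) - a*(c*(b*d))) = 0 := h1 a (b*d) c
  have e17 : ((c*(b*d))*a - c*((b*d)*a)) + ((c*a)*(b*d) - c*(a*(b*d))) = 0 := h1 c (b*d) a
  have e18 : (((c*a)*b)*d - (c*a)*(b*d)) + (((c*a)*d)*b - (c*a)*(d*b)) = 0 := h1 (c*a) b d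
  have e19 : ((b*(c*a))*d - b*((c*a)*d)) + ((b*d)*(c*a) - b*(d*(c*a))) = 0 := h1 b (c*a) d
  have e20 : ((d*(c*a))*b - d*((c*a)*b)) + ((d*b)*(c*a) - d*(b*(c*a))) = 0 := h1 d (c*a) b
  have e21 : (((c*b)*a)*d - (c*b)*(a*d)) + (((c*b)*d)*a - (c*b)*(d*a)) = 0 := h1 (c*b) a d
  have e22 : ((a*(c*b))*d - a*((c*b)*d)) + ((a*d)*(c*b) - a*(d*(c*b))) = 0 := h1 a (c*b) d
  have e23 : ((d*(c*b))*a - d*((c*b)*a)) + ((d*a)*(c*b) - d*(a*(c*b))) = 0 := h1 d (c*b) a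
  have e24 : (((c*d)*a)*b - (c*d)*(a*b)) + (((c*d)*b)*a - (c*d)*(b*a)) = 0 := h1 (c*d) a b
  have e25 : ((a*(c*d))*b - a*((c*d)*b)) + ((a*b)*(c*d) - a*(b*(c*d))) = 0 := h1 a (c*d) b
  have e26 : ((b*(c*d))*a - b*((c*d)*a)) + ((b*a)*(c*d) - b*(a*(c*d))) = 0 := h1 b (c*d) a
  have e27 : (((d*a)*b)*c - (d*a)*(b*c)) + (((d*a)*c)*b - (d*a)*(c*b)) = 0 := h1 (d*a) b c
  have e28 : ((b*(d*a))*c - b*((d*a)*c)) + ((b*c)*(d*a) - b*(c*(d*a))) = 0 := h1 b (d*a) c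
  have e29 : ((c*(d*a))*b - c*((d*a)*b)) + ((c*b)*(d*a) - c*(b*(d*a))) = 0 := h1 c (d*a) b
  have e30 : (((d*b)*a)*c - (d*b)*(a*c)) + (((d*b)*c)*a - (d*b)*(c*a)) = 0 := h1 (d*b) a c
  have e31 : ((a*(d*b))*c - a*((d*b)*c)) + ((a*c)*(d*b) - a*(c*(d*b))) = 0 := h1 a (d*b) c
  have e32 : ((c*(d*b))*a - c*((d*b)*a)) + ((c*a)*(d*b) - c*(a*(d*b))) = 0 := h1 c (d*b) a
  have e33 : (((d*c)*a)*b - (d*c)*(a*b)) + (((d*c)*b)*a - (d*c)*(b*a)) = 0 := h1 (d*c) a b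
  have e34 : ((a*(d*c))*b - a*((d*c)*b)) + ((a*b)*(d*c) - a*(b*(d*c))) = 0 := h1 a (d*c) b
  have e35 : ((b*(d*c))*a - b*((d*c)*a)) + ((b*a)*(d*c) - b*(a*(d*c))) = 0 := h1 b (d*c) a
  have e36 : (((a*b)*c)*d - (a*b)*(c*d)) + ((c*(a*b))*d - c*((a*b)*d)) = 0 := h2 (a*b) c d
  have e37 : ((c*d)*(a*b) - c*(d*(a*b))) + ((d*c)*(a*b) - d*(c*(a*b))) = 0 := h2 c d (a*b)
  have e38 : (((a*c)*b)*d - (a*c)*(b*d)) + ((b*(a*c))*d - b*((a*c)*d)) = 0 := h2 (a*c) b d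
  have e39 : ((b*d)*(a*c) - b*(d*(a*c))) + ((d*b)*(a*c) - d*(b*(a*c))) = 0 := h2 b d (a*c)
  have e40 : (((a*d)*b)*c - (a*d)*(b*c)) + ((b*(a*d))*c - b*((a*d)*c)) = 0 := h2 (a*d) b c
  have e41 : ((b*c)*(a*d) - b*(c*(a*d))) + ((c*b)*(a*d) - c*(b*(a*d))) = 0 := h2 b c (a*d)
  have e42 : (((b*a)*c)*d - (b*a)*(c*d)) + ((c*(b*a))*d - c*((b*a)*d)) = 0 := h2 (b*a) c d
  have e43 : ((c*d)*(b*a) - c*(d*(b*a))) + ((d*c)*(b*a) - d*(c*(b*a))) = 0 := h2 c d (b*a)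
  have e44 : (((b*c)*a)*d - (b*c)*(a*d)) + ((a*(b*c))*d - a*((b*c)*d)) = 0 := h2 (b*c) a d
  have e45 : ((a*d)*(b*c) - a*(d*(b*c))) + ((d*a)*(b*c) - d*(a*(b*c))) = 0 := h2 a d (b*c)
  have e46 : (((b*d)*a)*c - (b*d)*(a*c)) + ((a*(b*d))*c - a*((b*d)*c)) = 0 := h2 (b*d) a c
  have e47 : ((a*c)*(b*d) - a*(c*(b*d))) + ((c*a)*(b*d) - c*(a*(b*d))) = 0 := h2 a c (b*d)
  have e48 : (((c*a)*b)*d - (c*a)*(b*d)) + ((b*(c*a))*d - b*((c*a)*d)) = 0 := h2 (c*a) b d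
  have e49 : ((b*d)*(c*a) - b*(d*(c*a))) + ((d*b)*(c*a) - d*(b*(c*a))) = 0 := h2 b d (c*a)
  have e50 : (((c*b)*a)*d - (c*b)*(a*d)) + ((a*(c*b))*d - a*((c*b)*d)) = 0 := h2 (c*b) a d
  have e51 : ((a*d)*(c*b) - a*(d*(c*b))) + ((d*a)*(c*b) - d*(a*(c*b))) = 0 := h2 a d (c*b)
  have e52 : (((c*d)*a)*b - (c*d)*(a*b)) + ((a*(c*d))*b - a*((c*d)*b)) = 0 := h2 (c*d) a b
  have e53 : ((a*b)*(c*d) - a*(b*(c*d))) + ((b*a)*(c*d) - b*(a*(c*d))) = 0 := h2 a b (c*d)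
  have e54 : (((d*a)*b)*c - (d*a)*(b*c)) + ((b*(d*a))*c - b*((d*a)*c)) = 0 := h2 (d*a) b c
  have e55 : ((b*c)*(d*a) - b*(c*(d*a))) + ((c*b)*(d*a) - c*(b*(d*a))) = 0 := h2 b c (d*a)
  have e56 : (((d*b)*a)*c - (d*b)*(a*c)) + ((a*(d*b))*c - a*((d*b)*c)) = 0 := h2 (d*b) a c
  have e57 : ((a*c)*(d*b) - a*(c*(d*b))) + ((c*a)*(d*b) - c*(a*(d*b))) = 0 := h2 a c (d*b)
  have e58 : (((d*c)*a)*b - (d*c)*(a*b)) + ((a*(d*c))*b - a*((d*c)*b)) = 0 := h2 (d*c) a b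
  have e59 : ((a*b)*(d*c) - a*(b*(d*c))) + ((b*a)*(d*c) - b*(a*(d*c))) = 0 := h2 a b (d*c)
  have e60 : (((a*b)*c)*d + (d*c)*(a*b)) - (((a*b)*d)*c + (d*(a*b))*c) = 0 := sub_eq_zero_of_eq (h3 (a*b) c d)
  have e61 : ((c*(a*b))*d + (d*(a*b))*c) - ((c*d)*(a*b) + (d*c)*(a*b)) = 0 := sub_eq_zero_of_eq (h3 c (a*b) d)
  have e62 : (((a*c)*b)*d + (d*b)*(a*c)) - (((a*c)*d)*b + (d*(a*c))*b) = 0 := sub_eq_zero_of_eq (h3 (a*c) b d)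
  have e63 : ((b*(a*c))*d + (d*(a*c))*b) - ((b*d)*(a*c) + (d*b)*(a*c)) = 0 := sub_eq_zero_of_eq (h3 b (a*c) d)
  have e64 : (((a*d)*b)*c + (c*b)*(a*d)) - (((a*d)*c)*b + (c*(a*d))*b) = 0 := sub_eq_zero_of_eq (h3 (a*d) b c)
  have e65 : ((b*(a*d))*c + (c*(a*d))*b) - ((b*c)*(a*d) + (c*b)*(a*d)) = 0 := sub_eq_zero_of_eq (h3 b (a*d) c)
  have e66 : (((b*a)*c)*d + (d*c)*(b*a)) - (((b*a)*d)*c + (d*(b*a))*c) = 0 := sub_eq_zero_of_eq (h3 (b*a) c d)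
  have e67 : ((c*(b*a))*d + (d*(b*a))*c) - ((c*d)*(b*a) + (d*c)*(b*a)) = 0 := sub_eq_zero_of_eq (h3 c (b*a) d)
  have e68 : (((b*c)*a)*d + (d*a)*(b*c)) - (((b*c)*d)*a + (d*(b*c))*a) = 0 := sub_eq_zero_of_eq (h3 (b*c) a d)
  have e69 : ((a*(b*c))*d + (d*(b*c))*a) - ((a*d)*(b*c) + (d*a)*(b*c)) = 0 := sub_eq_zero_of_eq (h3 a (b*c) d)
  have e70 : (((b*d)*a)*c + (c*a)*(b*d)) - (((b*d)*c)*a + (c*(b*d))*a) = 0 := sub_eq_zero_of_eq (h3 (b*d) a c)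
  have e71 : ((a*(b*d))*c + (c*(b*d))*a) - ((a*c)*(b*d) + (c*a)*(b*d)) = 0 := sub_eq_zero_of_eq (h3 a (b*d) c)
  have e72 : (((c*a)*b)*d + (d*b)*(c*a)) - (((c*a)*d)*b + (d*(c*a))*b) = 0 := sub_eq_zero_of_eq (h3 (c*a) b d)
  have e73 : ((b*(c*a))*d + (d*(c*a))*b) - ((b*d)*(c*a) + (d*b)*(c*a)) = 0 := sub_eq_zero_of_eq (h3 b (c*a) d)
  have e74 : (((c*b)*a)*d + (d*a)*(c*b)) - (((c*b)*d)*a + (d*(c*b))*a) = 0 := sub_eq_zero_of_eq (h3 (c*b) a d)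
  have e75 : ((a*(c*b))*d + (d*(c*b))*a) - ((a*d)*(c*b) + (d*a)*(c*b)) = 0 := sub_eq_zero_of_eq (h3 a (c*b) d)
  have e76 : (((c*d)*a)*b + (b*a)*(c*d)) - (((c*d)*b)*a + (b*(c*d))*a) = 0 := sub_eq_zero_of_eq (h3 (c*d) a b)
  have e77 : ((a*(c*d))*b + (b*(c*d))*a) - ((a*b)*(c*d) + (b*a)*(c*d)) = 0 := sub_eq_zero_of_eq (h3 a (c*d) b)
  have e78 : (((d*a)*b)*c + (c*b)*(d*a)) - (((d*a)*c)*b + (c*(d*a))*b) = 0 := sub_eq_zero_of_eq (h3 (d*a) b c)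
  have e79 : ((b*(d*a))*c + (c*(d*a))*b) - ((b*c)*(d*a) + (c*b)*(d*a)) = 0 := sub_eq_zero_of_eq (h3 b (d*a) c)
  have e80 : (((d*b)*a)*c + (c*a)*(d*b)) - (((d*b)*c)*a + (c*(d*b))*a) = 0 := sub_eq_zero_of_eq (h3 (d*b) a c)
  have e81 : ((a*(d*b))*c + (c*(d*b))*a) - ((a*c)*(d*b) + (c*a)*(d*b)) = 0 := sub_eq_zero_of_eq (h3 a (d*b) c)
  have e82 : (((d*c)*a)*b + (b*a)*(d*c)) - (((d*c)*b)*a + (b*(d*c))*a) = 0 := sub_eq_zero_of_eq (h3 (d*c) a b)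
  have e83 : ((a*(d*c))*b + (b*(d*c))*a) - ((a*b)*(d*c) + (b*a)*(d*c)) = 0 := sub_eq_zero_of_eq (h3 a (d*c) b)
  have e84 : d * (((a*b)*c - a*(b*c)) + ((a*c)*b - a*(c*b))) = 0 := by rw [show (((a*b)*c - a*(b*c)) + ((a*c)*b - a*(c*b))) = 0 from h1 a b c, mul_zero]
  have e85 : (((a*b)*c - a*(b*c)) + ((a*c)*b - a*(c*b))) * d = 0 := by rw [show (((a*b)*c - a*(b*c)) + ((a*c)*b - a*(c*b))) = 0 from h1 a b c, zero_mul]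
  have e86 : c * (((a*b)*d - a*(b*d)) + ((a*d)*b - a*(d*b))) = 0 := by rw [show (((a*b)*d - a*(b*d)) + ((a*d)*b - a*(d*b))) = 0 from h1 a b d, mul_zero]
  have e87 : (((a*b)*d - a*(b*d)) + ((a*d)*b - a*(d*b))) * c = 0 := by rw [show (((a*b)*d - a*(b*d)) + ((a*d)*b - a*(d*b))) = 0 from h1 a b d, zero_mul]
  have e88 : b * (((a*c)*d - a*(c*d)) + ((a*d)*c - a*(d*c))) = 0 := by rw [show (((a*c)*d - a*(c*d)) + ((a*d)*c - a*(d*c))) = 0 from h1 a c d, mul_zero]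
  have e89 : (((a*c)*d - a*(c*d)) + ((a*d)*c - a*(d*c))) * b = 0 := by rw [show (((a*c)*d - a*(c*d)) + ((a*d)*c - a*(d*c))) = 0 from h1 a c d, zero_mul]
  have e90 : d * (((b*a)*c - b*(a*c)) + ((b*c)*a - b*(c*a))) = 0 := by rw [show (((b*a)*c - b*(a*c)) + ((b*c)*a - b*(c*a))) = 0 from h1 b a c, mul_zero]
  have e91 : c * (((b*a)*d - b*(a*d)) + ((b*d)*a - b*(d*a))) = 0 := by rw [show (((b*a)*d - b*(a*d)) + ((b*d)*a - b*(d*a))) = 0 from h1 b a d, mul_zero]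
  have e92 : (((b*a)*d - b*(a*d)) + ((b*d)*a - b*(d*a))) * c = 0 := by rw [show (((b*a)*d - b*(a*d)) + ((b*d)*a - b*(d*a))) = 0 from h1 b a d, zero_mul]
  have e93 : a * (((b*c)*d - b*(c*d)) + ((b*d)*c - b*(d*c))) = 0 := by rw [show (((b*c)*d - b*(c*d)) + ((b*d)*c - b*(d*c))) = 0 from h1 b c d, mul_zero]
  have e94 : d * (((c*a)*b - c*(a*b)) + ((c*b)*a - c*(b*a))) = 0 := by rw [show (((c*a)*b - c*(a*b)) + ((c*b)*a - c*(b*a))) = 0 from h1 c a b, mul_zero]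
  have e95 : (((c*a)*b - c*(a*b)) + ((c*b)*a - c*(b*a))) * d = 0 := by rw [show (((c*a)*b - c*(a*b)) + ((c*b)*a - c*(b*a))) = 0 from h1 c a b, zero_mul]
  have e96 : b * (((c*a)*d - c*(a*d)) + ((c*d)*a - c*(d*a))) = 0 := by rw [show (((c*a)*d - c*(a*d)) + ((c*d)*a - c*(d*a))) = 0 from h1 c a d, mul_zero]
  have e97 : a * (((c*b)*d - c*(b*d)) + ((c*d)*b - c*(d*b))) = 0 := by rw [show (((c*b)*d - c*(b*d)) + ((c*d)*b - c*(d*b))) = 0 from h1 c b d, mul_zero]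
  have e98 : c * (((d*a)*b - d*(a*b)) + ((d*b)*a - d*(b*a))) = 0 := by rw [show (((d*a)*b - d*(a*b)) + ((d*b)*a - d*(b*a))) = 0 from h1 d a b, mul_zero]
  have e99 : b * (((d*a)*c - d*(a*c)) + ((d*c)*a - d*(c*a))) = 0 := by rw [show (((d*a)*c - d*(a*c)) + ((d*c)*a - d*(c*a))) = 0 from h1 d a c, mul_zero]
  have e100 : d * (((a*b)*c - a*(b*c)) + ((b*a)*c - b*(a*c))) = 0 := by rw [show (((a*b)*c - a*(b*c)) + ((b*a)*c - b*(a*c))) = 0 from h2 a b c, mul_zero]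
  have e101 : (((a*b)*c - a*(b*c)) + ((b*a)*c - b*(a*c))) * d = 0 := by rw [show (((a*b)*c - a*(b*c)) + ((b*a)*c - b*(a*c))) = 0 from h2 a b c, zero_mul]
  have e102 : d * (((a*c)*b - a*(c*b)) + ((c*a)*b - c*(a*b))) = 0 := by rw [show (((a*c)*b - a*(c*b)) + ((c*a)*b - c*(a*b))) = 0 from h2 a c b, mul_zero]
  have e103 : (((a*c)*b - a*(c*b)) + ((c*a)*b - c*(a*b))) * d = 0 := by rw [show (((a*c)*b - a*(c*b)) + ((c*a)*b - c*(a*b))) = 0 from h2 a c b, zero_mul]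
  have e104 : (((a*d)*b - a*(d*b)) + ((d*a)*b - d*(a*b))) * c = 0 := by rw [show (((a*d)*b - a*(d*b)) + ((d*a)*b - d*(a*b))) = 0 from h2 a d b, zero_mul]
  calc _ = (5:ℤ) • ((((a*b)*c)*d - (a*b)*(c*d)) + (((a*b)*d)*c - (a*b)*(d*c))) +
      (-3:ℤ) • (((c*(a*b))*d - c*((a*b)*d)) + ((c*d)*(a*b) - c*(d*(a*b)))) +
      (-5:ℤ) • (((d*(a*b))*c - d*((a*b)*c)) + ((d*c)*(a*b) - d*(c*(a*b)))) +
      (1:ℤ) • ((((a*c)*b)*d - (a*c)*(b*d)) + (((a*c)*d)*b - (a*c)*(d*b))) +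
      (-6:ℤ) • (((b*(a*c))*d - b*((a*c)*d)) + ((b*d)*(a*c) - b*(d*(a*c)))) +
      (1:ℤ) • (((d*(a*c))*b - d*((a*c)*b)) + ((d*b)*(a*c) - d*(b*(a*c)))) +
      (-2:ℤ) • ((((a*d)*b)*c - (a*d)*(b*c)) + (((a*d)*c)*b - (a*d)*(c*b))) +
      (-7:ℤ) • (((b*(a*d))*c - b*((a*d)*c)) + ((b*c)*(a*d) - b*(c*(a*d)))) +
      (-8:ℤ) • (((c*(a*d))*b - c*((a*d)*b)) + ((c*b)*(a*d) - c*(b*(a*d)))) +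
      (2:ℤ) • ((((b*a)*c)*d - (b*a)*(c*d)) + (((b*a)*d)*c - (b*a)*(d*c))) +
      (-5:ℤ) • (((c*(b*a))*d - c*((b*a)*d)) + ((c*d)*(b*a) - c*(d*(b*a)))) +
      (-11:ℤ) • (((d*(b*a))*c - d*((b*a)*c)) + ((d*c)*(b*a) - d*(c*(b*a)))) +
      (1:ℤ) • ((((b*c)*a)*d - (b*c)*(a*d)) + (((b*c)*d)*a - (b*c)*(d*a))) +
      (-4:ℤ) • (((a*(b*c))*d - a*((b*c)*d)) + ((a*d)*(b*c) - a*(d*(b*c)))) +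
      (-4:ℤ) • ((((b*d)*a)*c - (b*d)*(a*c)) + (((b*d)*c)*a - (b*d)*(c*a))) +
      (-11:ℤ) • (((a*(b*d))*c - a*((b*d)*c)) + ((a*c)*(b*d) - a*(c*(b*d)))) +
      (-7:ℤ) • (((c*(b*d))*a - c*((b*d)*a)) + ((c*a)*(b*d) - c*(a*(b*d)))) +
      (-4:ℤ) • ((((c*a)*b)*d - (c*a)*(b*d)) + (((c*a)*d)*b - (c*a)*(d*b))) +
      (-11:ℤ) • (((b*(c*a))*d - b*((c*a)*d)) + ((b*d)*(c*a) - b*(d*(c*a)))) +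
      (-12:ℤ) • (((d*(c*a))*b - d*((c*a)*b)) + ((d*b)*(c*a) - d*(b*(c*a)))) +
      (-7:ℤ) • ((((c*b)*a)*d - (c*b)*(a*d)) + (((c*b)*d)*a - (c*b)*(d*a))) +
      (-9:ℤ) • (((a*(c*b))*d - a*((c*b)*d)) + ((a*d)*(c*b) - a*(d*(c*b)))) +
      (-9:ℤ) • (((d*(c*b))*a - d*((c*b)*a)) + ((d*a)*(c*b) - d*(a*(c*b)))) +
      (-2:ℤ) • ((((c*d)*a)*b - (c*d)*(a*b)) + (((c*d)*b)*a - (c*d)*(b*a))) +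
      (-8:ℤ) • (((a*(c*d))*b - a*((c*d)*b)) + ((a*b)*(c*d) - a*(b*(c*d)))) +
      (-7:ℤ) • (((b*(c*d))*a - b*((c*d)*a)) + ((b*a)*(c*d) - b*(a*(c*d)))) +
      (-9:ℤ) • ((((d*a)*b)*c - (d*a)*(b*c)) + (((d*a)*c)*b - (d*a)*(c*b))) +
      (-16:ℤ) • (((b*(d*a))*c - b*((d*a)*c)) + ((b*c)*(d*a) - b*(c*(d*a)))) +
      (-15:ℤ) • (((c*(d*a))*b - c*((d*a)*b)) + ((c*b)*(d*a) - c*(b*(d*a)))) +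
      (-10:ℤ) • ((((d*b)*a)*c - (d*b)*(a*c)) + (((d*b)*c)*a - (d*b)*(c*a))) +
      (-20:ℤ) • (((a*(d*b))*c - a*((d*b)*c)) + ((a*c)*(d*b) - a*(c*(d*b)))) +
      (-14:ℤ) • (((c*(d*b))*a - c*((d*b)*a)) + ((c*a)*(d*b) - c*(a*(d*b)))) +
      (-2:ℤ) • ((((d*c)*a)*b - (d*c)*(a*b)) + (((d*c)*b)*a - (d*c)*(b*a))) +
      (-4:ℤ) • (((a*(d*c))*b - a*((d*c)*b)) + ((a*b)*(d*c) - a*(b*(d*c)))) +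
      (-3:ℤ) • (((b*(d*c))*a - b*((d*c)*a)) + ((b*a)*(d*c) - b*(a*(d*c)))) +
      (-6:ℤ) • ((((a*b)*c)*d - (a*b)*(c*d)) + ((c*(a*b))*d - c*((a*b)*d))) +
      (17:ℤ) • (((c*d)*(a*b) - c*(d*(a*b))) + ((d*c)*(a*b) - d*(c*(a*b)))) +
      (-1:ℤ) • ((((a*c)*b)*d - (a*c)*(b*d)) + ((b*(a*c))*d - b*((a*c)*d))) +
      (10:ℤ) • (((b*d)*(a*c) - b*(d*(a*c))) + ((d*b)*(a*c) - d*(b*(a*c)))) +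
      (1:ℤ) • ((((a*d)*b)*c - (a*d)*(b*c)) + ((b*(a*d))*c - b*((a*d)*c))) +
      (14:ℤ) • (((b*c)*(a*d) - b*(c*(a*d))) + ((c*b)*(a*d) - c*(b*(a*d)))) +
      (-2:ℤ) • ((((b*a)*c)*d - (b*a)*(c*d)) + ((c*(b*a))*d - c*((b*a)*d))) +
      (19:ℤ) • (((c*d)*(b*a) - c*(d*(b*a))) + ((d*c)*(b*a) - d*(c*(b*a)))) +
      (-1:ℤ) • ((((b*c)*a)*d - (b*c)*(a*d)) + ((a*(b*c))*d - a*((b*c)*d))) +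
      (4:ℤ) • (((a*d)*(b*c) - a*(d*(b*c))) + ((d*a)*(b*c) - d*(a*(b*c)))) +
      (5:ℤ) • ((((b*d)*a)*c - (b*d)*(a*c)) + ((a*(b*d))*c - a*((b*d)*c))) +
      (16:ℤ) • (((a*c)*(b*d) - a*(c*(b*d))) + ((c*a)*(b*d) - c*(a*(b*d)))) +
      (5:ℤ) • ((((c*a)*b)*d - (c*a)*(b*d)) + ((b*(c*a))*d - b*((c*a)*d))) +
      (13:ℤ) • (((b*d)*(c*a) - b*(d*(c*a))) + ((d*b)*(c*a) - d*(b*(c*a)))) +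
      (5:ℤ) • ((((c*b)*a)*d - (c*b)*(a*d)) + ((a*(c*b))*d - a*((c*b)*d))) +
      (9:ℤ) • (((a*d)*(c*b) - a*(d*(c*b))) + ((d*a)*(c*b) - d*(a*(c*b)))) +
      (4:ℤ) • ((((c*d)*a)*b - (c*d)*(a*b)) + ((a*(c*d))*b - a*((c*d)*b))) +
      (13:ℤ) • (((a*b)*(c*d) - a*(b*(c*d))) + ((b*a)*(c*d) - b*(a*(c*d)))) +
      (13:ℤ) • ((((d*a)*b)*c - (d*a)*(b*c)) + ((b*(d*a))*c - b*((d*a)*c))) +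
      (23:ℤ) • (((b*c)*(d*a) - b*(c*(d*a))) + ((c*b)*(d*a) - c*(b*(d*a)))) +
      (21:ℤ) • ((((d*b)*a)*c - (d*b)*(a*c)) + ((a*(d*b))*c - a*((d*b)*c))) +
      (23:ℤ) • (((a*c)*(d*b) - a*(c*(d*b))) + ((c*a)*(d*b) - c*(a*(d*b)))) +
      (4:ℤ) • ((((d*c)*a)*b - (d*c)*(a*b)) + ((a*(d*c))*b - a*((d*c)*b))) +
      (9:ℤ) • (((a*b)*(d*c) - a*(b*(d*c))) + ((b*a)*(d*c) - b*(a*(d*c)))) +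
      (4:ℤ) • ((((a*b)*c)*d + (d*c)*(a*b)) - (((a*b)*d)*c + (d*(a*b))*c)) +
      (13:ℤ) • (((c*(a*b))*d + (d*(a*b))*c) - ((c*d)*(a*b) + (d*c)*(a*b))) +
      (3:ℤ) • ((((a*c)*b)*d + (d*b)*(a*c)) - (((a*c)*d)*b + (d*(a*c))*b)) +
      (3:ℤ) • (((b*(a*c))*d + (d*(a*c))*b) - ((b*d)*(a*c) + (d*b)*(a*c))) +
      (-1:ℤ) • ((((a*d)*b)*c + (c*b)*(a*d)) - (((a*d)*c)*b + (c*(a*d))*b)) +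
      (7:ℤ) • (((b*(a*d))*c + (c*(a*d))*b) - ((b*c)*(a*d) + (c*b)*(a*d))) +
      (4:ℤ) • ((((b*a)*c)*d + (d*c)*(b*a)) - (((b*a)*d)*c + (d*(b*a))*c)) +
      (15:ℤ) • (((c*(b*a))*d + (d*(b*a))*c) - ((c*d)*(b*a) + (d*c)*(b*a))) +
      (1:ℤ) • ((((b*c)*a)*d + (d*a)*(b*c)) - (((b*c)*d)*a + (d*(b*c))*a)) +
      (1:ℤ) • (((a*(b*c))*d + (d*(b*c))*a) - ((a*d)*(b*c) + (d*a)*(b*c))) +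
      (-3:ℤ) • ((((b*d)*a)*c + (c*a)*(b*d)) - (((b*d)*c)*a + (c*(b*d))*a)) +
      (5:ℤ) • (((a*(b*d))*c + (c*(b*d))*a) - ((a*c)*(b*d) + (c*a)*(b*d))) +
      (-5:ℤ) • ((((c*a)*b)*d + (d*b)*(c*a)) - (((c*a)*d)*b + (d*(c*a))*b)) +
      (6:ℤ) • (((b*(c*a))*d + (d*(c*a))*b) - ((b*d)*(c*a) + (d*b)*(c*a))) +
      (-7:ℤ) • ((((c*b)*a)*d + (d*a)*(c*b)) - (((c*b)*d)*a + (d*(c*b))*a)) +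
      (2:ℤ) • (((a*(c*b))*d + (d*(c*b))*a) - ((a*d)*(c*b) + (d*a)*(c*b))) +
      (-2:ℤ) • ((((c*d)*a)*b + (b*a)*(c*d)) - (((c*d)*b)*a + (b*(c*d))*a)) +
      (5:ℤ) • (((a*(c*d))*b + (b*(c*d))*a) - ((a*b)*(c*d) + (b*a)*(c*d))) +
      (-9:ℤ) • ((((d*a)*b)*c + (c*b)*(d*a)) - (((d*a)*c)*b + (c*(d*a))*b)) +
      (6:ℤ) • (((b*(d*a))*c + (c*(d*a))*b) - ((b*c)*(d*a) + (c*b)*(d*a))) +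
      (-11:ℤ) • ((((d*b)*a)*c + (c*a)*(d*b)) - (((d*b)*c)*a + (c*(d*b))*a)) +
      (2:ℤ) • (((a*(d*b))*c + (c*(d*b))*a) - ((a*c)*(d*b) + (c*a)*(d*b))) +
      (-2:ℤ) • ((((d*c)*a)*b + (b*a)*(d*c)) - (((d*c)*b)*a + (b*(d*c))*a)) +
      (1:ℤ) • (((a*(d*c))*b + (b*(d*c))*a) - ((a*b)*(d*c) + (b*a)*(d*c))) +
      (5:ℤ) • (d * (((a*b)*c - a*(b*c)) + ((a*c)*b - a*(c*b)))) +
      (1:ℤ) • ((((a*b)*c - a*(b*c)) + ((a*c)*b - a*(c*b))) * d) +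
      (-9:ℤ) • (c * (((a*b)*d - a*(b*d)) + ((a*d)*b - a*(d*b)))) +
      (-1:ℤ) • ((((a*b)*d - a*(b*d)) + ((a*d)*b - a*(d*b))) * c) +
      (-6:ℤ) • (b * (((a*c)*d - a*(c*d)) + ((a*d)*c - a*(d*c)))) +
      (1:ℤ) • ((((a*c)*d - a*(c*d)) + ((a*d)*c - a*(d*c))) * b) +
      (-1:ℤ) • (d * (((b*a)*c - b*(a*c)) + ((b*c)*a - b*(c*a)))) +
      (-7:ℤ) • (c * (((b*a)*d - b*(a*d)) + ((b*d)*a - b*(d*a)))) +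
      (2:ℤ) • ((((b*a)*d - b*(a*d)) + ((b*d)*a - b*(d*a))) * c) +
      (-5:ℤ) • (a * (((b*c)*d - b*(c*d)) + ((b*d)*c - b*(d*c)))) +
      (-8:ℤ) • (d * (((c*a)*b - c*(a*b)) + ((c*b)*a - c*(b*a)))) +
      (8:ℤ) • ((((c*a)*b - c*(a*b)) + ((c*b)*a - c*(b*a))) * d) +
      (-7:ℤ) • (b * (((c*a)*d - c*(a*d)) + ((c*d)*a - c*(d*a)))) +
      (-4:ℤ) • (a * (((c*b)*d - c*(b*d)) + ((c*d)*b - c*(d*b)))) +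
      (-14:ℤ) • (c * (((d*a)*b - d*(a*b)) + ((d*b)*a - d*(b*a)))) +
      (-3:ℤ) • (b * (((d*a)*c - d*(a*c)) + ((d*c)*a - d*(c*a)))) +
      (-10:ℤ) • (d * (((a*b)*c - a*(b*c)) + ((b*a)*c - b*(a*c)))) +
      (-4:ℤ) • ((((a*b)*c - a*(b*c)) + ((b*a)*c - b*(a*c))) * d) +
      (-4:ℤ) • (d * (((a*c)*b - a*(c*b)) + ((c*a)*b - c*(a*b)))) +
      (-4:ℤ) • ((((a*c)*b - a*(c*b)) + ((c*a)*b - c*(a*b))) * d) +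
      (4:ℤ) • ((((a*d)*b - a*(d*b)) + ((d*a)*b - d*(a*b))) * c) := by
        simp only [mul_sub, sub_mul, mul_add, add_mul, smul_sub, smul_add]
        abel1
    _ = 0 := by
        rw [e1, e2, e3, e4, e5, e6, e7, e8, e9, e10, e11, e12, e13, e14, e15, e16, e17, e18, e19, e20, e21, e22, e23, e24, e25, e26, e27, e28, e29, e30, e31, e32, e33, e34, e35, e36, e37, e38, e39, e40, e41, e42, e43, e44, e45, e46, e47, e48, e49, e50, e51, e52, e53, e54, e55, e56, e57, e58, e59, e60, e61, e62, e63, e64, e65, e66, e67, e68, e69, e70, e71, e72, e73, e74, e75, e76, e77, e78, e79, e80, e81, e82, e83, e84, e85, e86, e87, e88, e89, e90, e91, e92, e93, e94, e95, e96, e97, e98, e99, e100, e101, e102, e103, e104]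
        simp
end

section
/- Let A be an algebra of the variety V with commutator [a,b] = ab - ba. Then A^(-) satisfies the identity [[[a,d],c],b] = [[[a,d],b],c] + [[[a,b],d],c] - [[[a,b],c],d] for all a,b,c,d in A. -/
set_option maxHeartbeats 4000000 in
/-- Context: A is a (not necessarily associative, not necessarily unital) algebra over a
field K of characteristic 0, satisfying the defining identities of the variety V. -/

theorem commutator_c2 {K A : Type*} [Field K] [CharZero K]
    [NonUnitalNonAssocRing A] [Module K A] [SMulCommClass K A A] [IsScalarTower K A A]
    (h1 : ∀ a b c : A, ((a*b)*c - a*(b*c)) + ((a*c)*b - a*(c*b)) = 0)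
    (h2 : ∀ a b c : A, ((a*b)*c - a*(b*c)) + ((b*a)*c - b*(a*c)) = 0)
    (h3 : ∀ a b c : A, (a*b)*c + (c*b)*a = (a*c)*b + (c*a)*b) :
    ∀ a b c d : A,
      (let lb := fun a b : A => a*b - b*a;
      lb (lb (lb a d) c) b =
        lb (lb (lb a d) b) c + lb (lb (lb a b) d) c - lb (lb (lb a b) c) d) := by
  intro a b c d
  show (((a*d - d*a)*c - c*(a*d - d*a))*b - b*((a*d - d*a)*c - c*(a*d - d*a))) = (((a*d - d*a)*b - b*(a*d - d*a))*c - c*((a*d - d*a)*b - b*(a*d - d*a))) + (((a*b - b*a)*d - d*(a*b - b*a))*c - c*((a*b - b*a)*d - d*(a*b - b*a))) - (((a*b - b*a)*c - c*(a*b - b*a))*d - d*((a*b - b*a)*c - c*(a*b - b*a)))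
  have key : (((a*d - d*a)*c - c*(a*d - d*a))*b - b*((a*d - d*a)*c - c*(a*d - d*a))) - ((((a*d - d*a)*b - b*(a*d - d*a))*c - c*((a*d - d*a)*b - b*(a*d - d*a))) + (((a*b - b*a)*d - d*(a*b - b*a))*c - c*((a*b - b*a)*d - d*(a*b - b*a))) - (((a*b - b*a)*c - c*(a*b - b*a))*d - d*((a*b - b*a)*c - c*(a*b - b*a)))) = (14 : ℤ) • ((((a*b)*c)*d - (a*b)*(c*d)) + (((a*b)*d)*c - (a*b)*(d*c))) + (4 : ℤ) • ((((b*a)*c)*d - (b*a)*(c*d)) + (((b*a)*d)*c - (b*a)*(d*c))) + (15 : ℤ) • (((c*(a*b))*d - c*((a*b)*d)) + ((c*d)*(a*b) - c*(d*(a*b)))) + (6 : ℤ) • (((c*(b*a))*d - c*((b*a)*d)) + ((c*d)*(b*a) - c*(d*(b*a)))) + (7 : ℤ) • (((d*(a*b))*c - d*((a*b)*c)) + ((d*c)*(a*b) - d*(c*(a*b)))) + (2 : ℤ) • (((d*(b*a))*c - d*((b*a)*c)) + ((d*c)*(b*a) - d*(c*(b*a)))) + (6 : ℤ) • (((b*(a*c))*d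 - b*((a*c)*d)) + ((b*d)*(a*c) - b*(d*(a*c)))) + (6 : ℤ) • (((d*(a*c))*b - d*((a*c)*b)) + ((d*b)*(a*c) - d*(b*(a*c)))) + (-14 : ℤ) • ((((a*d)*b)*c - (a*d)*(b*c)) + (((a*d)*c)*b - (a*d)*(c*b))) + (-7 : ℤ) • ((((d*a)*b)*c - (d*a)*(b*c)) + (((d*a)*c)*b - (d*a)*(c*b))) + (-21 : ℤ) • (((b*(a*d))*c - b*((a*d)*c)) + ((b*c)*(a*d) - b*(c*(a*d)))) + (-9 : ℤ) • (((b*(d*a))*c - b*((d*a)*c)) + ((b*c)*(d*a) - b*(c*(d*a)))) + (-13 : ℤ) • (((c*(a*d))*b - c*((a*d)*b)) + ((c*b)*(a*d) - c*(b*(a*d)))) + (-5 : ℤ) • (((c*(d*a))*b - c*((d*a)*b)) + ((c*b)*(d*a) - c*(b*(d*a)))) + (1 : ℤ) • ((((b*c)*a)*d - (b*c)*(a*d)) + (((b*c)*d)*a - (b*c)*(d*a))) + (-1 : ℤ) • ((((c*b)*a)*d - (c*b)*(a*d)) + (((c*b)*d)*a - (c*b)*(d*a))) + (11 : ℤ)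 • (((a*(b*c))*d - a*((b*c)*d)) + ((a*d)*(b*c) - a*(d*(b*c)))) + (-2 : ℤ) • (((a*(c*b))*d - a*((c*b)*d)) + ((a*d)*(c*b) - a*(d*(c*b)))) + (3 : ℤ) • (((d*(b*c))*a - d*((b*c)*a)) + ((d*a)*(b*c) - d*(a*(b*c)))) + (-3 : ℤ) • ((((d*b)*a)*c - (d*b)*(a*c)) + (((d*b)*c)*a - (d*b)*(c*a))) + (-9 : ℤ) • (((a*(b*d))*c - a*((b*d)*c)) + ((a*c)*(b*d) - a*(c*(b*d)))) + (-12 : ℤ) • (((a*(d*b))*c - a*((d*b)*c)) + ((a*c)*(d*b) - a*(c*(d*b)))) + (-3 : ℤ) • (((c*(b*d))*a - c*((b*d)*a)) + ((c*a)*(b*d) - c*(a*(b*d)))) + (-6 : ℤ) • (((c*(d*b))*a - c*((d*b)*a)) + ((c*a)*(d*b) - c*(a*(d*b)))) + (2 : ℤ) • ((((c*d)*a)*b - (c*d)*(a*b)) + (((c*d)*b)*a - (c*d)*(b*a))) + (1 : ℤ) • ((((d*c)*a)*b - (d*c)*(a*b)) + (((d*c)*b)*a - (d*c)*(b*a)))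 + (1 : ℤ) • (((a*(c*d))*b - a*((c*d)*b)) + ((a*b)*(c*d) - a*(b*(c*d)))) + (11 : ℤ) • (((a*(d*c))*b - a*((d*c)*b)) + ((a*b)*(d*c) - a*(b*(d*c)))) + (3 : ℤ) • (((b*(c*d))*a - b*((c*d)*a)) + ((b*a)*(c*d) - b*(a*(c*d)))) + (3 : ℤ) • (((b*(d*c))*a - b*((d*c)*a)) + ((b*a)*(d*c) - b*(a*(d*c)))) + (-28 : ℤ) • ((((a*b)*c)*d - (a*b)*(c*d)) + ((c*(a*b))*d - c*((a*b)*d))) + (-8 : ℤ) • ((((b*a)*c)*d - (b*a)*(c*d)) + ((c*(b*a))*d - c*((b*a)*d))) + (-8 : ℤ) • (((c*d)*(a*b) - c*(d*(a*b))) + ((d*c)*(a*b) - d*(c*(a*b)))) + (-1 : ℤ) • (((c*d)*(b*a) - c*(d*(b*a))) + ((d*c)*(b*a) - d*(c*(b*a)))) + (3 : ℤ) • ((((c*a)*b)*d - (c*a)*(b*d)) + ((b*(c*a))*d - b*((c*a)*d))) + (-9 : ℤ) • (((b*d)*(a*c) - b*(d*(a*c))) + ((d*b)*(a*c) - d*(b*(a*c))))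 + (-3 : ℤ) • (((b*d)*(c*a) - b*(d*(c*a))) + ((d*b)*(c*a) - d*(b*(c*a)))) + (28 : ℤ) • ((((a*d)*b)*c - (a*d)*(b*c)) + ((b*(a*d))*c - b*((a*d)*c))) + (11 : ℤ) • ((((d*a)*b)*c - (d*a)*(b*c)) + ((b*(d*a))*c - b*((d*a)*c))) + (17 : ℤ) • (((b*c)*(a*d) - b*(c*(a*d))) + ((c*b)*(a*d) - c*(b*(a*d)))) + (7 : ℤ) • (((b*c)*(d*a) - b*(c*(d*a))) + ((c*b)*(d*a) - c*(b*(d*a)))) + (1 : ℤ) • ((((b*c)*a)*d - (b*c)*(a*d)) + ((a*(b*c))*d - a*((b*c)*d))) + (-4 : ℤ) • ((((c*b)*a)*d - (c*b)*(a*d)) + ((a*(c*b))*d - a*((c*b)*d))) + (-9 : ℤ) • (((a*d)*(b*c) - a*(d*(b*c))) + ((d*a)*(b*c) - d*(a*(b*c)))) + (-6 : ℤ) • (((a*d)*(c*b) - a*(d*(c*b))) + ((d*a)*(c*b) - d*(a*(c*b)))) + (3 : ℤ) • ((((b*d)*a)*c - (b*d)*(a*c)) + ((a*(b*d))*c - a*((b*d)*c)))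 + (6 : ℤ) • ((((d*b)*a)*c - (d*b)*(a*c)) + ((a*(d*b))*c - a*((d*b)*c))) + (15 : ℤ) • (((a*c)*(b*d) - a*(c*(b*d))) + ((c*a)*(b*d) - c*(a*(b*d)))) + (18 : ℤ) • (((a*c)*(d*b) - a*(c*(d*b))) + ((c*a)*(d*b) - c*(a*(d*b)))) + (-7 : ℤ) • ((((c*d)*a)*b - (c*d)*(a*b)) + ((a*(c*d))*b - a*((c*d)*b))) + (1 : ℤ) • ((((d*c)*a)*b - (d*c)*(a*b)) + ((a*(d*c))*b - a*((d*c)*b))) + (-9 : ℤ) • (((a*b)*(c*d) - a*(b*(c*d))) + ((b*a)*(c*d) - b*(a*(c*d)))) + (-9 : ℤ) • (((a*b)*(d*c) - a*(b*(d*c))) + ((b*a)*(d*c) - b*(a*(d*c)))) + (15 : ℤ) • ((((a*b)*c)*d + (d*c)*(a*b)) - (((a*b)*d)*c + (d*(a*b))*c)) + (3 : ℤ) • ((((b*a)*c)*d + (d*c)*(b*a)) - (((b*a)*d)*c + (d*(b*a))*c)) + (12 : ℤ) • (((c*(a*b))*d + (d*(a*b))*c) - ((c*d)*(a*b) + (d*c)*(a*b)))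 + (3 : ℤ) • (((c*(b*a))*d + (d*(b*a))*c) - ((c*d)*(b*a) + (d*c)*(b*a))) + (-3 : ℤ) • ((((c*a)*b)*d + (d*b)*(c*a)) - (((c*a)*d)*b + (d*(c*a))*b)) + (-6 : ℤ) • (((b*(a*c))*d + (d*(a*c))*b) - ((b*d)*(a*c) + (d*b)*(a*c))) + (-3 : ℤ) • (((b*(c*a))*d + (d*(c*a))*b) - ((b*d)*(c*a) + (d*b)*(c*a))) + (-15 : ℤ) • ((((a*d)*b)*c + (c*b)*(a*d)) - (((a*d)*c)*b + (c*(a*d))*b)) + (-6 : ℤ) • ((((d*a)*b)*c + (c*b)*(d*a)) - (((d*a)*c)*b + (c*(d*a))*b)) + (-6 : ℤ) • (((b*(a*d))*c + (c*(a*d))*b) - ((b*c)*(a*d) + (c*b)*(a*d))) + (-3 : ℤ) • (((b*(d*a))*c + (c*(d*a))*b) - ((b*c)*(d*a) + (c*b)*(d*a))) + (-2 : ℤ) • ((((b*c)*a)*d + (d*a)*(b*c)) - (((b*c)*d)*a + (d*(b*c))*a)) + (5 : ℤ) • ((((c*b)*a)*d + (d*a)*(c*b)) - (((c*b)*d)*a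 + (d*(c*b))*a)) + (-12 : ℤ) • (((a*(b*c))*d + (d*(b*c))*a) - ((a*d)*(b*c) + (d*a)*(b*c))) + (6 : ℤ) • (((a*(c*b))*d + (d*(c*b))*a) - ((a*d)*(c*b) + (d*a)*(c*b))) + (-3 : ℤ) • ((((b*d)*a)*c + (c*a)*(b*d)) - (((b*d)*c)*a + (c*(b*d))*a)) + (-6 : ℤ) • ((((d*b)*a)*c + (c*a)*(d*b)) - (((d*b)*c)*a + (c*(d*b))*a)) + (6 : ℤ) • (((a*(b*d))*c + (c*(b*d))*a) - ((a*c)*(b*d) + (c*a)*(b*d))) + (6 : ℤ) • (((a*(d*b))*c + (c*(d*b))*a) - ((a*c)*(d*b) + (c*a)*(d*b))) + (8 : ℤ) • ((((c*d)*a)*b + (b*a)*(c*d)) - (((c*d)*b)*a + (b*(c*d))*a)) + (-2 : ℤ) • ((((d*c)*a)*b + (b*a)*(d*c)) - (((d*c)*b)*a + (b*(d*c))*a)) + (6 : ℤ) • (((a*(c*d))*b + (b*(c*d))*a) - ((a*b)*(c*d) + (b*a)*(c*d))) + (-12 : ℤ) • (((a*(d*c))*b + (b*(d*c))*a) - ((a*b)*(d*c)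 + (b*a)*(d*c))) + (8 : ℤ) • (a * (((b*c)*d - b*(c*d)) + ((b*d)*c - b*(d*c)))) + (1 : ℤ) • ((((b*c)*d - b*(c*d)) + ((b*d)*c - b*(d*c))) * a) + (-6 : ℤ) • (a * (((c*b)*d - c*(b*d)) + ((c*d)*b - c*(d*b)))) + (6 : ℤ) • ((((c*b)*d - c*(b*d)) + ((c*d)*b - c*(d*b))) * a) + (8 : ℤ) • (a * (((d*b)*c - d*(b*c)) + ((d*c)*b - d*(c*b)))) + (1 : ℤ) • ((((d*b)*c - d*(b*c)) + ((d*c)*b - d*(c*b))) * a) + (6 : ℤ) • (b * (((a*c)*d - a*(c*d)) + ((a*d)*c - a*(d*c)))) + (3 : ℤ) • (b * (((c*a)*d - c*(a*d)) + ((c*d)*a - c*(d*a)))) + (-3 : ℤ) • ((((c*a)*d - c*(a*d)) + ((c*d)*a - c*(d*a))) * b) + (3 : ℤ) • (b * (((d*a)*c - d*(a*c)) + ((d*c)*a - d*(c*a)))) + (-12 : ℤ) • (c * (((a*b)*d - a*(b*d)) + ((a*d)*b - a*(d*b)))) + (-3 : ℤ) • (c * (((b*a)*d - b*(a*d)) +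 ((b*d)*a - b*(d*a)))) + (-6 : ℤ) • (c * (((d*a)*b - d*(a*b)) + ((d*b)*a - d*(b*a)))) + (3 : ℤ) • ((((d*a)*b - d*(a*b)) + ((d*b)*a - d*(b*a))) * c) + (6 : ℤ) • (d * (((a*b)*c - a*(b*c)) + ((a*c)*b - a*(c*b)))) + (3 : ℤ) • (d * (((b*a)*c - b*(a*c)) + ((b*c)*a - b*(c*a)))) + (-10 : ℤ) • (a * (((b*d)*c - b*(d*c)) + ((d*b)*c - d*(b*c)))) + (-8 : ℤ) • ((((b*d)*c - b*(d*c)) + ((d*b)*c - d*(b*c))) * a) + (4 : ℤ) • (a * (((b*c)*d + (d*c)*b) - ((b*d)*c + (d*b)*c))) + (-4 : ℤ) • ((((b*c)*d + (d*c)*b) - ((b*d)*c + (d*b)*c)) * a) := by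
    simp only [mul_sub, sub_mul, mul_add, add_mul]
    abel
  have hz : ((14 : ℤ) • ((((a*b)*c)*d - (a*b)*(c*d)) + (((a*b)*d)*c - (a*b)*(d*c))) + (4 : ℤ) • ((((b*a)*c)*d - (b*a)*(c*d)) + (((b*a)*d)*c - (b*a)*(d*c))) + (15 : ℤ) • (((c*(a*b))*d - c*((a*b)*d)) + ((c*d)*(a*b) - c*(d*(a*b)))) + (6 : ℤ) • (((c*(b*a))*d - c*((b*a)*d)) + ((c*d)*(b*a) - c*(d*(b*a)))) + (7 : ℤ) • (((d*(a*b))*c - d*((a*b)*c)) + ((d*c)*(a*b) - d*(c*(a*b)))) + (2 : ℤ) • (((d*(b*a))*c - d*((b*a)*c)) + ((d*c)*(b*a) - d*(c*(b*a)))) + (6 : ℤ) • (((b*(a*c))*d - b*((a*c)*d)) + ((b*d)*(a*c) - b*(d*(a*c)))) + (6 : ℤ) • (((d*(a*c))*b - d*((a*c)*b)) + ((d*b)*(a*c) - d*(b*(a*c)))) + (-14 : ℤ) • ((((a*d)*b)*c - (a*d)*(b*c)) + (((a*d)*c)*b - (a*d)*(c*b))) + (-7 : ℤ) • ((((d*a)*b)*c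 - (d*a)*(b*c)) + (((d*a)*c)*b - (d*a)*(c*b))) + (-21 : ℤ) • (((b*(a*d))*c - b*((a*d)*c)) + ((b*c)*(a*d) - b*(c*(a*d)))) + (-9 : ℤ) • (((b*(d*a))*c - b*((d*a)*c)) + ((b*c)*(d*a) - b*(c*(d*a)))) + (-13 : ℤ) • (((c*(a*d))*b - c*((a*d)*b)) + ((c*b)*(a*d) - c*(b*(a*d)))) + (-5 : ℤ) • (((c*(d*a))*b - c*((d*a)*b)) + ((c*b)*(d*a) - c*(b*(d*a)))) + (1 : ℤ) • ((((b*c)*a)*d - (b*c)*(a*d)) + (((b*c)*d)*a - (b*c)*(d*a))) + (-1 : ℤ) • ((((c*b)*a)*d - (c*b)*(a*d)) + (((c*b)*d)*a - (c*b)*(d*a))) + (11 : ℤ) • (((a*(b*c))*d - a*((b*c)*d)) + ((a*d)*(b*c) - a*(d*(b*c)))) + (-2 : ℤ) • (((a*(c*b))*d - a*((c*b)*d)) + ((a*d)*(c*b) - a*(d*(c*b)))) + (3 : ℤ) • (((d*(b*c))*a - d*((b*c)*a)) + ((d*a)*(b*c) - d*(a*(b*c)))) + (-3 : ℤ) • ((((d*b)*a)*c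 - (d*b)*(a*c)) + (((d*b)*c)*a - (d*b)*(c*a))) + (-9 : ℤ) • (((a*(b*d))*c - a*((b*d)*c)) + ((a*c)*(b*d) - a*(c*(b*d)))) + (-12 : ℤ) • (((a*(d*b))*c - a*((d*b)*c)) + ((a*c)*(d*b) - a*(c*(d*b)))) + (-3 : ℤ) • (((c*(b*d))*a - c*((b*d)*a)) + ((c*a)*(b*d) - c*(a*(b*d)))) + (-6 : ℤ) • (((c*(d*b))*a - c*((d*b)*a)) + ((c*a)*(d*b) - c*(a*(d*b)))) + (2 : ℤ) • ((((c*d)*a)*b - (c*d)*(a*b)) + (((c*d)*b)*a - (c*d)*(b*a))) + (1 : ℤ) • ((((d*c)*a)*b - (d*c)*(a*b)) + (((d*c)*b)*a - (d*c)*(b*a))) + (1 : ℤ) • (((a*(c*d))*b - a*((c*d)*b)) + ((a*b)*(c*d) - a*(b*(c*d)))) + (11 : ℤ) • (((a*(d*c))*b - a*((d*c)*b)) + ((a*b)*(d*c) - a*(b*(d*c)))) + (3 : ℤ) • (((b*(c*d))*a - b*((c*d)*a)) + ((b*a)*(c*d) - b*(a*(c*d)))) + (3 : ℤ) • (((b*(d*c))*a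 - b*((d*c)*a)) + ((b*a)*(d*c) - b*(a*(d*c)))) + (-28 : ℤ) • ((((a*b)*c)*d - (a*b)*(c*d)) + ((c*(a*b))*d - c*((a*b)*d))) + (-8 : ℤ) • ((((b*a)*c)*d - (b*a)*(c*d)) + ((c*(b*a))*d - c*((b*a)*d))) + (-8 : ℤ) • (((c*d)*(a*b) - c*(d*(a*b))) + ((d*c)*(a*b) - d*(c*(a*b)))) + (-1 : ℤ) • (((c*d)*(b*a) - c*(d*(b*a))) + ((d*c)*(b*a) - d*(c*(b*a)))) + (3 : ℤ) • ((((c*a)*b)*d - (c*a)*(b*d)) + ((b*(c*a))*d - b*((c*a)*d))) + (-9 : ℤ) • (((b*d)*(a*c) - b*(d*(a*c))) + ((d*b)*(a*c) - d*(b*(a*c)))) + (-3 : ℤ) • (((b*d)*(c*a) - b*(d*(c*a))) + ((d*b)*(c*a) - d*(b*(c*a)))) + (28 : ℤ) • ((((a*d)*b)*c - (a*d)*(b*c)) + ((b*(a*d))*c - b*((a*d)*c))) + (11 : ℤ) • ((((d*a)*b)*c - (d*a)*(b*c)) + ((b*(d*a))*c - b*((d*a)*c))) + (17 : ℤ) •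 (((b*c)*(a*d) - b*(c*(a*d))) + ((c*b)*(a*d) - c*(b*(a*d)))) + (7 : ℤ) • (((b*c)*(d*a) - b*(c*(d*a))) + ((c*b)*(d*a) - c*(b*(d*a)))) + (1 : ℤ) • ((((b*c)*a)*d - (b*c)*(a*d)) + ((a*(b*c))*d - a*((b*c)*d))) + (-4 : ℤ) • ((((c*b)*a)*d - (c*b)*(a*d)) + ((a*(c*b))*d - a*((c*b)*d))) + (-9 : ℤ) • (((a*d)*(b*c) - a*(d*(b*c))) + ((d*a)*(b*c) - d*(a*(b*c)))) + (-6 : ℤ) • (((a*d)*(c*b) - a*(d*(c*b))) + ((d*a)*(c*b) - d*(a*(c*b)))) + (3 : ℤ) • ((((b*d)*a)*c - (b*d)*(a*c)) + ((a*(b*d))*c - a*((b*d)*c))) + (6 : ℤ) • ((((d*b)*a)*c - (d*b)*(a*c)) + ((a*(d*b))*c - a*((d*b)*c))) + (15 : ℤ) • (((a*c)*(b*d) - a*(c*(b*d))) + ((c*a)*(b*d) - c*(a*(b*d)))) + (18 : ℤ) • (((a*c)*(d*b) - a*(c*(d*b))) + ((c*a)*(d*b) - c*(a*(d*b)))) +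 (-7 : ℤ) • ((((c*d)*a)*b - (c*d)*(a*b)) + ((a*(c*d))*b - a*((c*d)*b))) + (1 : ℤ) • ((((d*c)*a)*b - (d*c)*(a*b)) + ((a*(d*c))*b - a*((d*c)*b))) + (-9 : ℤ) • (((a*b)*(c*d) - a*(b*(c*d))) + ((b*a)*(c*d) - b*(a*(c*d)))) + (-9 : ℤ) • (((a*b)*(d*c) - a*(b*(d*c))) + ((b*a)*(d*c) - b*(a*(d*c)))) + (15 : ℤ) • ((((a*b)*c)*d + (d*c)*(a*b)) - (((a*b)*d)*c + (d*(a*b))*c)) + (3 : ℤ) • ((((b*a)*c)*d + (d*c)*(b*a)) - (((b*a)*d)*c + (d*(b*a))*c)) + (12 : ℤ) • (((c*(a*b))*d + (d*(a*b))*c) - ((c*d)*(a*b) + (d*c)*(a*b))) + (3 : ℤ) • (((c*(b*a))*d + (d*(b*a))*c) - ((c*d)*(b*a) + (d*c)*(b*a))) + (-3 : ℤ) • ((((c*a)*b)*d + (d*b)*(c*a)) - (((c*a)*d)*b + (d*(c*a))*b)) + (-6 : ℤ) • (((b*(a*c))*d + (d*(a*c))*b) - ((b*d)*(a*c) + (d*b)*(a*c)))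 + (-3 : ℤ) • (((b*(c*a))*d + (d*(c*a))*b) - ((b*d)*(c*a) + (d*b)*(c*a))) + (-15 : ℤ) • ((((a*d)*b)*c + (c*b)*(a*d)) - (((a*d)*c)*b + (c*(a*d))*b)) + (-6 : ℤ) • ((((d*a)*b)*c + (c*b)*(d*a)) - (((d*a)*c)*b + (c*(d*a))*b)) + (-6 : ℤ) • (((b*(a*d))*c + (c*(a*d))*b) - ((b*c)*(a*d) + (c*b)*(a*d))) + (-3 : ℤ) • (((b*(d*a))*c + (c*(d*a))*b) - ((b*c)*(d*a) + (c*b)*(d*a))) + (-2 : ℤ) • ((((b*c)*a)*d + (d*a)*(b*c)) - (((b*c)*d)*a + (d*(b*c))*a)) + (5 : ℤ) • ((((c*b)*a)*d + (d*a)*(c*b)) - (((c*b)*d)*a + (d*(c*b))*a)) + (-12 : ℤ) • (((a*(b*c))*d + (d*(b*c))*a) - ((a*d)*(b*c) + (d*a)*(b*c))) + (6 : ℤ) • (((a*(c*b))*d + (d*(c*b))*a) - ((a*d)*(c*b) + (d*a)*(c*b))) + (-3 : ℤ) • ((((b*d)*a)*c + (c*a)*(b*d)) - (((b*d)*c)*a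 + (c*(b*d))*a)) + (-6 : ℤ) • ((((d*b)*a)*c + (c*a)*(d*b)) - (((d*b)*c)*a + (c*(d*b))*a)) + (6 : ℤ) • (((a*(b*d))*c + (c*(b*d))*a) - ((a*c)*(b*d) + (c*a)*(b*d))) + (6 : ℤ) • (((a*(d*b))*c + (c*(d*b))*a) - ((a*c)*(d*b) + (c*a)*(d*b))) + (8 : ℤ) • ((((c*d)*a)*b + (b*a)*(c*d)) - (((c*d)*b)*a + (b*(c*d))*a)) + (-2 : ℤ) • ((((d*c)*a)*b + (b*a)*(d*c)) - (((d*c)*b)*a + (b*(d*c))*a)) + (6 : ℤ) • (((a*(c*d))*b + (b*(c*d))*a) - ((a*b)*(c*d) + (b*a)*(c*d))) + (-12 : ℤ) • (((a*(d*c))*b + (b*(d*c))*a) - ((a*b)*(d*c) + (b*a)*(d*c))) + (8 : ℤ) • (a * (((b*c)*d - b*(c*d)) + ((b*d)*c - b*(d*c)))) + (1 : ℤ) • ((((b*c)*d - b*(c*d)) + ((b*d)*c - b*(d*c))) * a) + (-6 : ℤ) • (a * (((c*b)*d - c*(b*d)) + ((c*d)*b - c*(d*b)))) + (6 : ℤ)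 • ((((c*b)*d - c*(b*d)) + ((c*d)*b - c*(d*b))) * a) + (8 : ℤ) • (a * (((d*b)*c - d*(b*c)) + ((d*c)*b - d*(c*b)))) + (1 : ℤ) • ((((d*b)*c - d*(b*c)) + ((d*c)*b - d*(c*b))) * a) + (6 : ℤ) • (b * (((a*c)*d - a*(c*d)) + ((a*d)*c - a*(d*c)))) + (3 : ℤ) • (b * (((c*a)*d - c*(a*d)) + ((c*d)*a - c*(d*a)))) + (-3 : ℤ) • ((((c*a)*d - c*(a*d)) + ((c*d)*a - c*(d*a))) * b) + (3 : ℤ) • (b * (((d*a)*c - d*(a*c)) + ((d*c)*a - d*(c*a)))) + (-12 : ℤ) • (c * (((a*b)*d - a*(b*d)) + ((a*d)*b - a*(d*b)))) + (-3 : ℤ) • (c * (((b*a)*d - b*(a*d)) + ((b*d)*a - b*(d*a)))) + (-6 : ℤ) • (c * (((d*a)*b - d*(a*b)) + ((d*b)*a - d*(b*a)))) + (3 : ℤ) • ((((d*a)*b - d*(a*b)) + ((d*b)*a - d*(b*a))) * c) + (6 : ℤ) • (d * (((a*b)*c - a*(b*c)) + ((a*c)*b - a*(c*b)))) + (3 :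 ℤ) • (d * (((b*a)*c - b*(a*c)) + ((b*c)*a - b*(c*a)))) + (-10 : ℤ) • (a * (((b*d)*c - b*(d*c)) + ((d*b)*c - d*(b*c)))) + (-8 : ℤ) • ((((b*d)*c - b*(d*c)) + ((d*b)*c - d*(b*c))) * a) + (4 : ℤ) • (a * (((b*c)*d + (d*c)*b) - ((b*d)*c + (d*b)*c))) + (-4 : ℤ) • ((((b*c)*d + (d*c)*b) - ((b*d)*c + (d*b)*c)) * a) : A) = 0 := by
    rw [h1 (a*b) c d, h1 (b*a) c d, h1 c (a*b) d, h1 c (b*a) d, h1 d (a*b) c, h1 d (b*a) c, h1 b (a*c) d, h1 d (a*c) b, h1 (a*d) b c, h1 (d*a) b c, h1 b (a*d) c, h1 b (d*a) c, h1 c (a*d) b, h1 c (d*a) b, h1 (b*c) a d, h1 (c*b) a d, h1 a (b*c) d, h1 a (c*b) d, h1 d (b*c) a, h1 (d*b) a c, h1 a (b*d) c, h1 a (d*b) c, h1 c (b*d) a, h1 c (d*b) a, h1 (c*d) a b, h1 (d*c) a b, h1 a (c*d) b, h1 a (d*c) b, h1 b (c*d) a, h1 b (d*c) a, h2 (a*b)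 c d, h2 (b*a) c d, h2 c d (a*b), h2 c d (b*a), h2 (c*a) b d, h2 b d (a*c), h2 b d (c*a), h2 (a*d) b c, h2 (d*a) b c, h2 b c (a*d), h2 b c (d*a), h2 (b*c) a d, h2 (c*b) a d, h2 a d (b*c), h2 a d (c*b), h2 (b*d) a c, h2 (d*b) a c, h2 a c (b*d), h2 a c (d*b), h2 (c*d) a b, h2 (d*c) a b, h2 a b (c*d), h2 a b (d*c), sub_eq_zero.mpr (h3 (a*b) c d), sub_eq_zero.mpr (h3 (b*a) c d), sub_eq_zero.mpr (h3 c (a*b) d), sub_eq_zero.mpr (h3 c (b*a) d), sub_eq_zero.mpr (h3 (c*a) b d), sub_eq_zero.mpr (h3 b (a*c) d), sub_eq_zero.mpr (h3 b (c*a) d), sub_eq_zero.mpr (h3 (a*d) b c), sub_eq_zero.mpr (h3 (d*a) b c), sub_eq_zero.mpr (h3 b (a*d) c), sub_eq_zero.mpr (h3 b (d*a) c), sub_eq_zero.mpr (h3 (b*c) a d), sub_eq_zero.mpr (h3 (c*b) a d), sub_eq_zero.mpr (h3 a (b*c) d), sub_eq_zero.mpr (h3 a (c*b) d), sub_eq_zero.mpr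 (h3 (b*d) a c), sub_eq_zero.mpr (h3 (d*b) a c), sub_eq_zero.mpr (h3 a (b*d) c), sub_eq_zero.mpr (h3 a (d*b) c), sub_eq_zero.mpr (h3 (c*d) a b), sub_eq_zero.mpr (h3 (d*c) a b), sub_eq_zero.mpr (h3 a (c*d) b), sub_eq_zero.mpr (h3 a (d*c) b), h1 b c d, h1 c b d, h1 d b c, h1 a c d, h1 c a d, h1 d a c, h1 a b d, h1 b a d, h1 d a b, h1 a b c, h1 b a c, h2 b d c, sub_eq_zero.mpr (h3 b c d)]
    simp
  exact sub_eq_zero.mp (key.trans hz)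
end

section
/- Let L be an anticommutative algebra (with bracket [,]) satisfying the identities [[a,b],[c,d]] = [a,[[d,b],c]] + [d,[[b,c],a]] + [b,[[c,a],d]] + [c,[[a,d],b]] and [[[a,d],c],b] = [[[a,d],b],c] + [[[a,b],d],c] - [[[a,b],c],d]. Then L also satisfies [[[[a,b],c],d],e] = [[[[a,b],d],c],e] and [[[[a,b],c],d],e] = [[[[a,b],c],e],d] for all a,b,c,d,e. -/
set_option maxRecDepth 100000
set_option maxHeartbeats 4000000

private theorem g1_aux {K L : Type*} [Field K] [CharZero K]
    [NonUnitalNonAssocRing L] [Module K L] [SMulCommClass K L L] [IsScalarTower K L L]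
    (anti : ∀ a : L, a * a = 0)
    (c1 : ∀ a b c d : L, (a*b)*(c*d) = a*((d*b)*c) + d*((b*c)*a) + b*((c*a)*d) + c*((a*d)*b))
    (c2 : ∀ a b c d : L, ((a*d)*c)*b = ((a*d)*b)*c + ((a*b)*d)*c - ((a*b)*c)*d) :
    ∀ a b c d e : L, (((a*b)*c)*d)*e = (((a*b)*d)*c)*e := by
  intro a b c d e
  have hac : ∀ x y : L, x * y = -(y * x) := by
      intro x y
      have h := anti (x + y)
      rw [mul_add, add_mul, add_mul, anti, anti, zero_add, add_zero] at h
      exact eq_neg_of_add_eq_zero_right h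
  have z0 : (((a*b)*c)*(d*e)) - (((a*b)*((e*c)*d)) + (e*((c*d)*(a*b))) + (c*((d*(a*b))*e)) + (d*(((a*b)*e)*c))) = 0 := sub_eq_zero_of_eq (c1 (a*b) c d e)
  have z1 : (((c*e)*d)*(a*b)) - ((((c*e)*(a*b))*d) + (((c*(a*b))*e)*d) - (((c*(a*b))*d)*e)) = 0 := sub_eq_zero_of_eq (c2 c (a*b) d e)
  have z2 : ((c*d)*((a*b)*e)) - ((c*((e*d)*(a*b))) + (e*((d*(a*b))*c)) + (d*(((a*b)*c)*e)) + ((a*b)*((c*e)*d))) = 0 := sub_eq_zero_of_eq (c1 c d (a*b) e)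
  have z3 : ((c*d)*(e*(a*b))) - ((c*(((a*b)*d)*e)) + ((a*b)*((d*e)*c)) + (d*((e*c)*(a*b))) + (e*((c*(a*b))*d))) = 0 := sub_eq_zero_of_eq (c1 c d e (a*b))
  have z4 : ((c*e)*((a*b)*d)) - ((c*((d*e)*(a*b))) + (d*((e*(a*b))*c)) + (e*(((a*b)*c)*d)) + ((a*b)*((c*d)*e))) = 0 := sub_eq_zero_of_eq (c1 c e (a*b) d)
  have z5 : (((a*c)*b)*(d*e)) - (((a*c)*((e*b)*d)) + (e*((b*d)*(a*c))) + (b*((d*(a*c))*e)) + (d*(((a*c)*e)*b))) = 0 := sub_eq_zero_of_eq (c1 (a*c) b d e)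
  have z6 : (((b*e)*d)*(a*c)) - ((((b*e)*(a*c))*d) + (((b*(a*c))*e)*d) - (((b*(a*c))*d)*e)) = 0 := sub_eq_zero_of_eq (c2 b (a*c) d e)
  have z7 : ((b*d)*((a*c)*e)) - ((b*((e*d)*(a*c))) + (e*((d*(a*c))*b)) + (d*(((a*c)*b)*e)) + ((a*c)*((b*e)*d))) = 0 := sub_eq_zero_of_eq (c1 b d (a*c) e)
  have z8 : ((b*d)*(e*(a*c))) - ((b*(((a*c)*d)*e)) + ((a*c)*((d*e)*b)) + (d*((e*b)*(a*c))) + (e*((b*(a*c))*d))) = 0 := sub_eq_zero_of_eq (c1 b d e (a*c))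
  have z9 : ((b*e)*((a*c)*d)) - ((b*((d*e)*(a*c))) + (d*((e*(a*c))*b)) + (e*(((a*c)*b)*d)) + ((a*c)*((b*d)*e))) = 0 := sub_eq_zero_of_eq (c1 b e (a*c) d)
  have z10 : (((a*d)*b)*(c*e)) - (((a*d)*((e*b)*c)) + (e*((b*c)*(a*d))) + (b*((c*(a*d))*e)) + (c*(((a*d)*e)*b))) = 0 := sub_eq_zero_of_eq (c1 (a*d) b c e)
  have z11 : (((b*e)*c)*(a*d)) - ((((b*e)*(a*d))*c) + (((b*(a*d))*e)*c) - (((b*(a*d))*c)*e)) = 0 := sub_eq_zero_of_eq (c2 b (a*d) c e)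
  have z12 : ((b*c)*((a*d)*e)) - ((b*((e*c)*(a*d))) + (e*((c*(a*d))*b)) + (c*(((a*d)*b)*e)) + ((a*d)*((b*e)*c))) = 0 := sub_eq_zero_of_eq (c1 b c (a*d) e)
  have z13 : ((b*c)*(e*(a*d))) - ((b*(((a*d)*c)*e)) + ((a*d)*((c*e)*b)) + (c*((e*b)*(a*d))) + (e*((b*(a*d))*c))) = 0 := sub_eq_zero_of_eq (c1 b c e (a*d))
  have z14 : ((b*e)*((a*d)*c)) - ((b*((c*e)*(a*d))) + (c*((e*(a*d))*b)) + (e*(((a*d)*b)*c)) + ((a*d)*((b*c)*e))) = 0 := sub_eq_zero_of_eq (c1 b e (a*d) c)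
  have z15 : (((a*e)*b)*(c*d)) - (((a*e)*((d*b)*c)) + (d*((b*c)*(a*e))) + (b*((c*(a*e))*d)) + (c*(((a*e)*d)*b))) = 0 := sub_eq_zero_of_eq (c1 (a*e) b c d)
  have z16 : ((b*c)*(d*(a*e))) - ((b*(((a*e)*c)*d)) + ((a*e)*((c*d)*b)) + (c*((d*b)*(a*e))) + (d*((b*(a*e))*c))) = 0 := sub_eq_zero_of_eq (c1 b c d (a*e))
  have z17 : ((b*d)*((a*e)*c)) - ((b*((c*d)*(a*e))) + (c*((d*(a*e))*b)) + (d*(((a*e)*b)*c)) + ((a*e)*((b*c)*d))) = 0 := sub_eq_zero_of_eq (c1 b d (a*e) c)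
  have z18 : (((b*c)*a)*(d*e)) - (((b*c)*((e*a)*d)) + (e*((a*d)*(b*c))) + (a*((d*(b*c))*e)) + (d*(((b*c)*e)*a))) = 0 := sub_eq_zero_of_eq (c1 (b*c) a d e)
  have z19 : (((a*e)*d)*(b*c)) - ((((a*e)*(b*c))*d) + (((a*(b*c))*e)*d) - (((a*(b*c))*d)*e)) = 0 := sub_eq_zero_of_eq (c2 a (b*c) d e)
  have z20 : ((a*d)*((b*c)*e)) - ((a*((e*d)*(b*c))) + (e*((d*(b*c))*a)) + (d*(((b*c)*a)*e)) + ((b*c)*((a*e)*d))) = 0 := sub_eq_zero_of_eq (c1 a d (b*c) e)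
  have z21 : ((a*d)*(e*(b*c))) - ((a*(((b*c)*d)*e)) + ((b*c)*((d*e)*a)) + (d*((e*a)*(b*c))) + (e*((a*(b*c))*d))) = 0 := sub_eq_zero_of_eq (c1 a d e (b*c))
  have z22 : ((a*e)*((b*c)*d)) - ((a*((d*e)*(b*c))) + (d*((e*(b*c))*a)) + (e*(((b*c)*a)*d)) + ((b*c)*((a*d)*e))) = 0 := sub_eq_zero_of_eq (c1 a e (b*c) d)
  have z23 : (((b*d)*a)*(c*e)) - (((b*d)*((e*a)*c)) + (e*((a*c)*(b*d))) + (a*((c*(b*d))*e)) + (c*(((b*d)*e)*a))) = 0 := sub_eq_zero_of_eq (c1 (b*d) a c e)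
  have z24 : (((a*e)*c)*(b*d)) - ((((a*e)*(b*d))*c) + (((a*(b*d))*e)*c) - (((a*(b*d))*c)*e)) = 0 := sub_eq_zero_of_eq (c2 a (b*d) c e)
  have z25 : ((a*c)*((b*d)*e)) - ((a*((e*c)*(b*d))) + (e*((c*(b*d))*a)) + (c*(((b*d)*a)*e)) + ((b*d)*((a*e)*c))) = 0 := sub_eq_zero_of_eq (c1 a c (b*d) e)
  have z26 : ((a*c)*(e*(b*d))) - ((a*(((b*d)*c)*e)) + ((b*d)*((c*e)*a)) + (c*((e*a)*(b*d))) + (e*((a*(b*d))*c))) = 0 := sub_eq_zero_of_eq (c1 a c e (b*d))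
  have z27 : ((a*e)*((b*d)*c)) - ((a*((c*e)*(b*d))) + (c*((e*(b*d))*a)) + (e*(((b*d)*a)*c)) + ((b*d)*((a*c)*e))) = 0 := sub_eq_zero_of_eq (c1 a e (b*d) c)
  have z28 : (((b*e)*a)*(c*d)) - (((b*e)*((d*a)*c)) + (d*((a*c)*(b*e))) + (a*((c*(b*e))*d)) + (c*(((b*e)*d)*a))) = 0 := sub_eq_zero_of_eq (c1 (b*e) a c d)
  have z29 : ((a*c)*(d*(b*e))) - ((a*(((b*e)*c)*d)) + ((b*e)*((c*d)*a)) + (c*((d*a)*(b*e))) + (d*((a*(b*e))*c))) = 0 := sub_eq_zero_of_eq (c1 a c d (b*e))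
  have z30 : ((a*d)*((b*e)*c)) - ((a*((c*d)*(b*e))) + (c*((d*(b*e))*a)) + (d*(((b*e)*a)*c)) + ((b*e)*((a*c)*d))) = 0 := sub_eq_zero_of_eq (c1 a d (b*e) c)
  have z31 : (((c*d)*a)*(b*e)) - (((c*d)*((e*a)*b)) + (e*((a*b)*(c*d))) + (a*((b*(c*d))*e)) + (b*(((c*d)*e)*a))) = 0 := sub_eq_zero_of_eq (c1 (c*d) a b e)
  have z32 : (((a*e)*b)*(c*d)) - ((((a*e)*(c*d))*b) + (((a*(c*d))*e)*b) - (((a*(c*d))*b)*e)) = 0 := sub_eq_zero_of_eq (c2 a (c*d) b e)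
  have z33 : ((a*b)*((c*d)*e)) - ((a*((e*b)*(c*d))) + (e*((b*(c*d))*a)) + (b*(((c*d)*a)*e)) + ((c*d)*((a*e)*b))) = 0 := sub_eq_zero_of_eq (c1 a b (c*d) e)
  have z34 : ((a*b)*(e*(c*d))) - ((a*(((c*d)*b)*e)) + ((c*d)*((b*e)*a)) + (b*((e*a)*(c*d))) + (e*((a*(c*d))*b))) = 0 := sub_eq_zero_of_eq (c1 a b e (c*d))
  have z35 : ((a*e)*((c*d)*b)) - ((a*((b*e)*(c*d))) + (b*((e*(c*d))*a)) + (e*(((c*d)*a)*b)) + ((c*d)*((a*b)*e))) = 0 := sub_eq_zero_of_eq (c1 a e (c*d) b)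
  have z36 : (((c*e)*a)*(b*d)) - (((c*e)*((d*a)*b)) + (d*((a*b)*(c*e))) + (a*((b*(c*e))*d)) + (b*(((c*e)*d)*a))) = 0 := sub_eq_zero_of_eq (c1 (c*e) a b d)
  have z37 : ((a*b)*(d*(c*e))) - ((a*(((c*e)*b)*d)) + ((c*e)*((b*d)*a)) + (b*((d*a)*(c*e))) + (d*((a*(c*e))*b))) = 0 := sub_eq_zero_of_eq (c1 a b d (c*e))
  have z38 : ((a*d)*((c*e)*b)) - ((a*((b*d)*(c*e))) + (b*((d*(c*e))*a)) + (d*(((c*e)*a)*b)) + ((c*e)*((a*b)*d))) = 0 := sub_eq_zero_of_eq (c1 a d (c*e) b)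
  have z39 : (((d*e)*a)*(b*c)) - (((d*e)*((c*a)*b)) + (c*((a*b)*(d*e))) + (a*((b*(d*e))*c)) + (b*(((d*e)*c)*a))) = 0 := sub_eq_zero_of_eq (c1 (d*e) a b c)
  have z40 : ((a*b)*(c*(d*e))) - ((a*(((d*e)*b)*c)) + ((d*e)*((b*c)*a)) + (b*((c*a)*(d*e))) + (c*((a*(d*e))*b))) = 0 := sub_eq_zero_of_eq (c1 a b c (d*e))
  have z41 : ((a*c)*((d*e)*b)) - ((a*((b*c)*(d*e))) + (b*((c*(d*e))*a)) + (c*(((d*e)*a)*b)) + ((d*e)*((a*b)*c))) = 0 := sub_eq_zero_of_eq (c1 a c (d*e) b)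
  have z42 : (((a*b)*(c*d))*e) - (((a*((d*b)*c))*e) + ((d*((b*c)*a))*e) + ((b*((c*a)*d))*e) + ((c*((a*d)*b))*e)) = 0 := by rw [sub_eq_zero, c1 a b c d, add_mul, add_mul, add_mul]
  have z43 : ((((a*c)*d)*b)*e) - (((((a*c)*b)*d)*e) + ((((a*b)*c)*d)*e) - ((((a*b)*d)*c)*e)) = 0 := by rw [sub_eq_zero, c2 a b d c, sub_mul, add_mul]
  have z44 : (((a*b)*(d*c))*e) - (((a*((c*b)*d))*e) + ((c*((b*d)*a))*e) + ((b*((d*a)*c))*e) + ((d*((a*c)*b))*e)) = 0 := by rw [sub_eq_zero, c1 a b d c, add_mul, add_mul, add_mul]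
  have z45 : (((a*c)*(b*d))*e) - (((a*((d*c)*b))*e) + ((d*((c*b)*a))*e) + ((c*((b*a)*d))*e) + ((b*((a*d)*c))*e)) = 0 := by rw [sub_eq_zero, c1 a c b d, add_mul, add_mul, add_mul]
  have z46 : (((a*c)*(d*b))*e) - (((a*((b*c)*d))*e) + ((b*((c*d)*a))*e) + ((c*((d*a)*b))*e) + ((d*((a*b)*c))*e)) = 0 := by rw [sub_eq_zero, c1 a c d b, add_mul, add_mul, add_mul]
  have z47 : ((((b*d)*c)*a)*e) - (((((b*d)*a)*c)*e) + ((((b*a)*d)*c)*e) - ((((b*a)*c)*d)*e)) = 0 := by rw [sub_eq_zero, c2 b a c d, sub_mul, add_mul]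
  have z48 : (((c*(a*b))*d)*e) - (-(((d*(c*(a*b)))*e))) = 0 := sub_eq_zero_of_eq (by rw [hac (c*(a*b)) d]; simp only [neg_mul, mul_neg])
  have z49 : ((c*(d*(a*b)))*e) - (-((e*(c*(d*(a*b)))))) = 0 := sub_eq_zero_of_eq (hac (c*(d*(a*b))) e)
  have z50 : (((a*b)*c)*(d*e)) - (-(((c*(a*b))*(d*e)))) = 0 := sub_eq_zero_of_eq (by rw [hac (a*b) c]; simp only [neg_mul, mul_neg])
  have z51 : ((a*b)*((e*c)*d)) - (-(((a*b)*((c*e)*d)))) = 0 := sub_eq_zero_of_eq (by rw [hac e c]; simp only [neg_mul, mul_neg])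
  have z52 : ((a*b)*((c*e)*d)) - (-(((a*b)*(d*(c*e))))) = 0 := sub_eq_zero_of_eq (by rw [hac (c*e) d]; simp only [neg_mul, mul_neg])
  have z53 : (e*((c*d)*(a*b))) - (-((e*((a*b)*(c*d))))) = 0 := sub_eq_zero_of_eq (by rw [hac (c*d) (a*b)]; simp only [neg_mul, mul_neg])
  have z54 : (d*(((a*b)*e)*c)) - (-((d*((e*(a*b))*c)))) = 0 := sub_eq_zero_of_eq (by rw [hac (a*b) e]; simp only [neg_mul, mul_neg])
  have z55 : (((c*e)*d)*(a*b)) - (-(((d*(c*e))*(a*b)))) = 0 := sub_eq_zero_of_eq (by rw [hac (c*e) d]; simp only [neg_mul, mul_neg])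
  have z56 : ((d*(c*e))*(a*b)) - (-(((a*b)*(d*(c*e))))) = 0 := sub_eq_zero_of_eq (hac (d*(c*e)) (a*b))
  have z57 : (((c*e)*(a*b))*d) - (-((((a*b)*(c*e))*d))) = 0 := sub_eq_zero_of_eq (by rw [hac (c*e) (a*b)]; simp only [neg_mul, mul_neg])
  have z58 : (((a*b)*(c*e))*d) - (-((d*((a*b)*(c*e))))) = 0 := sub_eq_zero_of_eq (hac ((a*b)*(c*e)) d)
  have z59 : (((c*(a*b))*e)*d) - (-(((e*(c*(a*b)))*d))) = 0 := sub_eq_zero_of_eq (by rw [hac (c*(a*b)) e]; simp only [neg_mul, mul_neg])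
  have z60 : ((e*(c*(a*b)))*d) - (-((d*(e*(c*(a*b)))))) = 0 := sub_eq_zero_of_eq (hac (e*(c*(a*b))) d)
  have z61 : ((c*d)*((a*b)*e)) - (-(((c*d)*(e*(a*b))))) = 0 := sub_eq_zero_of_eq (by rw [hac (a*b) e]; simp only [neg_mul, mul_neg])
  have z62 : (c*((e*d)*(a*b))) - (-((c*((d*e)*(a*b))))) = 0 := sub_eq_zero_of_eq (by rw [hac e d]; simp only [neg_mul, mul_neg])
  have z63 : (c*((d*e)*(a*b))) - (-((c*((a*b)*(d*e))))) = 0 := sub_eq_zero_of_eq (by rw [hac (d*e) (a*b)]; simp only [neg_mul, mul_neg])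
  have z64 : (e*((d*(a*b))*c)) - (-((e*(c*(d*(a*b)))))) = 0 := sub_eq_zero_of_eq (by rw [hac (d*(a*b)) c]; simp only [neg_mul, mul_neg])
  have z65 : (d*(((a*b)*c)*e)) - (-((d*((c*(a*b))*e)))) = 0 := sub_eq_zero_of_eq (by rw [hac (a*b) c]; simp only [neg_mul, mul_neg])
  have z66 : (d*((c*(a*b))*e)) - (-((d*(e*(c*(a*b)))))) = 0 := sub_eq_zero_of_eq (by rw [hac (c*(a*b)) e]; simp only [neg_mul, mul_neg])
  have z67 : (c*(((a*b)*d)*e)) - (-((c*((d*(a*b))*e)))) = 0 := sub_eq_zero_of_eq (by rw [hac (a*b) d]; simp only [neg_mul, mul_neg])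
  have z68 : ((a*b)*((d*e)*c)) - (-(((a*b)*(c*(d*e))))) = 0 := sub_eq_zero_of_eq (by rw [hac (d*e) c]; simp only [neg_mul, mul_neg])
  have z69 : (d*((e*c)*(a*b))) - (-((d*((c*e)*(a*b))))) = 0 := sub_eq_zero_of_eq (by rw [hac e c]; simp only [neg_mul, mul_neg])
  have z70 : (d*((c*e)*(a*b))) - (-((d*((a*b)*(c*e))))) = 0 := sub_eq_zero_of_eq (by rw [hac (c*e) (a*b)]; simp only [neg_mul, mul_neg])
  have z71 : (e*(((a*b)*c)*d)) - (-((e*((c*(a*b))*d)))) = 0 := sub_eq_zero_of_eq (by rw [hac (a*b) c]; simp only [neg_mul, mul_neg])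
  have z72 : ((a*b)*((c*d)*e)) - (-(((a*b)*(e*(c*d))))) = 0 := sub_eq_zero_of_eq (by rw [hac (c*d) e]; simp only [neg_mul, mul_neg])
  have z73 : (((a*c)*b)*(d*e)) - (-(((b*(a*c))*(d*e)))) = 0 := sub_eq_zero_of_eq (by rw [hac (a*c) b]; simp only [neg_mul, mul_neg])
  have z74 : ((a*c)*((e*b)*d)) - (-(((a*c)*((b*e)*d)))) = 0 := sub_eq_zero_of_eq (by rw [hac e b]; simp only [neg_mul, mul_neg])
  have z75 : ((a*c)*((b*e)*d)) - (-(((a*c)*(d*(b*e))))) = 0 := sub_eq_zero_of_eq (by rw [hac (b*e) d]; simp only [neg_mul, mul_neg])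
  have z76 : (e*((b*d)*(a*c))) - (-((e*((a*c)*(b*d))))) = 0 := sub_eq_zero_of_eq (by rw [hac (b*d) (a*c)]; simp only [neg_mul, mul_neg])
  have z77 : (d*(((a*c)*e)*b)) - (-((d*((e*(a*c))*b)))) = 0 := sub_eq_zero_of_eq (by rw [hac (a*c) e]; simp only [neg_mul, mul_neg])
  have z78 : (((b*e)*d)*(a*c)) - (-(((d*(b*e))*(a*c)))) = 0 := sub_eq_zero_of_eq (by rw [hac (b*e) d]; simp only [neg_mul, mul_neg])
  have z79 : ((d*(b*e))*(a*c)) - (-(((a*c)*(d*(b*e))))) = 0 := sub_eq_zero_of_eq (hac (d*(b*e)) (a*c))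
  have z80 : (((b*e)*(a*c))*d) - (-((((a*c)*(b*e))*d))) = 0 := sub_eq_zero_of_eq (by rw [hac (b*e) (a*c)]; simp only [neg_mul, mul_neg])
  have z81 : (((a*c)*(b*e))*d) - (-((d*((a*c)*(b*e))))) = 0 := sub_eq_zero_of_eq (hac ((a*c)*(b*e)) d)
  have z82 : (((b*(a*c))*e)*d) - (-(((e*(b*(a*c)))*d))) = 0 := sub_eq_zero_of_eq (by rw [hac (b*(a*c)) e]; simp only [neg_mul, mul_neg])
  have z83 : ((e*(b*(a*c)))*d) - (-((d*(e*(b*(a*c)))))) = 0 := sub_eq_zero_of_eq (hac (e*(b*(a*c))) d)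
  have z84 : (((b*(a*c))*d)*e) - (-(((d*(b*(a*c)))*e))) = 0 := sub_eq_zero_of_eq (by rw [hac (b*(a*c)) d]; simp only [neg_mul, mul_neg])
  have z85 : ((b*d)*((a*c)*e)) - (-(((b*d)*(e*(a*c))))) = 0 := sub_eq_zero_of_eq (by rw [hac (a*c) e]; simp only [neg_mul, mul_neg])
  have z86 : (b*((e*d)*(a*c))) - (-((b*((d*e)*(a*c))))) = 0 := sub_eq_zero_of_eq (by rw [hac e d]; simp only [neg_mul, mul_neg])
  have z87 : (b*((d*e)*(a*c))) - (-((b*((a*c)*(d*e))))) = 0 := sub_eq_zero_of_eq (by rw [hac (d*e) (a*c)]; simp only [neg_mul, mul_neg])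
  have z88 : (e*((d*(a*c))*b)) - (-((e*(b*(d*(a*c)))))) = 0 := sub_eq_zero_of_eq (by rw [hac (d*(a*c)) b]; simp only [neg_mul, mul_neg])
  have z89 : (d*(((a*c)*b)*e)) - (-((d*((b*(a*c))*e)))) = 0 := sub_eq_zero_of_eq (by rw [hac (a*c) b]; simp only [neg_mul, mul_neg])
  have z90 : (d*((b*(a*c))*e)) - (-((d*(e*(b*(a*c)))))) = 0 := sub_eq_zero_of_eq (by rw [hac (b*(a*c)) e]; simp only [neg_mul, mul_neg])
  have z91 : (b*(((a*c)*d)*e)) - (-((b*((d*(a*c))*e)))) = 0 := sub_eq_zero_of_eq (by rw [hac (a*c) d]; simp only [neg_mul, mul_neg])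
  have z92 : (d*((e*b)*(a*c))) - (-((d*((b*e)*(a*c))))) = 0 := sub_eq_zero_of_eq (by rw [hac e b]; simp only [neg_mul, mul_neg])
  have z93 : (d*((b*e)*(a*c))) - (-((d*((a*c)*(b*e))))) = 0 := sub_eq_zero_of_eq (by rw [hac (b*e) (a*c)]; simp only [neg_mul, mul_neg])
  have z94 : (e*(((a*c)*b)*d)) - (-((e*((b*(a*c))*d)))) = 0 := sub_eq_zero_of_eq (by rw [hac (a*c) b]; simp only [neg_mul, mul_neg])
  have z95 : ((a*c)*((b*d)*e)) - (-(((a*c)*(e*(b*d))))) = 0 := sub_eq_zero_of_eq (by rw [hac (b*d) e]; simp only [neg_mul, mul_neg])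
  have z96 : (((a*d)*b)*(c*e)) - (-(((b*(a*d))*(c*e)))) = 0 := sub_eq_zero_of_eq (by rw [hac (a*d) b]; simp only [neg_mul, mul_neg])
  have z97 : ((a*d)*((e*b)*c)) - (-(((a*d)*((b*e)*c)))) = 0 := sub_eq_zero_of_eq (by rw [hac e b]; simp only [neg_mul, mul_neg])
  have z98 : ((a*d)*((b*e)*c)) - (-(((a*d)*(c*(b*e))))) = 0 := sub_eq_zero_of_eq (by rw [hac (b*e) c]; simp only [neg_mul, mul_neg])
  have z99 : (e*((b*c)*(a*d))) - (-((e*((a*d)*(b*c))))) = 0 := sub_eq_zero_of_eq (by rw [hac (b*c) (a*d)]; simp only [neg_mul, mul_neg])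
  have z100 : (c*(((a*d)*e)*b)) - (-((c*((e*(a*d))*b)))) = 0 := sub_eq_zero_of_eq (by rw [hac (a*d) e]; simp only [neg_mul, mul_neg])
  have z101 : (((b*e)*c)*(a*d)) - (-(((c*(b*e))*(a*d)))) = 0 := sub_eq_zero_of_eq (by rw [hac (b*e) c]; simp only [neg_mul, mul_neg])
  have z102 : ((c*(b*e))*(a*d)) - (-(((a*d)*(c*(b*e))))) = 0 := sub_eq_zero_of_eq (hac (c*(b*e)) (a*d))
  have z103 : (((b*e)*(a*d))*c) - (-((((a*d)*(b*e))*c))) = 0 := sub_eq_zero_of_eq (by rw [hac (b*e) (a*d)]; simp only [neg_mul, mul_neg])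
  have z104 : (((a*d)*(b*e))*c) - (-((c*((a*d)*(b*e))))) = 0 := sub_eq_zero_of_eq (hac ((a*d)*(b*e)) c)
  have z105 : (((b*(a*d))*e)*c) - (-(((e*(b*(a*d)))*c))) = 0 := sub_eq_zero_of_eq (by rw [hac (b*(a*d)) e]; simp only [neg_mul, mul_neg])
  have z106 : ((e*(b*(a*d)))*c) - (-((c*(e*(b*(a*d)))))) = 0 := sub_eq_zero_of_eq (hac (e*(b*(a*d))) c)
  have z107 : (((b*(a*d))*c)*e) - (-(((c*(b*(a*d)))*e))) = 0 := sub_eq_zero_of_eq (by rw [hac (b*(a*d)) c]; simp only [neg_mul, mul_neg])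
  have z108 : ((b*c)*((a*d)*e)) - (-(((b*c)*(e*(a*d))))) = 0 := sub_eq_zero_of_eq (by rw [hac (a*d) e]; simp only [neg_mul, mul_neg])
  have z109 : (b*((e*c)*(a*d))) - (-((b*((c*e)*(a*d))))) = 0 := sub_eq_zero_of_eq (by rw [hac e c]; simp only [neg_mul, mul_neg])
  have z110 : (b*((c*e)*(a*d))) - (-((b*((a*d)*(c*e))))) = 0 := sub_eq_zero_of_eq (by rw [hac (c*e) (a*d)]; simp only [neg_mul, mul_neg])
  have z111 : (e*((c*(a*d))*b)) - (-((e*(b*(c*(a*d)))))) = 0 := sub_eq_zero_of_eq (by rw [hac (c*(a*d)) b]; simp only [neg_mul, mul_neg])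
  have z112 : (c*(((a*d)*b)*e)) - (-((c*((b*(a*d))*e)))) = 0 := sub_eq_zero_of_eq (by rw [hac (a*d) b]; simp only [neg_mul, mul_neg])
  have z113 : (c*((b*(a*d))*e)) - (-((c*(e*(b*(a*d)))))) = 0 := sub_eq_zero_of_eq (by rw [hac (b*(a*d)) e]; simp only [neg_mul, mul_neg])
  have z114 : (b*(((a*d)*c)*e)) - (-((b*((c*(a*d))*e)))) = 0 := sub_eq_zero_of_eq (by rw [hac (a*d) c]; simp only [neg_mul, mul_neg])
  have z115 : (c*((e*b)*(a*d))) - (-((c*((b*e)*(a*d))))) = 0 := sub_eq_zero_of_eq (by rw [hac e b]; simp only [neg_mul, mul_neg])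
  have z116 : (c*((b*e)*(a*d))) - (-((c*((a*d)*(b*e))))) = 0 := sub_eq_zero_of_eq (by rw [hac (b*e) (a*d)]; simp only [neg_mul, mul_neg])
  have z117 : (e*(((a*d)*b)*c)) - (-((e*((b*(a*d))*c)))) = 0 := sub_eq_zero_of_eq (by rw [hac (a*d) b]; simp only [neg_mul, mul_neg])
  have z118 : ((a*d)*((b*c)*e)) - (-(((a*d)*(e*(b*c))))) = 0 := sub_eq_zero_of_eq (by rw [hac (b*c) e]; simp only [neg_mul, mul_neg])
  have z119 : (((a*e)*b)*(c*d)) - (-(((b*(a*e))*(c*d)))) = 0 := sub_eq_zero_of_eq (by rw [hac (a*e) b]; simp only [neg_mul, mul_neg])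
  have z120 : ((a*e)*((d*b)*c)) - (-(((a*e)*((b*d)*c)))) = 0 := sub_eq_zero_of_eq (by rw [hac d b]; simp only [neg_mul, mul_neg])
  have z121 : (d*((b*c)*(a*e))) - (-((d*((a*e)*(b*c))))) = 0 := sub_eq_zero_of_eq (by rw [hac (b*c) (a*e)]; simp only [neg_mul, mul_neg])
  have z122 : (c*(((a*e)*d)*b)) - (-((c*((d*(a*e))*b)))) = 0 := sub_eq_zero_of_eq (by rw [hac (a*e) d]; simp only [neg_mul, mul_neg])
  have z123 : (b*(((a*e)*c)*d)) - (-((b*((c*(a*e))*d)))) = 0 := sub_eq_zero_of_eq (by rw [hac (a*e) c]; simp only [neg_mul, mul_neg])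
  have z124 : (c*((d*b)*(a*e))) - (-((c*((b*d)*(a*e))))) = 0 := sub_eq_zero_of_eq (by rw [hac d b]; simp only [neg_mul, mul_neg])
  have z125 : (c*((b*d)*(a*e))) - (-((c*((a*e)*(b*d))))) = 0 := sub_eq_zero_of_eq (by rw [hac (b*d) (a*e)]; simp only [neg_mul, mul_neg])
  have z126 : ((b*d)*((a*e)*c)) - (-(((b*d)*(c*(a*e))))) = 0 := sub_eq_zero_of_eq (by rw [hac (a*e) c]; simp only [neg_mul, mul_neg])
  have z127 : (b*((c*d)*(a*e))) - (-((b*((a*e)*(c*d))))) = 0 := sub_eq_zero_of_eq (by rw [hac (c*d) (a*e)]; simp only [neg_mul, mul_neg])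
  have z128 : (d*(((a*e)*b)*c)) - (-((d*((b*(a*e))*c)))) = 0 := sub_eq_zero_of_eq (by rw [hac (a*e) b]; simp only [neg_mul, mul_neg])
  have z129 : (((b*c)*a)*(d*e)) - (-(((a*(b*c))*(d*e)))) = 0 := sub_eq_zero_of_eq (by rw [hac (b*c) a]; simp only [neg_mul, mul_neg])
  have z130 : ((b*c)*((e*a)*d)) - (-(((b*c)*((a*e)*d)))) = 0 := sub_eq_zero_of_eq (by rw [hac e a]; simp only [neg_mul, mul_neg])
  have z131 : ((b*c)*((a*e)*d)) - (-(((b*c)*(d*(a*e))))) = 0 := sub_eq_zero_of_eq (by rw [hac (a*e) d]; simp only [neg_mul, mul_neg])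
  have z132 : (d*(((b*c)*e)*a)) - (-((d*((e*(b*c))*a)))) = 0 := sub_eq_zero_of_eq (by rw [hac (b*c) e]; simp only [neg_mul, mul_neg])
  have z133 : (((a*e)*d)*(b*c)) - (-(((d*(a*e))*(b*c)))) = 0 := sub_eq_zero_of_eq (by rw [hac (a*e) d]; simp only [neg_mul, mul_neg])
  have z134 : ((d*(a*e))*(b*c)) - (-(((b*c)*(d*(a*e))))) = 0 := sub_eq_zero_of_eq (hac (d*(a*e)) (b*c))
  have z135 : (((a*e)*(b*c))*d) - (-((d*((a*e)*(b*c))))) = 0 := sub_eq_zero_of_eq (hac ((a*e)*(b*c)) d)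
  have z136 : (((a*(b*c))*e)*d) - (-(((e*(a*(b*c)))*d))) = 0 := sub_eq_zero_of_eq (by rw [hac (a*(b*c)) e]; simp only [neg_mul, mul_neg])
  have z137 : ((e*(a*(b*c)))*d) - (-((d*(e*(a*(b*c)))))) = 0 := sub_eq_zero_of_eq (hac (e*(a*(b*c))) d)
  have z138 : (((a*(b*c))*d)*e) - (-(((d*(a*(b*c)))*e))) = 0 := sub_eq_zero_of_eq (by rw [hac (a*(b*c)) d]; simp only [neg_mul, mul_neg])
  have z139 : (a*((e*d)*(b*c))) - (-((a*((d*e)*(b*c))))) = 0 := sub_eq_zero_of_eq (by rw [hac e d]; simp only [neg_mul, mul_neg])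
  have z140 : (a*((d*e)*(b*c))) - (-((a*((b*c)*(d*e))))) = 0 := sub_eq_zero_of_eq (by rw [hac (d*e) (b*c)]; simp only [neg_mul, mul_neg])
  have z141 : (e*((d*(b*c))*a)) - (-((e*(a*(d*(b*c)))))) = 0 := sub_eq_zero_of_eq (by rw [hac (d*(b*c)) a]; simp only [neg_mul, mul_neg])
  have z142 : (d*(((b*c)*a)*e)) - (-((d*((a*(b*c))*e)))) = 0 := sub_eq_zero_of_eq (by rw [hac (b*c) a]; simp only [neg_mul, mul_neg])
  have z143 : (d*((a*(b*c))*e)) - (-((d*(e*(a*(b*c)))))) = 0 := sub_eq_zero_of_eq (by rw [hac (a*(b*c)) e]; simp only [neg_mul, mul_neg])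
  have z144 : (a*(((b*c)*d)*e)) - (-((a*((d*(b*c))*e)))) = 0 := sub_eq_zero_of_eq (by rw [hac (b*c) d]; simp only [neg_mul, mul_neg])
  have z145 : ((b*c)*((d*e)*a)) - (-(((b*c)*(a*(d*e))))) = 0 := sub_eq_zero_of_eq (by rw [hac (d*e) a]; simp only [neg_mul, mul_neg])
  have z146 : ((b*c)*(a*(d*e))) - (-(((a*(d*e))*(b*c)))) = 0 := sub_eq_zero_of_eq (hac (b*c) (a*(d*e)))
  have z147 : (d*((e*a)*(b*c))) - (-((d*((a*e)*(b*c))))) = 0 := sub_eq_zero_of_eq (by rw [hac e a]; simp only [neg_mul, mul_neg])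
  have z148 : (e*(((b*c)*a)*d)) - (-((e*((a*(b*c))*d)))) = 0 := sub_eq_zero_of_eq (by rw [hac (b*c) a]; simp only [neg_mul, mul_neg])
  have z149 : (((b*d)*a)*(c*e)) - (-(((a*(b*d))*(c*e)))) = 0 := sub_eq_zero_of_eq (by rw [hac (b*d) a]; simp only [neg_mul, mul_neg])
  have z150 : ((b*d)*((e*a)*c)) - (-(((b*d)*((a*e)*c)))) = 0 := sub_eq_zero_of_eq (by rw [hac e a]; simp only [neg_mul, mul_neg])
  have z151 : (c*(((b*d)*e)*a)) - (-((c*((e*(b*d))*a)))) = 0 := sub_eq_zero_of_eq (by rw [hac (b*d) e]; simp only [neg_mul, mul_neg])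
  have z152 : (((a*e)*c)*(b*d)) - (-(((c*(a*e))*(b*d)))) = 0 := sub_eq_zero_of_eq (by rw [hac (a*e) c]; simp only [neg_mul, mul_neg])
  have z153 : ((c*(a*e))*(b*d)) - (-(((b*d)*(c*(a*e))))) = 0 := sub_eq_zero_of_eq (hac (c*(a*e)) (b*d))
  have z154 : (((a*e)*(b*d))*c) - (-((c*((a*e)*(b*d))))) = 0 := sub_eq_zero_of_eq (hac ((a*e)*(b*d)) c)
  have z155 : (((a*(b*d))*e)*c) - (-(((e*(a*(b*d)))*c))) = 0 := sub_eq_zero_of_eq (by rw [hac (a*(b*d)) e]; simp only [neg_mul, mul_neg])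
  have z156 : ((e*(a*(b*d)))*c) - (-((c*(e*(a*(b*d)))))) = 0 := sub_eq_zero_of_eq (hac (e*(a*(b*d))) c)
  have z157 : (((a*(b*d))*c)*e) - (-(((c*(a*(b*d)))*e))) = 0 := sub_eq_zero_of_eq (by rw [hac (a*(b*d)) c]; simp only [neg_mul, mul_neg])
  have z158 : (a*((e*c)*(b*d))) - (-((a*((c*e)*(b*d))))) = 0 := sub_eq_zero_of_eq (by rw [hac e c]; simp only [neg_mul, mul_neg])
  have z159 : (a*((c*e)*(b*d))) - (-((a*((b*d)*(c*e))))) = 0 := sub_eq_zero_of_eq (by rw [hac (c*e) (b*d)]; simp only [neg_mul, mul_neg])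
  have z160 : (e*((c*(b*d))*a)) - (-((e*(a*(c*(b*d)))))) = 0 := sub_eq_zero_of_eq (by rw [hac (c*(b*d)) a]; simp only [neg_mul, mul_neg])
  have z161 : (c*(((b*d)*a)*e)) - (-((c*((a*(b*d))*e)))) = 0 := sub_eq_zero_of_eq (by rw [hac (b*d) a]; simp only [neg_mul, mul_neg])
  have z162 : (c*((a*(b*d))*e)) - (-((c*(e*(a*(b*d)))))) = 0 := sub_eq_zero_of_eq (by rw [hac (a*(b*d)) e]; simp only [neg_mul, mul_neg])
  have z163 : (a*(((b*d)*c)*e)) - (-((a*((c*(b*d))*e)))) = 0 := sub_eq_zero_of_eq (by rw [hac (b*d) c]; simp only [neg_mul, mul_neg])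
  have z164 : ((b*d)*((c*e)*a)) - (-(((b*d)*(a*(c*e))))) = 0 := sub_eq_zero_of_eq (by rw [hac (c*e) a]; simp only [neg_mul, mul_neg])
  have z165 : ((b*d)*(a*(c*e))) - (-(((a*(c*e))*(b*d)))) = 0 := sub_eq_zero_of_eq (hac (b*d) (a*(c*e)))
  have z166 : (c*((e*a)*(b*d))) - (-((c*((a*e)*(b*d))))) = 0 := sub_eq_zero_of_eq (by rw [hac e a]; simp only [neg_mul, mul_neg])
  have z167 : (e*(((b*d)*a)*c)) - (-((e*((a*(b*d))*c)))) = 0 := sub_eq_zero_of_eq (by rw [hac (b*d) a]; simp only [neg_mul, mul_neg])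
  have z168 : (((b*e)*a)*(c*d)) - (-(((a*(b*e))*(c*d)))) = 0 := sub_eq_zero_of_eq (by rw [hac (b*e) a]; simp only [neg_mul, mul_neg])
  have z169 : ((b*e)*((d*a)*c)) - (-(((b*e)*((a*d)*c)))) = 0 := sub_eq_zero_of_eq (by rw [hac d a]; simp only [neg_mul, mul_neg])
  have z170 : (c*(((b*e)*d)*a)) - (-((c*((d*(b*e))*a)))) = 0 := sub_eq_zero_of_eq (by rw [hac (b*e) d]; simp only [neg_mul, mul_neg])
  have z171 : (a*(((b*e)*c)*d)) - (-((a*((c*(b*e))*d)))) = 0 := sub_eq_zero_of_eq (by rw [hac (b*e) c]; simp only [neg_mul, mul_neg])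
  have z172 : ((b*e)*((c*d)*a)) - (-(((b*e)*(a*(c*d))))) = 0 := sub_eq_zero_of_eq (by rw [hac (c*d) a]; simp only [neg_mul, mul_neg])
  have z173 : ((b*e)*(a*(c*d))) - (-(((a*(c*d))*(b*e)))) = 0 := sub_eq_zero_of_eq (hac (b*e) (a*(c*d)))
  have z174 : (c*((d*a)*(b*e))) - (-((c*((a*d)*(b*e))))) = 0 := sub_eq_zero_of_eq (by rw [hac d a]; simp only [neg_mul, mul_neg])
  have z175 : (a*((c*d)*(b*e))) - (-((a*((b*e)*(c*d))))) = 0 := sub_eq_zero_of_eq (by rw [hac (c*d) (b*e)]; simp only [neg_mul, mul_neg])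
  have z176 : (d*(((b*e)*a)*c)) - (-((d*((a*(b*e))*c)))) = 0 := sub_eq_zero_of_eq (by rw [hac (b*e) a]; simp only [neg_mul, mul_neg])
  have z177 : (((c*d)*a)*(b*e)) - (-(((a*(c*d))*(b*e)))) = 0 := sub_eq_zero_of_eq (by rw [hac (c*d) a]; simp only [neg_mul, mul_neg])
  have z178 : ((c*d)*((e*a)*b)) - (-(((c*d)*((a*e)*b)))) = 0 := sub_eq_zero_of_eq (by rw [hac e a]; simp only [neg_mul, mul_neg])
  have z179 : ((c*d)*((a*e)*b)) - (-(((c*d)*(b*(a*e))))) = 0 := sub_eq_zero_of_eq (by rw [hac (a*e) b]; simp only [neg_mul, mul_neg])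
  have z180 : ((c*d)*(b*(a*e))) - (-(((b*(a*e))*(c*d)))) = 0 := sub_eq_zero_of_eq (hac (c*d) (b*(a*e)))
  have z181 : (b*(((c*d)*e)*a)) - (-((b*((e*(c*d))*a)))) = 0 := sub_eq_zero_of_eq (by rw [hac (c*d) e]; simp only [neg_mul, mul_neg])
  have z182 : (((a*e)*(c*d))*b) - (-((b*((a*e)*(c*d))))) = 0 := sub_eq_zero_of_eq (hac ((a*e)*(c*d)) b)
  have z183 : (((a*(c*d))*e)*b) - (-(((e*(a*(c*d)))*b))) = 0 := sub_eq_zero_of_eq (by rw [hac (a*(c*d)) e]; simp only [neg_mul, mul_neg])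
  have z184 : ((e*(a*(c*d)))*b) - (-((b*(e*(a*(c*d)))))) = 0 := sub_eq_zero_of_eq (hac (e*(a*(c*d))) b)
  have z185 : (((a*(c*d))*b)*e) - (-(((b*(a*(c*d)))*e))) = 0 := sub_eq_zero_of_eq (by rw [hac (a*(c*d)) b]; simp only [neg_mul, mul_neg])
  have z186 : (a*((e*b)*(c*d))) - (-((a*((b*e)*(c*d))))) = 0 := sub_eq_zero_of_eq (by rw [hac e b]; simp only [neg_mul, mul_neg])
  have z187 : (e*((b*(c*d))*a)) - (-((e*(a*(b*(c*d)))))) = 0 := sub_eq_zero_of_eq (by rw [hac (b*(c*d)) a]; simp only [neg_mul, mul_neg])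
  have z188 : (b*(((c*d)*a)*e)) - (-((b*((a*(c*d))*e)))) = 0 := sub_eq_zero_of_eq (by rw [hac (c*d) a]; simp only [neg_mul, mul_neg])
  have z189 : (b*((a*(c*d))*e)) - (-((b*(e*(a*(c*d)))))) = 0 := sub_eq_zero_of_eq (by rw [hac (a*(c*d)) e]; simp only [neg_mul, mul_neg])
  have z190 : (a*(((c*d)*b)*e)) - (-((a*((b*(c*d))*e)))) = 0 := sub_eq_zero_of_eq (by rw [hac (c*d) b]; simp only [neg_mul, mul_neg])
  have z191 : ((c*d)*((b*e)*a)) - (-(((c*d)*(a*(b*e))))) = 0 := sub_eq_zero_of_eq (by rw [hac (b*e) a]; simp only [neg_mul, mul_neg])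
  have z192 : ((c*d)*(a*(b*e))) - (-(((a*(b*e))*(c*d)))) = 0 := sub_eq_zero_of_eq (hac (c*d) (a*(b*e)))
  have z193 : (b*((e*a)*(c*d))) - (-((b*((a*e)*(c*d))))) = 0 := sub_eq_zero_of_eq (by rw [hac e a]; simp only [neg_mul, mul_neg])
  have z194 : (e*(((c*d)*a)*b)) - (-((e*((a*(c*d))*b)))) = 0 := sub_eq_zero_of_eq (by rw [hac (c*d) a]; simp only [neg_mul, mul_neg])
  have z195 : (((c*e)*a)*(b*d)) - (-(((a*(c*e))*(b*d)))) = 0 := sub_eq_zero_of_eq (by rw [hac (c*e) a]; simp only [neg_mul, mul_neg])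
  have z196 : ((c*e)*((d*a)*b)) - (-(((c*e)*((a*d)*b)))) = 0 := sub_eq_zero_of_eq (by rw [hac d a]; simp only [neg_mul, mul_neg])
  have z197 : ((c*e)*((a*d)*b)) - (-(((c*e)*(b*(a*d))))) = 0 := sub_eq_zero_of_eq (by rw [hac (a*d) b]; simp only [neg_mul, mul_neg])
  have z198 : ((c*e)*(b*(a*d))) - (-(((b*(a*d))*(c*e)))) = 0 := sub_eq_zero_of_eq (hac (c*e) (b*(a*d)))
  have z199 : (b*(((c*e)*d)*a)) - (-((b*((d*(c*e))*a)))) = 0 := sub_eq_zero_of_eq (by rw [hac (c*e) d]; simp only [neg_mul, mul_neg])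
  have z200 : (a*(((c*e)*b)*d)) - (-((a*((b*(c*e))*d)))) = 0 := sub_eq_zero_of_eq (by rw [hac (c*e) b]; simp only [neg_mul, mul_neg])
  have z201 : ((c*e)*((b*d)*a)) - (-(((c*e)*(a*(b*d))))) = 0 := sub_eq_zero_of_eq (by rw [hac (b*d) a]; simp only [neg_mul, mul_neg])
  have z202 : ((c*e)*(a*(b*d))) - (-(((a*(b*d))*(c*e)))) = 0 := sub_eq_zero_of_eq (hac (c*e) (a*(b*d)))
  have z203 : (b*((d*a)*(c*e))) - (-((b*((a*d)*(c*e))))) = 0 := sub_eq_zero_of_eq (by rw [hac d a]; simp only [neg_mul, mul_neg])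
  have z204 : (d*(((c*e)*a)*b)) - (-((d*((a*(c*e))*b)))) = 0 := sub_eq_zero_of_eq (by rw [hac (c*e) a]; simp only [neg_mul, mul_neg])
  have z205 : (((d*e)*a)*(b*c)) - (-(((a*(d*e))*(b*c)))) = 0 := sub_eq_zero_of_eq (by rw [hac (d*e) a]; simp only [neg_mul, mul_neg])
  have z206 : ((d*e)*((c*a)*b)) - (-(((d*e)*((a*c)*b)))) = 0 := sub_eq_zero_of_eq (by rw [hac c a]; simp only [neg_mul, mul_neg])
  have z207 : ((d*e)*((a*c)*b)) - (-(((d*e)*(b*(a*c))))) = 0 := sub_eq_zero_of_eq (by rw [hac (a*c) b]; simp only [neg_mul, mul_neg])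
  have z208 : ((d*e)*(b*(a*c))) - (-(((b*(a*c))*(d*e)))) = 0 := sub_eq_zero_of_eq (hac (d*e) (b*(a*c)))
  have z209 : (b*(((d*e)*c)*a)) - (-((b*((c*(d*e))*a)))) = 0 := sub_eq_zero_of_eq (by rw [hac (d*e) c]; simp only [neg_mul, mul_neg])
  have z210 : (a*(((d*e)*b)*c)) - (-((a*((b*(d*e))*c)))) = 0 := sub_eq_zero_of_eq (by rw [hac (d*e) b]; simp only [neg_mul, mul_neg])
  have z211 : ((d*e)*((b*c)*a)) - (-(((d*e)*(a*(b*c))))) = 0 := sub_eq_zero_of_eq (by rw [hac (b*c) a]; simp only [neg_mul, mul_neg])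
  have z212 : ((d*e)*(a*(b*c))) - (-(((a*(b*c))*(d*e)))) = 0 := sub_eq_zero_of_eq (hac (d*e) (a*(b*c)))
  have z213 : (b*((c*a)*(d*e))) - (-((b*((a*c)*(d*e))))) = 0 := sub_eq_zero_of_eq (by rw [hac c a]; simp only [neg_mul, mul_neg])
  have z214 : (c*(((d*e)*a)*b)) - (-((c*((a*(d*e))*b)))) = 0 := sub_eq_zero_of_eq (by rw [hac (d*e) a]; simp only [neg_mul, mul_neg])
  have z215 : ((d*e)*((a*b)*c)) - (-(((d*e)*(c*(a*b))))) = 0 := sub_eq_zero_of_eq (by rw [hac (a*b) c]; simp only [neg_mul, mul_neg])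
  have z216 : ((d*e)*(c*(a*b))) - (-(((c*(a*b))*(d*e)))) = 0 := sub_eq_zero_of_eq (hac (d*e) (c*(a*b)))
  have z217 : ((a*((d*b)*c))*e) - (-(((a*((b*d)*c))*e))) = 0 := sub_eq_zero_of_eq (by rw [hac d b]; simp only [neg_mul, mul_neg])
  have z218 : ((a*((b*d)*c))*e) - (-(((a*(c*(b*d)))*e))) = 0 := sub_eq_zero_of_eq (by rw [hac (b*d) c]; simp only [neg_mul, mul_neg])
  have z219 : ((a*(c*(b*d)))*e) - (-((e*(a*(c*(b*d)))))) = 0 := sub_eq_zero_of_eq (hac (a*(c*(b*d))) e)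
  have z220 : ((d*((b*c)*a))*e) - (-(((d*(a*(b*c)))*e))) = 0 := sub_eq_zero_of_eq (by rw [hac (b*c) a]; simp only [neg_mul, mul_neg])
  have z221 : ((b*((c*a)*d))*e) - (-(((b*((a*c)*d))*e))) = 0 := sub_eq_zero_of_eq (by rw [hac c a]; simp only [neg_mul, mul_neg])
  have z222 : ((b*((a*c)*d))*e) - (-(((b*(d*(a*c)))*e))) = 0 := sub_eq_zero_of_eq (by rw [hac (a*c) d]; simp only [neg_mul, mul_neg])
  have z223 : ((b*(d*(a*c)))*e) - (-((e*(b*(d*(a*c)))))) = 0 := sub_eq_zero_of_eq (hac (b*(d*(a*c))) e)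
  have z224 : ((c*((a*d)*b))*e) - (-(((c*(b*(a*d)))*e))) = 0 := sub_eq_zero_of_eq (by rw [hac (a*d) b]; simp only [neg_mul, mul_neg])
  have z225 : ((((a*c)*d)*b)*e) - (-((((d*(a*c))*b)*e))) = 0 := sub_eq_zero_of_eq (by rw [hac (a*c) d]; simp only [neg_mul, mul_neg])
  have z226 : (((d*(a*c))*b)*e) - (-(((b*(d*(a*c)))*e))) = 0 := sub_eq_zero_of_eq (by rw [hac (d*(a*c)) b]; simp only [neg_mul, mul_neg])
  have z227 : ((((a*c)*b)*d)*e) - (-((((b*(a*c))*d)*e))) = 0 := sub_eq_zero_of_eq (by rw [hac (a*c) b]; simp only [neg_mul, mul_neg])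
  have z228 : (((a*b)*(d*c))*e) - (-((((a*b)*(c*d))*e))) = 0 := sub_eq_zero_of_eq (by rw [hac d c]; simp only [neg_mul, mul_neg])
  have z229 : ((a*((c*b)*d))*e) - (-(((a*((b*c)*d))*e))) = 0 := sub_eq_zero_of_eq (by rw [hac c b]; simp only [neg_mul, mul_neg])
  have z230 : ((a*((b*c)*d))*e) - (-(((a*(d*(b*c)))*e))) = 0 := sub_eq_zero_of_eq (by rw [hac (b*c) d]; simp only [neg_mul, mul_neg])
  have z231 : ((a*(d*(b*c)))*e) - (-((e*(a*(d*(b*c)))))) = 0 := sub_eq_zero_of_eq (hac (a*(d*(b*c))) e)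
  have z232 : ((c*((b*d)*a))*e) - (-(((c*(a*(b*d)))*e))) = 0 := sub_eq_zero_of_eq (by rw [hac (b*d) a]; simp only [neg_mul, mul_neg])
  have z233 : ((b*((d*a)*c))*e) - (-(((b*((a*d)*c))*e))) = 0 := sub_eq_zero_of_eq (by rw [hac d a]; simp only [neg_mul, mul_neg])
  have z234 : ((b*((a*d)*c))*e) - (-(((b*(c*(a*d)))*e))) = 0 := sub_eq_zero_of_eq (by rw [hac (a*d) c]; simp only [neg_mul, mul_neg])
  have z235 : ((b*(c*(a*d)))*e) - (-((e*(b*(c*(a*d)))))) = 0 := sub_eq_zero_of_eq (hac (b*(c*(a*d))) e)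
  have z236 : ((d*((a*c)*b))*e) - (-(((d*(b*(a*c)))*e))) = 0 := sub_eq_zero_of_eq (by rw [hac (a*c) b]; simp only [neg_mul, mul_neg])
  have z237 : ((a*((d*c)*b))*e) - (-(((a*((c*d)*b))*e))) = 0 := sub_eq_zero_of_eq (by rw [hac d c]; simp only [neg_mul, mul_neg])
  have z238 : ((a*((c*d)*b))*e) - (-(((a*(b*(c*d)))*e))) = 0 := sub_eq_zero_of_eq (by rw [hac (c*d) b]; simp only [neg_mul, mul_neg])
  have z239 : ((a*(b*(c*d)))*e) - (-((e*(a*(b*(c*d)))))) = 0 := sub_eq_zero_of_eq (hac (a*(b*(c*d))) e)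
  have z240 : ((d*((c*b)*a))*e) - (-(((d*((b*c)*a))*e))) = 0 := sub_eq_zero_of_eq (by rw [hac c b]; simp only [neg_mul, mul_neg])
  have z241 : ((c*((b*a)*d))*e) - (-(((c*((a*b)*d))*e))) = 0 := sub_eq_zero_of_eq (by rw [hac b a]; simp only [neg_mul, mul_neg])
  have z242 : ((c*((a*b)*d))*e) - (-(((c*(d*(a*b)))*e))) = 0 := sub_eq_zero_of_eq (by rw [hac (a*b) d]; simp only [neg_mul, mul_neg])
  have z243 : (((a*c)*(d*b))*e) - (-((((a*c)*(b*d))*e))) = 0 := sub_eq_zero_of_eq (by rw [hac d b]; simp only [neg_mul, mul_neg])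
  have z244 : ((b*((c*d)*a))*e) - (-(((b*(a*(c*d)))*e))) = 0 := sub_eq_zero_of_eq (by rw [hac (c*d) a]; simp only [neg_mul, mul_neg])
  have z245 : ((c*((d*a)*b))*e) - (-(((c*((a*d)*b))*e))) = 0 := sub_eq_zero_of_eq (by rw [hac d a]; simp only [neg_mul, mul_neg])
  have z246 : ((d*((a*b)*c))*e) - (-(((d*(c*(a*b)))*e))) = 0 := sub_eq_zero_of_eq (by rw [hac (a*b) c]; simp only [neg_mul, mul_neg])
  have z247 : ((((b*d)*c)*a)*e) - (-((((c*(b*d))*a)*e))) = 0 := sub_eq_zero_of_eq (by rw [hac (b*d) c]; simp only [neg_mul, mul_neg])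
  have z248 : (((c*(b*d))*a)*e) - (-(((a*(c*(b*d)))*e))) = 0 := sub_eq_zero_of_eq (by rw [hac (c*(b*d)) a]; simp only [neg_mul, mul_neg])
  have z249 : ((((b*d)*a)*c)*e) - (-((((a*(b*d))*c)*e))) = 0 := sub_eq_zero_of_eq (by rw [hac (b*d) a]; simp only [neg_mul, mul_neg])
  have z250 : ((((b*a)*d)*c)*e) - (-(((((a*b)*d)*c)*e))) = 0 := sub_eq_zero_of_eq (by rw [hac b a]; simp only [neg_mul, mul_neg])
  have z251 : ((((b*a)*c)*d)*e) - (-(((((a*b)*c)*d)*e))) = 0 := sub_eq_zero_of_eq (by rw [hac b a]; simp only [neg_mul, mul_neg])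
  have key : (12:ℤ) • (((((a*b)*c)*d)*e) - ((((a*b)*d)*c)*e)) =
      (1:ℤ) • ((((a*b)*c)*(d*e)) - (((a*b)*((e*c)*d)) + (e*((c*d)*(a*b))) + (c*((d*(a*b))*e)) + (d*(((a*b)*e)*c)))) +
      (-2:ℤ) • ((((c*e)*d)*(a*b)) - ((((c*e)*(a*b))*d) + (((c*(a*b))*e)*d) - (((c*(a*b))*d)*e))) +
      (2:ℤ) • (((c*d)*((a*b)*e)) - ((c*((e*d)*(a*b))) + (e*((d*(a*b))*c)) + (d*(((a*b)*c)*e)) + ((a*b)*((c*e)*d)))) +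
      (1:ℤ) • (((c*d)*(e*(a*b))) - ((c*(((a*b)*d)*e)) + ((a*b)*((d*e)*c)) + (d*((e*c)*(a*b))) + (e*((c*(a*b))*d)))) +
      (1:ℤ) • (((c*e)*((a*b)*d)) - ((c*((d*e)*(a*b))) + (d*((e*(a*b))*c)) + (e*(((a*b)*c)*d)) + ((a*b)*((c*d)*e)))) +
      (-1:ℤ) • ((((a*c)*b)*(d*e)) - (((a*c)*((e*b)*d)) + (e*((b*d)*(a*c))) + (b*((d*(a*c))*e)) + (d*(((a*c)*e)*b)))) +
      (2:ℤ) • ((((b*e)*d)*(a*c)) - ((((b*e)*(a*c))*d) + (((b*(a*c))*e)*d) - (((b*(a*c))*d)*e))) +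
      (-2:ℤ) • (((b*d)*((a*c)*e)) - ((b*((e*d)*(a*c))) + (e*((d*(a*c))*b)) + (d*(((a*c)*b)*e)) + ((a*c)*((b*e)*d)))) +
      (-1:ℤ) • (((b*d)*(e*(a*c))) - ((b*(((a*c)*d)*e)) + ((a*c)*((d*e)*b)) + (d*((e*b)*(a*c))) + (e*((b*(a*c))*d)))) +
      (-1:ℤ) • (((b*e)*((a*c)*d)) - ((b*((d*e)*(a*c))) + (d*((e*(a*c))*b)) + (e*(((a*c)*b)*d)) + ((a*c)*((b*d)*e)))) +
      (1:ℤ) • ((((a*d)*b)*(c*e)) - (((a*d)*((e*b)*c)) + (e*((b*c)*(a*d))) + (b*((c*(a*d))*e)) + (c*(((a*d)*e)*b)))) +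
      (-2:ℤ) • ((((b*e)*c)*(a*d)) - ((((b*e)*(a*d))*c) + (((b*(a*d))*e)*c) - (((b*(a*d))*c)*e))) +
      (2:ℤ) • (((b*c)*((a*d)*e)) - ((b*((e*c)*(a*d))) + (e*((c*(a*d))*b)) + (c*(((a*d)*b)*e)) + ((a*d)*((b*e)*c)))) +
      (1:ℤ) • (((b*c)*(e*(a*d))) - ((b*(((a*d)*c)*e)) + ((a*d)*((c*e)*b)) + (c*((e*b)*(a*d))) + (e*((b*(a*d))*c)))) +
      (1:ℤ) • (((b*e)*((a*d)*c)) - ((b*((c*e)*(a*d))) + (c*((e*(a*d))*b)) + (e*(((a*d)*b)*c)) + ((a*d)*((b*c)*e)))) +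
      (1:ℤ) • ((((a*e)*b)*(c*d)) - (((a*e)*((d*b)*c)) + (d*((b*c)*(a*e))) + (b*((c*(a*e))*d)) + (c*(((a*e)*d)*b)))) +
      (1:ℤ) • (((b*c)*(d*(a*e))) - ((b*(((a*e)*c)*d)) + ((a*e)*((c*d)*b)) + (c*((d*b)*(a*e))) + (d*((b*(a*e))*c)))) +
      (1:ℤ) • (((b*d)*((a*e)*c)) - ((b*((c*d)*(a*e))) + (c*((d*(a*e))*b)) + (d*(((a*e)*b)*c)) + ((a*e)*((b*c)*d)))) +
      (1:ℤ) • ((((b*c)*a)*(d*e)) - (((b*c)*((e*a)*d)) + (e*((a*d)*(b*c))) + (a*((d*(b*c))*e)) + (d*(((b*c)*e)*a)))) +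
      (-2:ℤ) • ((((a*e)*d)*(b*c)) - ((((a*e)*(b*c))*d) + (((a*(b*c))*e)*d) - (((a*(b*c))*d)*e))) +
      (2:ℤ) • (((a*d)*((b*c)*e)) - ((a*((e*d)*(b*c))) + (e*((d*(b*c))*a)) + (d*(((b*c)*a)*e)) + ((b*c)*((a*e)*d)))) +
      (1:ℤ) • (((a*d)*(e*(b*c))) - ((a*(((b*c)*d)*e)) + ((b*c)*((d*e)*a)) + (d*((e*a)*(b*c))) + (e*((a*(b*c))*d)))) +
      (1:ℤ) • (((a*e)*((b*c)*d)) - ((a*((d*e)*(b*c))) + (d*((e*(b*c))*a)) + (e*(((b*c)*a)*d)) + ((b*c)*((a*d)*e)))) +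
      (-1:ℤ) • ((((b*d)*a)*(c*e)) - (((b*d)*((e*a)*c)) + (e*((a*c)*(b*d))) + (a*((c*(b*d))*e)) + (c*(((b*d)*e)*a)))) +
      (2:ℤ) • ((((a*e)*c)*(b*d)) - ((((a*e)*(b*d))*c) + (((a*(b*d))*e)*c) - (((a*(b*d))*c)*e))) +
      (-2:ℤ) • (((a*c)*((b*d)*e)) - ((a*((e*c)*(b*d))) + (e*((c*(b*d))*a)) + (c*(((b*d)*a)*e)) + ((b*d)*((a*e)*c)))) +
      (-1:ℤ) • (((a*c)*(e*(b*d))) - ((a*(((b*d)*c)*e)) + ((b*d)*((c*e)*a)) + (c*((e*a)*(b*d))) + (e*((a*(b*d))*c)))) +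
      (-1:ℤ) • (((a*e)*((b*d)*c)) - ((a*((c*e)*(b*d))) + (c*((e*(b*d))*a)) + (e*(((b*d)*a)*c)) + ((b*d)*((a*c)*e)))) +
      (-1:ℤ) • ((((b*e)*a)*(c*d)) - (((b*e)*((d*a)*c)) + (d*((a*c)*(b*e))) + (a*((c*(b*e))*d)) + (c*(((b*e)*d)*a)))) +
      (-1:ℤ) • (((a*c)*(d*(b*e))) - ((a*(((b*e)*c)*d)) + ((b*e)*((c*d)*a)) + (c*((d*a)*(b*e))) + (d*((a*(b*e))*c)))) +
      (-1:ℤ) • (((a*d)*((b*e)*c)) - ((a*((c*d)*(b*e))) + (c*((d*(b*e))*a)) + (d*(((b*e)*a)*c)) + ((b*e)*((a*c)*d)))) +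
      (1:ℤ) • ((((c*d)*a)*(b*e)) - (((c*d)*((e*a)*b)) + (e*((a*b)*(c*d))) + (a*((b*(c*d))*e)) + (b*(((c*d)*e)*a)))) +
      (-2:ℤ) • ((((a*e)*b)*(c*d)) - ((((a*e)*(c*d))*b) + (((a*(c*d))*e)*b) - (((a*(c*d))*b)*e))) +
      (2:ℤ) • (((a*b)*((c*d)*e)) - ((a*((e*b)*(c*d))) + (e*((b*(c*d))*a)) + (b*(((c*d)*a)*e)) + ((c*d)*((a*e)*b)))) +
      (1:ℤ) • (((a*b)*(e*(c*d))) - ((a*(((c*d)*b)*e)) + ((c*d)*((b*e)*a)) + (b*((e*a)*(c*d))) + (e*((a*(c*d))*b)))) +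
      (1:ℤ) • (((a*e)*((c*d)*b)) - ((a*((b*e)*(c*d))) + (b*((e*(c*d))*a)) + (e*(((c*d)*a)*b)) + ((c*d)*((a*b)*e)))) +
      (1:ℤ) • ((((c*e)*a)*(b*d)) - (((c*e)*((d*a)*b)) + (d*((a*b)*(c*e))) + (a*((b*(c*e))*d)) + (b*(((c*e)*d)*a)))) +
      (1:ℤ) • (((a*b)*(d*(c*e))) - ((a*(((c*e)*b)*d)) + ((c*e)*((b*d)*a)) + (b*((d*a)*(c*e))) + (d*((a*(c*e))*b)))) +
      (1:ℤ) • (((a*d)*((c*e)*b)) - ((a*((b*d)*(c*e))) + (b*((d*(c*e))*a)) + (d*(((c*e)*a)*b)) + ((c*e)*((a*b)*d)))) +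
      (-1:ℤ) • ((((d*e)*a)*(b*c)) - (((d*e)*((c*a)*b)) + (c*((a*b)*(d*e))) + (a*((b*(d*e))*c)) + (b*(((d*e)*c)*a)))) +
      (-1:ℤ) • (((a*b)*(c*(d*e))) - ((a*(((d*e)*b)*c)) + ((d*e)*((b*c)*a)) + (b*((c*a)*(d*e))) + (c*((a*(d*e))*b)))) +
      (-1:ℤ) • (((a*c)*((d*e)*b)) - ((a*((b*c)*(d*e))) + (b*((c*(d*e))*a)) + (c*(((d*e)*a)*b)) + ((d*e)*((a*b)*c)))) +
      (-4:ℤ) • ((((a*b)*(c*d))*e) - (((a*((d*b)*c))*e) + ((d*((b*c)*a))*e) + ((b*((c*a)*d))*e) + ((c*((a*d)*b))*e))) +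
      (-6:ℤ) • (((((a*c)*d)*b)*e) - (((((a*c)*b)*d)*e) + ((((a*b)*c)*d)*e) - ((((a*b)*d)*c)*e))) +
      (-4:ℤ) • ((((a*b)*(d*c))*e) - (((a*((c*b)*d))*e) + ((c*((b*d)*a))*e) + ((b*((d*a)*c))*e) + ((d*((a*c)*b))*e))) +
      (-2:ℤ) • ((((a*c)*(b*d))*e) - (((a*((d*c)*b))*e) + ((d*((c*b)*a))*e) + ((c*((b*a)*d))*e) + ((b*((a*d)*c))*e))) +
      (-2:ℤ) • ((((a*c)*(d*b))*e) - (((a*((b*c)*d))*e) + ((b*((c*d)*a))*e) + ((c*((d*a)*b))*e) + ((d*((a*b)*c))*e))) +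
      (-6:ℤ) • (((((b*d)*c)*a)*e) - (((((b*d)*a)*c)*e) + ((((b*a)*d)*c)*e) - ((((b*a)*c)*d)*e))) +
      (2:ℤ) • ((((c*(a*b))*d)*e) - (-(((d*(c*(a*b)))*e)))) +
      (-2:ℤ) • (((c*(d*(a*b)))*e) - (-((e*(c*(d*(a*b))))))) +
      (-1:ℤ) • ((((a*b)*c)*(d*e)) - (-(((c*(a*b))*(d*e))))) +
      (1:ℤ) • (((a*b)*((e*c)*d)) - (-(((a*b)*((c*e)*d))))) +
      (1:ℤ) • (((a*b)*((c*e)*d)) - (-(((a*b)*(d*(c*e)))))) +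
      (1:ℤ) • ((e*((c*d)*(a*b))) - (-((e*((a*b)*(c*d)))))) +
      (1:ℤ) • ((d*(((a*b)*e)*c)) - (-((d*((e*(a*b))*c))))) +
      (2:ℤ) • ((((c*e)*d)*(a*b)) - (-(((d*(c*e))*(a*b))))) +
      (-2:ℤ) • (((d*(c*e))*(a*b)) - (-(((a*b)*(d*(c*e)))))) +
      (-2:ℤ) • ((((c*e)*(a*b))*d) - (-((((a*b)*(c*e))*d)))) +
      (2:ℤ) • ((((a*b)*(c*e))*d) - (-((d*((a*b)*(c*e)))))) +
      (-2:ℤ) • ((((c*(a*b))*e)*d) - (-(((e*(c*(a*b)))*d)))) +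
      (2:ℤ) • (((e*(c*(a*b)))*d) - (-((d*(e*(c*(a*b))))))) +
      (-1:ℤ) • (((c*d)*((a*b)*e)) - (-(((c*d)*(e*(a*b)))))) +
      (2:ℤ) • ((c*((e*d)*(a*b))) - (-((c*((d*e)*(a*b)))))) +
      (-1:ℤ) • ((c*((d*e)*(a*b))) - (-((c*((a*b)*(d*e)))))) +
      (2:ℤ) • ((e*((d*(a*b))*c)) - (-((e*(c*(d*(a*b))))))) +
      (2:ℤ) • ((d*(((a*b)*c)*e)) - (-((d*((c*(a*b))*e))))) +
      (-2:ℤ) • ((d*((c*(a*b))*e)) - (-((d*(e*(c*(a*b))))))) +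
      (1:ℤ) • ((c*(((a*b)*d)*e)) - (-((c*((d*(a*b))*e))))) +
      (1:ℤ) • (((a*b)*((d*e)*c)) - (-(((a*b)*(c*(d*e)))))) +
      (1:ℤ) • ((d*((e*c)*(a*b))) - (-((d*((c*e)*(a*b)))))) +
      (-1:ℤ) • ((d*((c*e)*(a*b))) - (-((d*((a*b)*(c*e)))))) +
      (1:ℤ) • ((e*(((a*b)*c)*d)) - (-((e*((c*(a*b))*d))))) +
      (-1:ℤ) • (((a*b)*((c*d)*e)) - (-(((a*b)*(e*(c*d)))))) +
      (1:ℤ) • ((((a*c)*b)*(d*e)) - (-(((b*(a*c))*(d*e))))) +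
      (-1:ℤ) • (((a*c)*((e*b)*d)) - (-(((a*c)*((b*e)*d))))) +
      (-1:ℤ) • (((a*c)*((b*e)*d)) - (-(((a*c)*(d*(b*e)))))) +
      (-1:ℤ) • ((e*((b*d)*(a*c))) - (-((e*((a*c)*(b*d)))))) +
      (-1:ℤ) • ((d*(((a*c)*e)*b)) - (-((d*((e*(a*c))*b))))) +
      (-2:ℤ) • ((((b*e)*d)*(a*c)) - (-(((d*(b*e))*(a*c))))) +
      (2:ℤ) • (((d*(b*e))*(a*c)) - (-(((a*c)*(d*(b*e)))))) +
      (2:ℤ) • ((((b*e)*(a*c))*d) - (-((((a*c)*(b*e))*d)))) +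
      (-2:ℤ) • ((((a*c)*(b*e))*d) - (-((d*((a*c)*(b*e)))))) +
      (2:ℤ) • ((((b*(a*c))*e)*d) - (-(((e*(b*(a*c)))*d)))) +
      (-2:ℤ) • (((e*(b*(a*c)))*d) - (-((d*(e*(b*(a*c))))))) +
      (4:ℤ) • ((((b*(a*c))*d)*e) - (-(((d*(b*(a*c)))*e)))) +
      (1:ℤ) • (((b*d)*((a*c)*e)) - (-(((b*d)*(e*(a*c)))))) +
      (-2:ℤ) • ((b*((e*d)*(a*c))) - (-((b*((d*e)*(a*c)))))) +
      (1:ℤ) • ((b*((d*e)*(a*c))) - (-((b*((a*c)*(d*e)))))) +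
      (-2:ℤ) • ((e*((d*(a*c))*b)) - (-((e*(b*(d*(a*c))))))) +
      (-2:ℤ) • ((d*(((a*c)*b)*e)) - (-((d*((b*(a*c))*e))))) +
      (2:ℤ) • ((d*((b*(a*c))*e)) - (-((d*(e*(b*(a*c))))))) +
      (-1:ℤ) • ((b*(((a*c)*d)*e)) - (-((b*((d*(a*c))*e))))) +
      (-1:ℤ) • ((d*((e*b)*(a*c))) - (-((d*((b*e)*(a*c)))))) +
      (1:ℤ) • ((d*((b*e)*(a*c))) - (-((d*((a*c)*(b*e)))))) +
      (-1:ℤ) • ((e*(((a*c)*b)*d)) - (-((e*((b*(a*c))*d))))) +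
      (1:ℤ) • (((a*c)*((b*d)*e)) - (-(((a*c)*(e*(b*d)))))) +
      (-1:ℤ) • ((((a*d)*b)*(c*e)) - (-(((b*(a*d))*(c*e))))) +
      (1:ℤ) • (((a*d)*((e*b)*c)) - (-(((a*d)*((b*e)*c))))) +
      (2:ℤ) • (((a*d)*((b*e)*c)) - (-(((a*d)*(c*(b*e)))))) +
      (1:ℤ) • ((e*((b*c)*(a*d))) - (-((e*((a*d)*(b*c)))))) +
      (1:ℤ) • ((c*(((a*d)*e)*b)) - (-((c*((e*(a*d))*b))))) +
      (2:ℤ) • ((((b*e)*c)*(a*d)) - (-(((c*(b*e))*(a*d))))) +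
      (-2:ℤ) • (((c*(b*e))*(a*d)) - (-(((a*d)*(c*(b*e)))))) +
      (-2:ℤ) • ((((b*e)*(a*d))*c) - (-((((a*d)*(b*e))*c)))) +
      (2:ℤ) • ((((a*d)*(b*e))*c) - (-((c*((a*d)*(b*e)))))) +
      (-2:ℤ) • ((((b*(a*d))*e)*c) - (-(((e*(b*(a*d)))*c)))) +
      (2:ℤ) • (((e*(b*(a*d)))*c) - (-((c*(e*(b*(a*d))))))) +
      (2:ℤ) • ((((b*(a*d))*c)*e) - (-(((c*(b*(a*d)))*e)))) +
      (-1:ℤ) • (((b*c)*((a*d)*e)) - (-(((b*c)*(e*(a*d)))))) +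
      (2:ℤ) • ((b*((e*c)*(a*d))) - (-((b*((c*e)*(a*d)))))) +
      (-1:ℤ) • ((b*((c*e)*(a*d))) - (-((b*((a*d)*(c*e)))))) +
      (2:ℤ) • ((e*((c*(a*d))*b)) - (-((e*(b*(c*(a*d))))))) +
      (2:ℤ) • ((c*(((a*d)*b)*e)) - (-((c*((b*(a*d))*e))))) +
      (-2:ℤ) • ((c*((b*(a*d))*e)) - (-((c*(e*(b*(a*d))))))) +
      (1:ℤ) • ((b*(((a*d)*c)*e)) - (-((b*((c*(a*d))*e))))) +
      (1:ℤ) • ((c*((e*b)*(a*d))) - (-((c*((b*e)*(a*d)))))) +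
      (-1:ℤ) • ((c*((b*e)*(a*d))) - (-((c*((a*d)*(b*e)))))) +
      (1:ℤ) • ((e*(((a*d)*b)*c)) - (-((e*((b*(a*d))*c))))) +
      (-1:ℤ) • (((a*d)*((b*c)*e)) - (-(((a*d)*(e*(b*c)))))) +
      (1:ℤ) • ((((a*e)*b)*(c*d)) - (-(((b*(a*e))*(c*d))))) +
      (1:ℤ) • (((a*e)*((d*b)*c)) - (-(((a*e)*((b*d)*c))))) +
      (1:ℤ) • ((d*((b*c)*(a*e))) - (-((d*((a*e)*(b*c)))))) +
      (1:ℤ) • ((c*(((a*e)*d)*b)) - (-((c*((d*(a*e))*b))))) +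
      (1:ℤ) • ((b*(((a*e)*c)*d)) - (-((b*((c*(a*e))*d))))) +
      (1:ℤ) • ((c*((d*b)*(a*e))) - (-((c*((b*d)*(a*e)))))) +
      (-1:ℤ) • ((c*((b*d)*(a*e))) - (-((c*((a*e)*(b*d)))))) +
      (-2:ℤ) • (((b*d)*((a*e)*c)) - (-(((b*d)*(c*(a*e)))))) +
      (1:ℤ) • ((b*((c*d)*(a*e))) - (-((b*((a*e)*(c*d)))))) +
      (1:ℤ) • ((d*(((a*e)*b)*c)) - (-((d*((b*(a*e))*c))))) +
      (-1:ℤ) • ((((b*c)*a)*(d*e)) - (-(((a*(b*c))*(d*e))))) +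
      (1:ℤ) • (((b*c)*((e*a)*d)) - (-(((b*c)*((a*e)*d))))) +
      (1:ℤ) • (((b*c)*((a*e)*d)) - (-(((b*c)*(d*(a*e)))))) +
      (1:ℤ) • ((d*(((b*c)*e)*a)) - (-((d*((e*(b*c))*a))))) +
      (2:ℤ) • ((((a*e)*d)*(b*c)) - (-(((d*(a*e))*(b*c))))) +
      (-2:ℤ) • (((d*(a*e))*(b*c)) - (-(((b*c)*(d*(a*e)))))) +
      (-2:ℤ) • ((((a*e)*(b*c))*d) - (-((d*((a*e)*(b*c)))))) +
      (-2:ℤ) • ((((a*(b*c))*e)*d) - (-(((e*(a*(b*c)))*d)))) +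
      (2:ℤ) • (((e*(a*(b*c)))*d) - (-((d*(e*(a*(b*c))))))) +
      (2:ℤ) • ((((a*(b*c))*d)*e) - (-(((d*(a*(b*c)))*e)))) +
      (2:ℤ) • ((a*((e*d)*(b*c))) - (-((a*((d*e)*(b*c)))))) +
      (-1:ℤ) • ((a*((d*e)*(b*c))) - (-((a*((b*c)*(d*e)))))) +
      (2:ℤ) • ((e*((d*(b*c))*a)) - (-((e*(a*(d*(b*c))))))) +
      (2:ℤ) • ((d*(((b*c)*a)*e)) - (-((d*((a*(b*c))*e))))) +
      (-2:ℤ) • ((d*((a*(b*c))*e)) - (-((d*(e*(a*(b*c))))))) +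
      (1:ℤ) • ((a*(((b*c)*d)*e)) - (-((a*((d*(b*c))*e))))) +
      (1:ℤ) • (((b*c)*((d*e)*a)) - (-(((b*c)*(a*(d*e)))))) +
      (-1:ℤ) • (((b*c)*(a*(d*e))) - (-(((a*(d*e))*(b*c))))) +
      (1:ℤ) • ((d*((e*a)*(b*c))) - (-((d*((a*e)*(b*c)))))) +
      (1:ℤ) • ((e*(((b*c)*a)*d)) - (-((e*((a*(b*c))*d))))) +
      (1:ℤ) • ((((b*d)*a)*(c*e)) - (-(((a*(b*d))*(c*e))))) +
      (-1:ℤ) • (((b*d)*((e*a)*c)) - (-(((b*d)*((a*e)*c))))) +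
      (-1:ℤ) • ((c*(((b*d)*e)*a)) - (-((c*((e*(b*d))*a))))) +
      (-2:ℤ) • ((((a*e)*c)*(b*d)) - (-(((c*(a*e))*(b*d))))) +
      (2:ℤ) • (((c*(a*e))*(b*d)) - (-(((b*d)*(c*(a*e)))))) +
      (2:ℤ) • ((((a*e)*(b*d))*c) - (-((c*((a*e)*(b*d)))))) +
      (2:ℤ) • ((((a*(b*d))*e)*c) - (-(((e*(a*(b*d)))*c)))) +
      (-2:ℤ) • (((e*(a*(b*d)))*c) - (-((c*(e*(a*(b*d))))))) +
      (4:ℤ) • ((((a*(b*d))*c)*e) - (-(((c*(a*(b*d)))*e)))) +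
      (-2:ℤ) • ((a*((e*c)*(b*d))) - (-((a*((c*e)*(b*d)))))) +
      (1:ℤ) • ((a*((c*e)*(b*d))) - (-((a*((b*d)*(c*e)))))) +
      (-2:ℤ) • ((e*((c*(b*d))*a)) - (-((e*(a*(c*(b*d))))))) +
      (-2:ℤ) • ((c*(((b*d)*a)*e)) - (-((c*((a*(b*d))*e))))) +
      (2:ℤ) • ((c*((a*(b*d))*e)) - (-((c*(e*(a*(b*d))))))) +
      (-1:ℤ) • ((a*(((b*d)*c)*e)) - (-((a*((c*(b*d))*e))))) +
      (-1:ℤ) • (((b*d)*((c*e)*a)) - (-(((b*d)*(a*(c*e)))))) +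
      (1:ℤ) • (((b*d)*(a*(c*e))) - (-(((a*(c*e))*(b*d))))) +
      (-1:ℤ) • ((c*((e*a)*(b*d))) - (-((c*((a*e)*(b*d)))))) +
      (-1:ℤ) • ((e*(((b*d)*a)*c)) - (-((e*((a*(b*d))*c))))) +
      (1:ℤ) • ((((b*e)*a)*(c*d)) - (-(((a*(b*e))*(c*d))))) +
      (-1:ℤ) • (((b*e)*((d*a)*c)) - (-(((b*e)*((a*d)*c))))) +
      (-1:ℤ) • ((c*(((b*e)*d)*a)) - (-((c*((d*(b*e))*a))))) +
      (-1:ℤ) • ((a*(((b*e)*c)*d)) - (-((a*((c*(b*e))*d))))) +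
      (-1:ℤ) • (((b*e)*((c*d)*a)) - (-(((b*e)*(a*(c*d)))))) +
      (1:ℤ) • (((b*e)*(a*(c*d))) - (-(((a*(c*d))*(b*e))))) +
      (-1:ℤ) • ((c*((d*a)*(b*e))) - (-((c*((a*d)*(b*e)))))) +
      (-1:ℤ) • ((a*((c*d)*(b*e))) - (-((a*((b*e)*(c*d)))))) +
      (-1:ℤ) • ((d*(((b*e)*a)*c)) - (-((d*((a*(b*e))*c))))) +
      (-1:ℤ) • ((((c*d)*a)*(b*e)) - (-(((a*(c*d))*(b*e))))) +
      (1:ℤ) • (((c*d)*((e*a)*b)) - (-(((c*d)*((a*e)*b))))) +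
      (1:ℤ) • (((c*d)*((a*e)*b)) - (-(((c*d)*(b*(a*e)))))) +
      (-1:ℤ) • (((c*d)*(b*(a*e))) - (-(((b*(a*e))*(c*d))))) +
      (1:ℤ) • ((b*(((c*d)*e)*a)) - (-((b*((e*(c*d))*a))))) +
      (-2:ℤ) • ((((a*e)*(c*d))*b) - (-((b*((a*e)*(c*d)))))) +
      (-2:ℤ) • ((((a*(c*d))*e)*b) - (-(((e*(a*(c*d)))*b)))) +
      (2:ℤ) • (((e*(a*(c*d)))*b) - (-((b*(e*(a*(c*d))))))) +
      (2:ℤ) • ((((a*(c*d))*b)*e) - (-(((b*(a*(c*d)))*e)))) +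
      (2:ℤ) • ((a*((e*b)*(c*d))) - (-((a*((b*e)*(c*d)))))) +
      (2:ℤ) • ((e*((b*(c*d))*a)) - (-((e*(a*(b*(c*d))))))) +
      (2:ℤ) • ((b*(((c*d)*a)*e)) - (-((b*((a*(c*d))*e))))) +
      (-2:ℤ) • ((b*((a*(c*d))*e)) - (-((b*(e*(a*(c*d))))))) +
      (1:ℤ) • ((a*(((c*d)*b)*e)) - (-((a*((b*(c*d))*e))))) +
      (1:ℤ) • (((c*d)*((b*e)*a)) - (-(((c*d)*(a*(b*e)))))) +
      (-1:ℤ) • (((c*d)*(a*(b*e))) - (-(((a*(b*e))*(c*d))))) +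
      (1:ℤ) • ((b*((e*a)*(c*d))) - (-((b*((a*e)*(c*d)))))) +
      (1:ℤ) • ((e*(((c*d)*a)*b)) - (-((e*((a*(c*d))*b))))) +
      (-1:ℤ) • ((((c*e)*a)*(b*d)) - (-(((a*(c*e))*(b*d))))) +
      (1:ℤ) • (((c*e)*((d*a)*b)) - (-(((c*e)*((a*d)*b))))) +
      (-1:ℤ) • (((c*e)*((a*d)*b)) - (-(((c*e)*(b*(a*d)))))) +
      (1:ℤ) • (((c*e)*(b*(a*d))) - (-(((b*(a*d))*(c*e))))) +
      (1:ℤ) • ((b*(((c*e)*d)*a)) - (-((b*((d*(c*e))*a))))) +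
      (1:ℤ) • ((a*(((c*e)*b)*d)) - (-((a*((b*(c*e))*d))))) +
      (1:ℤ) • (((c*e)*((b*d)*a)) - (-(((c*e)*(a*(b*d)))))) +
      (-1:ℤ) • (((c*e)*(a*(b*d))) - (-(((a*(b*d))*(c*e))))) +
      (1:ℤ) • ((b*((d*a)*(c*e))) - (-((b*((a*d)*(c*e)))))) +
      (1:ℤ) • ((d*(((c*e)*a)*b)) - (-((d*((a*(c*e))*b))))) +
      (1:ℤ) • ((((d*e)*a)*(b*c)) - (-(((a*(d*e))*(b*c))))) +
      (-1:ℤ) • (((d*e)*((c*a)*b)) - (-(((d*e)*((a*c)*b))))) +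
      (1:ℤ) • (((d*e)*((a*c)*b)) - (-(((d*e)*(b*(a*c)))))) +
      (-1:ℤ) • (((d*e)*(b*(a*c))) - (-(((b*(a*c))*(d*e))))) +
      (-1:ℤ) • ((b*(((d*e)*c)*a)) - (-((b*((c*(d*e))*a))))) +
      (-1:ℤ) • ((a*(((d*e)*b)*c)) - (-((a*((b*(d*e))*c))))) +
      (-1:ℤ) • (((d*e)*((b*c)*a)) - (-(((d*e)*(a*(b*c)))))) +
      (1:ℤ) • (((d*e)*(a*(b*c))) - (-(((a*(b*c))*(d*e))))) +
      (-1:ℤ) • ((b*((c*a)*(d*e))) - (-((b*((a*c)*(d*e)))))) +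
      (-1:ℤ) • ((c*(((d*e)*a)*b)) - (-((c*((a*(d*e))*b))))) +
      (-1:ℤ) • (((d*e)*((a*b)*c)) - (-(((d*e)*(c*(a*b)))))) +
      (1:ℤ) • (((d*e)*(c*(a*b))) - (-(((c*(a*b))*(d*e))))) +
      (-4:ℤ) • (((a*((d*b)*c))*e) - (-(((a*((b*d)*c))*e)))) +
      (4:ℤ) • (((a*((b*d)*c))*e) - (-(((a*(c*(b*d)))*e)))) +
      (2:ℤ) • (((a*(c*(b*d)))*e) - (-((e*(a*(c*(b*d))))))) +
      (-2:ℤ) • (((d*((b*c)*a))*e) - (-(((d*(a*(b*c)))*e)))) +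
      (-4:ℤ) • (((b*((c*a)*d))*e) - (-(((b*((a*c)*d))*e)))) +
      (4:ℤ) • (((b*((a*c)*d))*e) - (-(((b*(d*(a*c)))*e)))) +
      (2:ℤ) • (((b*(d*(a*c)))*e) - (-((e*(b*(d*(a*c))))))) +
      (-2:ℤ) • (((c*((a*d)*b))*e) - (-(((c*(b*(a*d)))*e)))) +
      (6:ℤ) • (((((a*c)*d)*b)*e) - (-((((d*(a*c))*b)*e)))) +
      (-6:ℤ) • ((((d*(a*c))*b)*e) - (-(((b*(d*(a*c)))*e)))) +
      (-6:ℤ) • (((((a*c)*b)*d)*e) - (-((((b*(a*c))*d)*e)))) +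
      (4:ℤ) • ((((a*b)*(d*c))*e) - (-((((a*b)*(c*d))*e)))) +
      (-4:ℤ) • (((a*((c*b)*d))*e) - (-(((a*((b*c)*d))*e)))) +
      (2:ℤ) • (((a*((b*c)*d))*e) - (-(((a*(d*(b*c)))*e)))) +
      (-2:ℤ) • (((a*(d*(b*c)))*e) - (-((e*(a*(d*(b*c))))))) +
      (-4:ℤ) • (((c*((b*d)*a))*e) - (-(((c*(a*(b*d)))*e)))) +
      (-4:ℤ) • (((b*((d*a)*c))*e) - (-(((b*((a*d)*c))*e)))) +
      (2:ℤ) • (((b*((a*d)*c))*e) - (-(((b*(c*(a*d)))*e)))) +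
      (-2:ℤ) • (((b*(c*(a*d)))*e) - (-((e*(b*(c*(a*d))))))) +
      (-4:ℤ) • (((d*((a*c)*b))*e) - (-(((d*(b*(a*c)))*e)))) +
      (-2:ℤ) • (((a*((d*c)*b))*e) - (-(((a*((c*d)*b))*e)))) +
      (2:ℤ) • (((a*((c*d)*b))*e) - (-(((a*(b*(c*d)))*e)))) +
      (-2:ℤ) • (((a*(b*(c*d)))*e) - (-((e*(a*(b*(c*d))))))) +
      (-2:ℤ) • (((d*((c*b)*a))*e) - (-(((d*((b*c)*a))*e)))) +
      (-2:ℤ) • (((c*((b*a)*d))*e) - (-(((c*((a*b)*d))*e)))) +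
      (2:ℤ) • (((c*((a*b)*d))*e) - (-(((c*(d*(a*b)))*e)))) +
      (2:ℤ) • ((((a*c)*(d*b))*e) - (-((((a*c)*(b*d))*e)))) +
      (-2:ℤ) • (((b*((c*d)*a))*e) - (-(((b*(a*(c*d)))*e)))) +
      (-2:ℤ) • (((c*((d*a)*b))*e) - (-(((c*((a*d)*b))*e)))) +
      (-2:ℤ) • (((d*((a*b)*c))*e) - (-(((d*(c*(a*b)))*e)))) +
      (6:ℤ) • (((((b*d)*c)*a)*e) - (-((((c*(b*d))*a)*e)))) +
      (-6:ℤ) • ((((c*(b*d))*a)*e) - (-(((a*(c*(b*d)))*e)))) +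
      (-6:ℤ) • (((((b*d)*a)*c)*e) - (-((((a*(b*d))*c)*e)))) +
      (-6:ℤ) • (((((b*a)*d)*c)*e) - (-(((((a*b)*d)*c)*e)))) +
      (6:ℤ) • (((((b*a)*c)*d)*e) - (-(((((a*b)*c)*d)*e)))) := by abel
  rw [z0, z1, z2, z3, z4, z5, z6, z7, z8, z9, z10, z11, z12, z13, z14, z15, z16, z17, z18, z19, z20, z21, z22, z23, z24, z25, z26, z27, z28, z29, z30, z31, z32, z33, z34, z35, z36, z37, z38, z39, z40, z41, z42, z43, z44, z45, z46, z47, z48, z49, z50, z51, z52, z53, z54, z55, z56, z57, z58, z59, z60, z61, z62, z63, z64, z65, z66, z67, z68, z69, z70, z71, z72, z73, z74, z75, z76, z77, z78, z79, z80, z81, z82, z83, z84, z85, z86, z87, z88, z89, z90, z91, z92, z93, z94, z95, z96, z97, z98, z99, z100, z101, z102, z103, z104, z105, z106, z107, z108, z109, z110, z111, z112, z113, z114, z115, z116, z117, z118, z119, z120, z121, z122, z123, z124, z125, z126, z127, z128, z129, z130, z131, z132, z133, z134, z135, z136, z137, z138, z139, z140, z141, z142, z143, z144, z145, z146, z147,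 z148, z149, z150, z151, z152, z153, z154, z155, z156, z157, z158, z159, z160, z161, z162, z163, z164, z165, z166, z167, z168, z169, z170, z171, z172, z173, z174, z175, z176, z177, z178, z179, z180, z181, z182, z183, z184, z185, z186, z187, z188, z189, z190, z191, z192, z193, z194, z195, z196, z197, z198, z199, z200, z201, z202, z203, z204, z205, z206, z207, z208, z209, z210, z211, z212, z213, z214, z215, z216, z217, z218, z219, z220, z221, z222, z223, z224, z225, z226, z227, z228, z229, z230, z231, z232, z233, z234, z235, z236, z237, z238, z239, z240, z241, z242, z243, z244, z245, z246, z247, z248, z249, z250, z251] at key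
  simp only [smul_zero, add_zero, zero_add] at key
  have keyK : ((12:ℤ):K) • (((((a*b)*c)*d)*e) - ((((a*b)*d)*c)*e)) = 0 := by rw [Int.cast_smul_eq_zsmul]; exact key
  have hne : ((12:ℤ):K) ≠ 0 := by norm_num
  have key4 : ((((a*b)*c)*d)*e) - ((((a*b)*d)*c)*e) = 0 := by rw [← inv_smul_smul₀ hne (((((a*b)*c)*d)*e) - ((((a*b)*d)*c)*e)), keyK, smul_zero]
  exact sub_eq_zero.mp key4

set_option maxHeartbeats 4000000 in
/-- An anticommutative algebra (bracket written as multiplication) over a field of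
characteristic 0 satisfying identities (c1) and (c2) also satisfies (c3). -/
theorem c3_of_c1_c2 {K L : Type*} [Field K] [CharZero K]
    [NonUnitalNonAssocRing L] [Module K L] [SMulCommClass K L L] [IsScalarTower K L L]
    (anti : ∀ a : L, a * a = 0)
    (c1 : ∀ a b c d : L, (a*b)*(c*d) = a*((d*b)*c) + d*((b*c)*a) + b*((c*a)*d) + c*((a*d)*b))
    (c2 : ∀ a b c d : L, ((a*d)*c)*b = ((a*d)*b)*c + ((a*b)*d)*c - ((a*b)*c)*d) :
    ∀ a b c d e : L, (((a*b)*c)*d)*e = (((a*b)*d)*c)*e ∧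
      (((a*b)*c)*d)*e = (((a*b)*c)*e)*d := by
  have g1h := g1_aux (K := K) anti c1 c2
  intro a b c d e
  refine ⟨g1h a b c d e, ?_⟩
  have hac : ∀ x y : L, x * y = -(y * x) := by
      intro x y
      have h := anti (x + y)
      rw [mul_add, add_mul, add_mul, anti, anti, zero_add, add_zero] at h
      exact eq_neg_of_add_eq_zero_right h
  have z0 : ((((a*b)*c)*d)*e) - (((((a*b)*d)*c)*e)) = 0 := sub_eq_zero_of_eq (g1h a b c d e)
  have z1 : ((((a*b)*c)*e)*d) - (((((a*b)*e)*c)*d)) = 0 := sub_eq_zero_of_eq (g1h a b c e d)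
  have z2 : ((((a*b)*d)*e)*c) - (((((a*b)*e)*d)*c)) = 0 := sub_eq_zero_of_eq (g1h a b d e c)
  have z3 : ((((a*b)*e)*d)*c) - (((((a*b)*e)*c)*d) + ((((a*b)*c)*e)*d) - ((((a*b)*c)*d)*e)) = 0 := sub_eq_zero_of_eq (c2 (a*b) c d e)
  have z4 : ((((a*b)*d)*e)*c) - (((((a*b)*d)*c)*e) + ((((a*b)*c)*d)*e) - ((((a*b)*c)*e)*d)) = 0 := sub_eq_zero_of_eq (c2 (a*b) c e d)
  have key : (3:ℤ) • (((((a*b)*c)*d)*e) - ((((a*b)*c)*e)*d)) =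
      (1:ℤ) • (((((a*b)*c)*d)*e) - (((((a*b)*d)*c)*e))) +
      (-1:ℤ) • (((((a*b)*c)*e)*d) - (((((a*b)*e)*c)*d))) +
      (1:ℤ) • (((((a*b)*d)*e)*c) - (((((a*b)*e)*d)*c))) +
      (1:ℤ) • (((((a*b)*e)*d)*c) - (((((a*b)*e)*c)*d) + ((((a*b)*c)*e)*d) - ((((a*b)*c)*d)*e))) +
      (-1:ℤ) • (((((a*b)*d)*e)*c) - (((((a*b)*d)*c)*e) + ((((a*b)*c)*d)*e) - ((((a*b)*c)*e)*d))) := by abel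
  rw [z0, z1, z2, z3, z4] at key
  simp only [smul_zero, add_zero, zero_add] at key
  have keyK : ((3:ℤ):K) • (((((a*b)*c)*d)*e) - ((((a*b)*c)*e)*d)) = 0 := by rw [Int.cast_smul_eq_zsmul]; exact key
  have hne : ((3:ℤ):K) ≠ 0 := by norm_num
  have key4 : ((((a*b)*c)*d)*e) - ((((a*b)*c)*e)*d) = 0 := by rw [← inv_smul_smul₀ hne (((((a*b)*c)*d)*e) - ((((a*b)*c)*e)*d)), keyK, smul_zero]
  exact sub_eq_zero.mp key4
end
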